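/- arXiv:2202.03472 — 9 statements merged into one kernel-verified Lean document; each statement's English description precedes it below -/
import Mathlib

section
/- Let m ≥ 4 be an even integer, let n = 2^m − 1, and let c be an integer with 1 ≤ c ≤ m/2 − 1. Then there exists a binary cyclic code of length n and dimension cm whose minimum distance d satisfies d ≥ 2^{m−1} − 2^{m/2+c−1}; that is, there exists an F_2-linear subspace C of F_2^n of dimension cm that is invariant under the cyclic shift of coordinates and such that every nonzero element of C has Hamming weight at least 2^{m−1} − 2^{m/2+c−1}. -/
open Finset Polynomial

abbrev KK (m : ℕ) : Type := GaloisField 2 m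

noncomputable def tr (m : ℕ) : KK m →ₗ[ZMod 2] ZMod 2 := Algebra.trace (ZMod 2) (KK m)

noncomputable def frobAlg (m : ℕ) : KK m ≃ₐ[ZMod 2] KK m :=
  AlgEquiv.ofBijective
    { toRingHom := frobenius (KK m) 2,
      commutes' := fun r => by
        show (algebraMap (ZMod 2) (KK m) r)^2 = _
        rw [← map_pow, ZMod.pow_card] }
    ((Finite.injective_iff_bijective).mp (frobenius (KK m) 2).injective)

lemma tr_sq (m : ℕ) (x : KK m) : tr m (x^2) = tr m x := by
  have := Algebra.trace_eq_of_algEquiv (frobAlg m) x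
  simpa [frobAlg, frobenius_def, tr] using this

lemma tr_pow_pow (m k : ℕ) (x : KK m) : tr m (x^(2^k)) = tr m x := by
  induction k with
  | zero => simp
  | succ k ih => rw [pow_succ, pow_mul, tr_sq, ih]

lemma KK_card (m : ℕ) [Fintype (KK m)] (hm : m ≠ 0) : Fintype.card (KK m) = 2^m := by
  rw [← Nat.card_eq_fintype_card, GaloisField.card 2 m hm]

lemma KK_pow_card (m : ℕ) [Fintype (KK m)] (hm : m ≠ 0) (x : KK m) : x^(2^m : ℕ) = x := by
  rw [← KK_card m hm]; exact FiniteField.pow_card x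

noncomputable def Qf (m c : ℕ) (a : Fin c → KK m) (x : KK m) : ZMod 2 :=
  tr m (∑ i : Fin c, a i * x ^ (2^(i.1+1)+1))

noncomputable def Mf (m c : ℕ) (a : Fin c → KK m) (z : KK m) : KK m :=
  ∑ i : Fin c, (a i * z^(2^(i.1+1)) + (a i)^(2^(m-(i.1+1))) * z^(2^(m-(i.1+1))))

lemma Qf_zero (m c : ℕ) (a : Fin c → KK m) : Qf m c a 0 = 0 := by
  simp [Qf]
lemma key1 (m c : ℕ) [Fintype (KK m)] (hcm : c + 1 ≤ m) (a : Fin c → KK m) (y z : KK m) :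
    Qf m c a (y + z) = Qf m c a y + Qf m c a z + tr m (y * Mf m c a z) := by
  have hchar : (2 : ℕ).Prime := Nat.prime_two
  have hm0 : m ≠ 0 := by omega
  have expand : ∀ i : Fin c,
      a i * (y + z) ^ (2^(i.1+1)+1)
        = a i * y ^ (2^(i.1+1)+1) + a i * z ^ (2^(i.1+1)+1)
          + (a i * y^(2^(i.1+1)) * z + a i * y * z^(2^(i.1+1))) := by
    intro i
    have h1 : (y + z) ^ (2^(i.1+1) : ℕ) = y ^ (2^(i.1+1):ℕ) + z ^ (2^(i.1+1):ℕ) :=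
      add_pow_char_pow (p := 2) (n := i.1+1) y z
    have : (y + z) ^ (2^(i.1+1)+1 : ℕ) = (y^(2^(i.1+1):ℕ) + z^(2^(i.1+1):ℕ)) * (y + z) := by
      rw [pow_succ, h1]
    rw [this]; ring
  rw [Qf, Finset.sum_congr rfl (fun i _ => expand i), Finset.sum_add_distrib,
    Finset.sum_add_distrib, map_add, map_add]
  congr 1
  have cross : ∀ i : Fin c,
      tr m (a i * y^(2^(i.1+1)) * z + a i * y * z^(2^(i.1+1)))
        = tr m (y * (a i * z^(2^(i.1+1)) + (a i)^(2^(m-(i.1+1))) * z^(2^(m-(i.1+1))))) := by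
    intro i
    set e : ℕ := i.1 + 1 with he
    have hem : e ≤ m := by omega
    have h2 : tr m (a i * y^(2^e) * z) = tr m ((a i)^(2^(m-e)) * y * z^(2^(m-e))) := by
      have h3 : (a i * y^(2^e) * z)^(2^(m-e) : ℕ)
          = (a i)^(2^(m-e):ℕ) * y^(2^m : ℕ) * z^(2^(m-e):ℕ) := by
        have hexp : (2^e : ℕ) * 2^(m-e) = 2^m := by
          rw [← pow_add]; congr 1; omega
        rw [mul_pow, mul_pow, ← pow_mul, hexp]
      have := tr_pow_pow m (m-e) (a i * y^(2^e) * z)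
      rw [h3] at this
      rw [← this, KK_pow_card m hm0]
    rw [map_add, h2]
    rw [← map_add]
    congr 1
    ring
  rw [Mf, Finset.mul_sum, map_sum, map_sum]
  exact Finset.sum_congr rfl (fun i _ => cross i)
lemma key2 (m c : ℕ) [Fintype (KK m)] [DecidableEq (KK m)] (hc1 : 1 ≤ c) (hcm : 2*c + 2 ≤ m)
    (a : Fin c → KK m) (ha : a ≠ 0) :
    #{z : KK m | Mf m c a z = 0} ≤ 2^(2*c) := by
  have hm0 : m ≠ 0 := by omega
  set P : Polynomial (KK m) :=
    ∑ i : Fin c, (C ((a i)^(2^c : ℕ)) * X^(2^(c+(i.1+1)) : ℕ)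
      + C ((a i)^(2^(c-(i.1+1)) : ℕ)) * X^(2^(c-(i.1+1)) : ℕ)) with hP
  have heval : ∀ z : KK m, P.eval z = (Mf m c a z)^(2^c : ℕ) := by
    intro z
    rw [Mf, sum_pow_char_pow (p := 2) (n := c)]
    rw [hP, eval_finset_sum]
    refine Finset.sum_congr rfl (fun i _ => ?_)
    set e : ℕ := i.1 + 1 with he
    have hec : e ≤ c := i.2
    have hem : e ≤ m := by omega
    rw [add_pow_char_pow (p := 2) (n := c)]
    simp only [eval_add, eval_mul, eval_C, eval_pow, eval_X]
    congr 1
    · have hexp1 : (2:ℕ)^e * 2^c = 2^(c+e) := by rw [← pow_add]; congr 1; omega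
      rw [mul_pow, ← pow_mul, hexp1]
    · have hexp2 : (2:ℕ)^(m-e) * 2^c = 2^(m-e+c) := by rw [← pow_add]
      have h1 : m - e + c = m + (c - e) := by omega
      have h2 : ∀ x : KK m, x ^ (2^(m + (c - e)) : ℕ) = x ^ (2^(c-e) : ℕ) := fun x => by
        rw [pow_add, pow_mul, KK_pow_card m hm0]
      rw [mul_pow, ← pow_mul, ← pow_mul, hexp2, h1, h2, h2]
  have hPne : P ≠ 0 := by
    obtain ⟨i0, hi0⟩ : ∃ i0, a i0 ≠ 0 := Function.ne_iff.mp ha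
    intro hzero
    have hcoeff : P.coeff (2^(c+(i0.1+1)) : ℕ) = (a i0)^(2^c : ℕ) := by
      rw [hP, finset_sum_coeff]
      rw [Finset.sum_eq_single i0]
      · simp only [coeff_add, coeff_C_mul, coeff_X_pow]
        have h1 : (2^(c+(i0.1+1)) : ℕ) ≠ 2^(c-(i0.1+1)) := by
          have : c - (i0.1+1) < c + (i0.1+1) := by omega
          exact fun h => absurd (Nat.pow_right_injective (le_refl 2) h) (by omega)
        simp [h1]
      · intro i _ hne
        simp only [coeff_add, coeff_C_mul, coeff_X_pow]
        have h1 : (2^(c+(i0.1+1)) : ℕ) ≠ 2^(c+(i.1+1)) := by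
          intro h
          have := Nat.pow_right_injective (le_refl 2) h.symm
          exact hne (Fin.ext (by omega))
        have h2 : (2^(c+(i0.1+1)) : ℕ) ≠ 2^(c-(i.1+1)) := by
          have hic : (i.1:ℕ)+1 ≤ c := i.2
          have : c - (i.1+1) < c + (i0.1+1) := by omega
          exact fun h => absurd (Nat.pow_right_injective (le_refl 2) h) (by omega)
        rw [if_neg h1, if_neg h2]
        ring
      · intro h; exact absurd (Finset.mem_univ i0) h
    rw [hzero, coeff_zero] at hcoeff
    exact pow_ne_zero _ hi0 hcoeff.symm
  have hdeg : P.natDegree ≤ 2^(2*c) := by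
    rw [hP]
    refine natDegree_sum_le_of_forall_le _ _ (fun i _ => ?_)
    have hec : (i.1:ℕ)+1 ≤ c := i.2
    refine (natDegree_add_le _ _).trans (max_le ?_ ?_) <;>
      refine (natDegree_C_mul_le _ _).trans ?_ <;>
      rw [natDegree_X_pow] <;>
      exact Nat.pow_le_pow_right (by norm_num) (by omega)
  have hsub : ({z : KK m | Mf m c a z = 0} : Finset (KK m)) ⊆ P.roots.toFinset := by
    intro z hz
    simp only [Finset.mem_filter] at hz
    rw [Multiset.mem_toFinset, mem_roots hPne, IsRoot, heval, hz.2]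
    simp
  calc #{z : KK m | Mf m c a z = 0} ≤ P.roots.toFinset.card := Finset.card_le_card hsub
    _ ≤ Multiset.card P.roots := Multiset.toFinset_card_le _
    _ ≤ P.natDegree := P.card_roots'
    _ ≤ 2^(2*c) := hdeg
def chi (v : ZMod 2) : ℤ := if v = 0 then 1 else -1

lemma chi_mul_self (v : ZMod 2) : chi v * chi v = 1 := by revert v; decide
lemma chi_add (u v : ZMod 2) : chi (u+v) = chi u * chi v := by revert u v; decide
lemma chi_le_one (v : ZMod 2) : chi v ≤ 1 := by revert v; decide
lemma zmod2_ne (v : ZMod 2) (h : v ≠ 0) : v = 1 := by revert v; decide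

lemma sum_chi_eq_zero {K : Type*} [AddCommGroup K] [Fintype K] (f : K →+ ZMod 2)
    (hf : f ≠ 0) : ∑ x : K, chi (f x) = 0 := by
  obtain ⟨u, hu⟩ : ∃ u, f u ≠ 0 := by
    by_contra h; push_neg at h; exact hf (AddMonoidHom.ext fun x => h x)
  have hu1 : f u = 1 := zmod2_ne _ hu
  have h2 : ∑ x : K, chi (f (x + u)) = ∑ x : K, chi (f x) :=
    Fintype.sum_equiv (Equiv.addRight u) _ _ (fun x => rfl)
  have h3 : ∀ x : K, chi (f (x + u)) = - chi (f x) := by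
    intro x; rw [map_add, hu1, chi_add]; simp [chi]
  simp only [h3, Finset.sum_neg_distrib] at h2
  linarith

lemma sum_chi_count {K : Type*} [Fintype K] [DecidableEq K] (Q : K → ZMod 2) :
    ∑ x : K, chi (Q x) = (Fintype.card K : ℤ) - 2 * #{x | Q x ≠ 0} := by
  classical
  rw [← Finset.sum_filter_add_sum_filter_not univ (fun x => Q x = 0) (fun x => chi (Q x))]
  have h0 : ∀ x ∈ ({x | Q x = 0} : Finset K), chi (Q x) = 1 := by
    intro x hx; simp only [mem_filter] at hx; simp [chi, hx.2]
  have h1 : ∀ x ∈ ({x | ¬ (Q x = 0)} : Finset K), chi (Q x) = -1 := by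
    intro x hx; simp only [mem_filter] at hx; simp [chi, hx.2]
  rw [Finset.sum_congr rfl h0, Finset.sum_congr rfl h1]
  simp only [Finset.sum_const, nsmul_eq_mul, mul_one, mul_neg_one]
  have h4 : #{x | Q x = 0} + #{x | ¬ (Q x = 0)} = Fintype.card K :=
    Finset.card_filter_add_card_filter_not (s := (univ : Finset K))
      (p := fun x => Q x = 0)
  have h5 : #({x | Q x ≠ 0} : Finset K) = #({x | ¬ (Q x = 0)} : Finset K) := rfl
  rw [h5]
  have := congrArg (fun t : ℕ => (t : ℤ)) h4
  push_cast at this ⊢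
  linarith

lemma main_count (m c : ℕ) [Fintype (KK m)] [DecidableEq (KK m)]
    (hc1 : 1 ≤ c) (hcm : 2*c + 2 ≤ m) (hme : Even m)
    (a : Fin c → KK m) (ha : a ≠ 0) :
    (2:ℤ)^m - 2^(m/2+c) ≤ 2 * #{x : KK m | Qf m c a x ≠ 0} := by
  have hm0 : m ≠ 0 := by omega
  obtain ⟨k, hk⟩ := hme
  set S : ℤ := ∑ x : KK m, chi (Qf m c a x) with hS
  have h_count : S = 2^m - 2 * #{x : KK m | Qf m c a x ≠ 0} := by
    rw [hS, sum_chi_count, KK_card m hm0]; push_cast; ring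
  -- inner character sums
  have hinner : ∀ z : KK m,
      (∑ y : KK m, chi (tr m (y * Mf m c a z))) = if Mf m c a z = 0 then (2^m : ℤ) else 0 := by
    intro z
    by_cases hz : Mf m c a z = 0
    · rw [if_pos hz]
      simp [hz, chi, KK_card m hm0]
    · rw [if_neg hz]
      set f : KK m →+ ZMod 2 :=
        { toFun := fun y => tr m (y * Mf m c a z)
          map_zero' := by simp
          map_add' := by
            intro u v
            show tr m ((u + v) * Mf m c a z) = tr m (u * Mf m c a z) + tr m (v * Mf m c a z)
            rw [add_mul, map_add] } with hf
      have hfne : f ≠ 0 := by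
        have htr : tr m ≠ 0 := Algebra.trace_ne_zero (ZMod 2) (KK m)
        obtain ⟨u, hu⟩ : ∃ u, tr m u ≠ 0 := by
          by_contra h; push_neg at h; exact htr (LinearMap.ext fun u => h u)
        intro h0
        apply hu
        have := congrArg (fun g : KK m →+ ZMod 2 => g (u * (Mf m c a z)⁻¹)) h0
        simpa [hf, mul_assoc, inv_mul_cancel₀ hz] using this
      exact sum_chi_eq_zero f hfne
  -- S² identity
  have hstep : ∀ y : KK m, (∑ x : KK m, chi (Qf m c a x) * chi (Qf m c a y))
      = ∑ z : KK m, chi (Qf m c a z) * chi (tr m (y * Mf m c a z)) := by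
    intro y
    refine (Fintype.sum_equiv (Equiv.addLeft y) _ _ (fun z => ?_)).symm
    show chi (Qf m c a z) * chi (tr m (y * Mf m c a z))
        = chi (Qf m c a (y + z)) * chi (Qf m c a y)
    rw [key1 m c (by omega) a y z, chi_add, chi_add]
    have h : chi (Qf m c a y) * chi (Qf m c a y) = 1 := chi_mul_self _
    linear_combination (- chi (Qf m c a z) * chi (tr m (y * Mf m c a z))) * h
  have hS2 : S^2 = ∑ z : KK m, chi (Qf m c a z) * (∑ y : KK m, chi (tr m (y * Mf m c a z))) := by
    rw [sq, hS, Finset.sum_mul_sum, Finset.sum_comm]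
    rw [Finset.sum_congr rfl (fun y _ => hstep y), Finset.sum_comm]
    exact Finset.sum_congr rfl (fun z _ => by rw [Finset.mul_sum])
  -- bound S²
  have hbound : S^2 ≤ 2^(2*c) * 2^m := by
    rw [hS2]
    have : ∀ z : KK m, chi (Qf m c a z) * (∑ y : KK m, chi (tr m (y * Mf m c a z)))
        = if Mf m c a z = 0 then chi (Qf m c a z) * 2^m else 0 := by
      intro z; rw [hinner z]; split <;> simp
    rw [Finset.sum_congr rfl (fun z _ => this z), ← Finset.sum_filter]
    calc (∑ z ∈ ({z : KK m | Mf m c a z = 0} : Finset (KK m)), chi (Qf m c a z) * 2^m)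
        ≤ ∑ z ∈ ({z : KK m | Mf m c a z = 0} : Finset (KK m)), 2^m := by
          refine Finset.sum_le_sum (fun z _ => ?_)
          have := chi_le_one (Qf m c a z)
          nlinarith [pow_pos (by norm_num : (0:ℤ) < 2) m]
      _ = (#{z : KK m | Mf m c a z = 0} : ℤ) * 2^m := by rw [Finset.sum_const]; ring
      _ ≤ 2^(2*c) * 2^m := by
          have := key2 m c hc1 hcm a ha
          have h2 : (0:ℤ) < 2^m := pow_pos (by norm_num) m
          have : (#{z : KK m | Mf m c a z = 0} : ℤ) ≤ 2^(2*c) := by exact_mod_cast this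
          nlinarith
  have hTsq : ((2:ℤ)^(m/2+c))^2 = 2^(2*c) * 2^m := by
    rw [← pow_mul, ← pow_add]
    congr 1
    omega
  have hT0 : (0:ℤ) ≤ 2^(m/2+c) := by positivity
  have hSle : S ≤ 2^(m/2+c) := by nlinarith [sq_nonneg (S + 2^(m/2+c))]
  linarith [h_count ▸ hSle]

noncomputable def Phi (m c n : ℕ) (g : (KK m)ˣ) : (Fin c → KK m) →ₗ[ZMod 2] (Fin n → ZMod 2) where
  toFun a := fun j => Qf m c a ((g : KK m)^(j : ℕ))
  map_add' a b := by
    funext j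
    simp only [Qf, Pi.add_apply]
    rw [← map_add]
    congr 1
    rw [← Finset.sum_add_distrib]
    exact Finset.sum_congr rfl fun i _ => by rw [add_mul]
  map_smul' r a := by
    funext j
    simp only [Qf, RingHom.id_apply, Pi.smul_apply]
    rw [← map_smul]
    congr 1
    rw [Finset.smul_sum]
    exact Finset.sum_congr rfl fun i _ => by rw [smul_mul_assoc]

lemma Phi_apply (m c n : ℕ) (g : (KK m)ˣ) (a : Fin c → KK m) (j : Fin n) :
    Phi m c n g a j = Qf m c a ((g : KK m)^(j : ℕ)) := rfl

/-- There exists a binary cyclic code of length `n = 2^m - 1` and dimension `c*m`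
whose nonzero codewords all have Hamming weight at least `2^(m-1) - 2^(m/2+c-1)`. -/
theorem cyclic_code_construction (m c n : ℕ) (hm : 4 ≤ m) (hme : Even m)
    (hc1 : 1 ≤ c) (hc2 : c ≤ m / 2 - 1) (hn : n = 2 ^ m - 1) :
    ∃ C : Submodule (ZMod 2) (Fin n → ZMod 2),
      Module.finrank (ZMod 2) C = c * m ∧
      (∀ x ∈ C, (fun i : Fin n => x ((finRotate n).symm i)) ∈ C) ∧
      (∀ x ∈ C, x ≠ 0 → 2 ^ (m - 1) - 2 ^ (m / 2 + c - 1) ≤ hammingNorm x) := by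
  classical
  letI : Fintype (KK m) := Fintype.ofFinite _
  have hm0 : m ≠ 0 := by omega
  obtain ⟨k, hk⟩ := hme
  have hme' : Even m := ⟨k, hk⟩
  have hcm : 2*c + 2 ≤ m := by omega
  have h16 : 16 ≤ 2^m := by
    calc (16:ℕ) = 2^4 := by norm_num
    _ ≤ 2^m := Nat.pow_le_pow_right (by norm_num) hm
  have hn2 : 2 ≤ n := by omega
  obtain ⟨g, hg⟩ := IsCyclic.exists_generator (α := (KK m)ˣ)
  have horder : orderOf g = n := by
    rw [orderOf_eq_card_of_forall_mem_zpowers hg, Nat.card_units, GaloisField.card 2 m hm0, hn]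
  set E : Fin n → KK m := fun j => (g : KK m)^(j : ℕ) with hE
  have hval : ∀ t : ℕ, ((g^t : (KK m)ˣ) : KK m) = (g : KK m)^t := fun t =>
    Units.val_pow_eq_pow_val g t
  have hEinj : Function.Injective E := by
    intro i j hij
    have h1 : (g^(i:ℕ) : (KK m)ˣ) = g^(j:ℕ) := Units.ext (by rw [hval, hval]; exact hij)
    have h2 : (i:ℕ) = (j:ℕ) := by
      refine pow_injOn_Iio_orderOf ?_ ?_ h1 <;> rw [horder] <;> exact Set.mem_Iio.mpr (Fin.is_lt _)
    exact Fin.ext h2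
  have hEne : ∀ j, E j ≠ 0 := fun j => pow_ne_zero _ (Units.ne_zero g)
  have himg : Finset.image E Finset.univ = ({x : KK m | x ≠ 0} : Finset (KK m)) := by
    apply Finset.eq_of_subset_of_card_le
    · intro x hx
      obtain ⟨j, _, rfl⟩ := Finset.mem_image.mp hx
      simp [hEne j]
    · rw [Finset.card_image_of_injective _ hEinj, Finset.card_univ, Fintype.card_fin]
      have : ({x : KK m | x ≠ 0} : Finset (KK m)) = Finset.univ.erase 0 := by
        rw [← Finset.filter_ne']
      rw [this, Finset.card_erase_of_mem (Finset.mem_univ 0), Finset.card_univ, KK_card m hm0, hn]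
  -- count transfer
  have hcount : ∀ a : Fin c → KK m,
      #{j : Fin n | Qf m c a (E j) ≠ 0} = #{x : KK m | Qf m c a x ≠ 0} := by
    intro a
    have e1 : Finset.image E ({j : Fin n | Qf m c a (E j) ≠ 0} : Finset (Fin n))
        = ({x : KK m | Qf m c a x ≠ 0} : Finset (KK m)) := by
      ext x
      simp only [Finset.mem_image, Finset.mem_filter, Finset.mem_univ, true_and]
      constructor
      · rintro ⟨j, hj, rfl⟩; exact hj
      · intro hx
        have hx0 : x ≠ 0 := by
          intro h0; rw [h0, Qf_zero] at hx; exact hx rfl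
        have : x ∈ Finset.image E Finset.univ := by
          rw [himg]; simp [hx0]
        obtain ⟨j, _, rfl⟩ := Finset.mem_image.mp this
        exact ⟨j, hx, rfl⟩
    rw [← e1, Finset.card_image_of_injective _ hEinj]
  -- weight bound
  have hweight : ∀ a : Fin c → KK m, a ≠ 0 →
      (2:ℤ)^m - 2^(m/2+c) ≤ 2 * #{j : Fin n | Qf m c a (E j) ≠ 0} := by
    intro a ha
    rw [hcount a]
    exact main_count m c hc1 hcm hme' a ha
  have hpos : (2:ℤ)^(m/2+c) < 2^m := by
    apply pow_lt_pow_right₀ (by norm_num) (by omega)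
  -- injectivity of Phi
  have hker : ∀ a : Fin c → KK m, Phi m c n g a = 0 → a = 0 := by
    intro a haa
    by_contra ha
    have h1 := hweight a ha
    have h2 : ({j : Fin n | Qf m c a (E j) ≠ 0} : Finset (Fin n)) = ∅ := by
      apply Finset.eq_empty_of_forall_notMem
      intro j hj
      simp only [Finset.mem_filter, Finset.mem_univ, true_and] at hj
      apply hj
      have := congrFun haa j
      rw [Phi_apply] at this
      exact this
    rw [h2] at h1
    simp at h1
    linarith
  have hinj : Function.Injective (Phi m c n g) := by
    rw [← LinearMap.ker_eq_bot, LinearMap.ker_eq_bot']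
    exact hker
  refine ⟨LinearMap.range (Phi m c n g), ?_, ?_, ?_⟩
  · rw [LinearMap.finrank_range_of_inj hinj, Module.finrank_pi_fintype,
      Finset.sum_congr rfl (fun i _ => GaloisField.finrank 2 hm0)]
    simp [mul_comm]
  · rintro x ⟨a, rfl⟩
    refine ⟨fun i => a i * ((g⁻¹ : (KK m)ˣ) : KK m)^(2^(i.1+1)+1), ?_⟩
    funext j
    rw [Phi_apply]
    show _ = Phi m c n g a ((finRotate n).symm j)
    rw [Phi_apply]
    -- rotate computation
    obtain ⟨n', rfl⟩ : ∃ n', n = n' + 1 := ⟨n - 1, by omega⟩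
    have hrot : (finRotate (n'+1)).symm j = j - 1 := by
      rw [Equiv.symm_apply_eq, finRotate_succ_apply, sub_add_cancel]
    rw [hrot]
    have hone : ((1 : Fin (n'+1)) : ℕ) = 1 := by
      rw [Fin.val_one']
      exact Nat.mod_eq_of_lt (by omega)
    have hsubval : ((j - 1 : Fin (n'+1)) : ℕ) = ((j:ℕ) + n') % (n'+1) := by
      rw [Fin.sub_def]
      show (n' + 1 - ((1 : Fin (n'+1)) : ℕ) + (j:ℕ)) % (n'+1) = ((j:ℕ) + n') % (n'+1)
      congr 1
      omega
    have hgpow : (g : KK m)^((j - 1 : Fin (n'+1)) : ℕ)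
        = (g : KK m)^((j:ℕ)) * ((g⁻¹ : (KK m)ˣ) : KK m) := by
      have hmod : g ^ (((j:ℕ) + n') % (n'+1)) = g ^ ((j:ℕ) + n') := by
        conv_rhs => rw [← pow_mod_orderOf]
        rw [horder]
      have hu : (g^((j - 1 : Fin (n'+1)) : ℕ) : (KK m)ˣ) = g^((j:ℕ)) * g⁻¹ := by
        rw [hsubval, hmod, pow_add]
        congr 1
        have h1 : g^n' * g = 1 := by
          rw [← pow_succ, ← horder]; exact pow_orderOf_eq_one g
        exact eq_inv_of_mul_eq_one_left h1
      have h2 := congrArg (Units.val) hu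
      rw [hval] at h2
      rw [h2, Units.val_mul, hval]
    rw [Qf, Qf, hgpow]
    congr 1
    refine Finset.sum_congr rfl (fun i _ => ?_)
    rw [mul_pow]
    ring
  · rintro x ⟨a, rfl⟩ hx0
    have ha : a ≠ 0 := by
      intro h; apply hx0; rw [h, map_zero]
    have h1 := hweight a ha
    have h2 : hammingNorm (Phi m c n g a) = #{j : Fin n | Qf m c a (E j) ≠ 0} := by
      unfold hammingNorm
      congr 1
    have hle : 2^(m/2+c-1) ≤ 2^(m-1) := Nat.pow_le_pow_right (by norm_num) (by omega)
    zify [hle]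
    rw [h2]
    have e1 : (2:ℤ)^m = 2*2^(m-1) := by
      rw [← pow_succ']; congr 1; omega
    have e2 : (2:ℤ)^(m/2+c) = 2*2^(m/2+c-1) := by
      rw [← pow_succ']; congr 1; omega
    linarith
end

section
/- Let m ≥ 4 be an even integer, n = 2^m − 1, and c an integer with 1 ≤ c ≤ m/2 − 1. Then 2^{m−1} − 2^{m/2+c−1} ≥ n/2 − 2^{c−1}√n, and consequently A(n, d) ≥ n^c for any integer d ≤ n/2 − 2^{c−1}√n with d ≥ 1; i.e., there exists a subset C ⊆ F_2^n with |C| ≥ n^c such that any two distinct elements of C have Hamming distance at least d. -/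
/-!
Let `q = 2 ^ (m / 2)`, so that `n = q ^ 2 - 1`, and fix a nonzero `𝔽₂`-linear functional `φ` on
`𝔽_q`. Concatenating the Reed–Solomon code of dimension `2c` over `𝔽_q` with the Hadamard code
gives, for each polynomial `f` of degree `< 2c`, the word `(φ (f α * β))` indexed by the nonzero
pairs `(α, β)`. There are `q ^ (2c) ≥ n ^ c` such words. A nonzero `f` has at most `2c - 1` roots,
and for `f α ≠ 0` exactly `q / 2` of the `β` give `φ (f α * β) ≠ 0`, so any two words are at
distance at least `(q + 1 - 2c) q / 2`. This beats `n / 2 - 2 ^ (c - 1) √n` since `√n ≥ q - 1`.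
-/

open Finset Polynomial

lemma card_filter_comp_equiv {α β : Type*} [Fintype α] [Fintype β] (e : α ≃ β) (p : β → Prop)
    [DecidablePred p] : #{a | p (e a)} = #{b | p b} := by
  conv_rhs => rw [← map_univ_equiv e, filter_map, card_map]
  rfl

lemma hammingDist_comp_equiv {ι κ : Type*} [Fintype ι] [Fintype κ] {A : Type*} [DecidableEq A]
    (e : κ ≃ ι) (x y : ι → A) : hammingDist (x ∘ e) (y ∘ e) = hammingDist x y :=
  card_filter_comp_equiv e fun i => x i ≠ y i

lemma exists_finset_code_of_pairwise_le_hammingDist {M ι A : Type*} [Fintype M] [Fintype ι]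
    [DecidableEq A] (w : M → ι → A) {d N : ℕ} (hd : 0 < d) (hN : Fintype.card ι = N)
    (hw : Pairwise fun a b => d ≤ hammingDist (w a) (w b)) :
    ∃ C : Finset (Fin N → A), #C = Fintype.card M ∧
      ∀ x ∈ C, ∀ y ∈ C, x ≠ y → d ≤ hammingDist x y := by
  let e : Fin N ≃ ι := (Fintype.equivFinOfCardEq hN).symm
  have hdist : Pairwise fun a b => d ≤ hammingDist (w a ∘ e) (w b ∘ e) := by
    simpa only [hammingDist_comp_equiv] using hw
  have hinj : Function.Injective fun a => w a ∘ e := fun a b hab => by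
    by_contra hne
    have := hdist hne
    simp_all
  refine ⟨univ.image fun a => w a ∘ e, by rw [card_image_of_injective _ hinj, card_univ], ?_⟩
  simp only [mem_image, mem_univ, true_and]
  rintro _ ⟨a, rfl⟩ _ ⟨b, rfl⟩ hab
  exact hdist fun h => hab (h ▸ rfl)

lemma card_sub_natDegree_le_card_filter_eval_ne_zero {R : Type*} [CommRing R] [IsDomain R]
    [Fintype R] [DecidableEq R] {f : R[X]} (hf : f ≠ 0) :
    Fintype.card R - f.natDegree ≤ #{x | f.eval x ≠ 0} := by
  have hroots : #{x | f.eval x = 0} ≤ f.natDegree :=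
    card_le_degree_of_subset_roots fun x hx => by simp_all [mem_roots hf]
  have := card_filter_add_card_filter_not (s := univ) (p := fun x => f.eval x = 0)
  simp only [← ne_eq, card_univ] at this
  omega

lemma two_mul_card_filter_ne_zero {G : Type*} [AddGroup G] [Fintype G] (φ : G →+ ZMod 2)
    (hφ : φ ≠ 0) : 2 * #{g | φ g ≠ 0} = Fintype.card G := by
  have hZ : ∀ x : ZMod 2, x ≠ 0 ↔ x = 1 := by decide
  obtain ⟨g₀, hg₀⟩ := DFunLike.ne_iff.mp hφ
  have hfiber := AddMonoidHom.card_fiber_eq_of_mem_range φ ⟨0, map_zero φ⟩ ⟨g₀, (hZ _).mp hg₀⟩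
  have := card_filter_add_card_filter_not (s := univ) (p := fun g => φ g = 0)
  simp only [card_univ, hZ] at this ⊢
  omega

section ConcatenatedCode

variable {K A : Type*} [Field K] [Fintype K] [DecidableEq K] [AddCommGroup A] [DecidableEq A]

def concatCodeword (φ : K →+ A) (f : K[X]) (p : {p : K × K // p ≠ 0}) : A :=
  φ (f.eval p.1.1 * p.1.2)

lemma hammingDist_concatCodeword (φ : K →+ A) (f g : K[X]) :
    hammingDist (concatCodeword φ f) (concatCodeword φ g) =
      hammingNorm (concatCodeword φ (g - f)) := by
  rw [hammingDist_eq_hammingNorm]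
  congr 1
  ext p
  simp [concatCodeword, sub_mul, neg_add_eq_sub]

lemma hammingNorm_concatCodeword (φ : K →+ A) (f : K[X]) :
    hammingNorm (concatCodeword φ f) = #{x | f.eval x ≠ 0} * #{y | φ y ≠ 0} := by
  have hpunct : hammingNorm (concatCodeword φ f) = #{p : K × K | φ (f.eval p.1 * p.2) ≠ 0} := by
    rw [hammingNorm, ← Fintype.card_subtype, ← Fintype.card_subtype]
    exact Fintype.card_congr <| Equiv.subtypeSubtypeEquivSubtype (p := (· ≠ 0))
      (q := fun p : K × K => φ (f.eval p.1 * p.2) ≠ 0) fun hp h0 => by simp [h0] at hp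
  have hfiber (x : K) :
      #{y | φ (f.eval x * y) ≠ 0} = if f.eval x ≠ 0 then #{y | φ y ≠ 0} else 0 := by
    split_ifs with hx
    · exact card_filter_comp_equiv (Equiv.mulLeft₀ _ hx) (fun y => φ y ≠ 0)
    · simp_all
  rw [hpunct, card_filter, Fintype.sum_prod_type]
  simp only [hfiber, mul_one, ← sum_filter, sum_const, smul_eq_mul]

lemma exists_concatCode (φ : K →+ A) (hφ : φ ≠ 0) {k N : ℕ} (hk : k ≤ Fintype.card K)
    (hN : N = Fintype.card K ^ 2 - 1) :
    ∃ C : Finset (Fin N → A), #C = Fintype.card K ^ k ∧ ∀ x ∈ C, ∀ y ∈ C, x ≠ y →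
      (Fintype.card K + 1 - k) * #{y | φ y ≠ 0} ≤ hammingDist x y := by
  let message (v : Fin k → K) : K[X] := (degreeLTEquiv K k).symm v
  have hweight : 0 < #{y | φ y ≠ 0} := by
    obtain ⟨y, hy⟩ := DFunLike.ne_iff.mp hφ
    exact card_pos.mpr ⟨y, by simpa using hy⟩
  have hlen : Fintype.card {p : K × K // p ≠ 0} = N := by
    rw [Fintype.card_subtype_compl, Fintype.card_prod, Fintype.card_subtype_eq, hN, sq]
  have hw : Pairwise fun v w => (Fintype.card K + 1 - k) * #{y | φ y ≠ 0} ≤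
      hammingDist (concatCodeword φ (message v)) (concatCodeword φ (message w)) := by
    intro v w hvw
    have hsub : message w - message v = ((degreeLTEquiv K k).symm (w - v) : K[X]) := by
      simp [message]
    have hne : message w - message v ≠ 0 := by
      rw [hsub]
      simpa [sub_eq_zero] using hvw.symm
    have hdeg : (message w - message v).natDegree < k := by
      rw [hsub, natDegree_lt_iff_degree_lt (hsub ▸ hne)]
      exact mem_degreeLT.mp (Submodule.coe_mem _)
    rw [hammingDist_concatCodeword, hammingNorm_concatCodeword]
    have := card_sub_natDegree_le_card_filter_eval_ne_zero hne
    exact Nat.mul_le_mul_right _ (by omega)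
  obtain ⟨C, hC, hdist⟩ :=
    exists_finset_code_of_pairwise_le_hammingDist _ (Nat.mul_pos (by omega) hweight) hlen hw
  exact ⟨C, by rw [hC, Fintype.card_fun, Fintype.card_fin], hdist⟩

end ConcatenatedCode

lemma half_sq_sub_one_sub_mul_sqrt_le {Q E : ℝ} (hQ : 1 ≤ Q) (hQE : 2 * E ≤ Q) :
    (Q ^ 2 - 1) / 2 - E * √(Q ^ 2 - 1) ≤ Q ^ 2 / 2 - Q * E := by
  set S := √(Q ^ 2 - 1)
  have hS : S ^ 2 = Q ^ 2 - 1 := Real.sq_sqrt (by nlinarith)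
  have hSQ : S ≤ Q := Real.sqrt_le_iff.mpr ⟨by linarith, by linarith⟩
  -- `(Q - S) (Q + S) = 1`, so `E (Q - S) ≤ E / Q ≤ 1 / 2`
  nlinarith [Real.sqrt_nonneg (Q ^ 2 - 1)]

lemma half_sq_sub_one_sub_mul_sqrt_le_mul {Q E c : ℝ} (hQ : 1 ≤ Q) (hE : 0 ≤ E) (hcE : c ≤ E)
    (hQE : 2 * E ≤ Q) :
    (Q ^ 2 - 1) / 2 - E * √(Q ^ 2 - 1) ≤ (Q + 1 - 2 * c) * Q / 2 := by
  have hS : Q - 1 ≤ √(Q ^ 2 - 1) := Real.le_sqrt_of_sq_le (by nlinarith)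
  nlinarith [mul_le_mul_of_nonneg_left hS hE]

lemma exists_addMonoidHom_zmod_two_ne_zero (K : Type*) [Field K] [Algebra (ZMod 2) K] :
    ∃ φ : K →+ ZMod 2, φ ≠ 0 := by
  obtain ⟨f, hf⟩ := Module.Projective.exists_dual_ne_zero (ZMod 2) (one_ne_zero : (1 : K) ≠ 0)
  exact ⟨f.toAddMonoidHom, fun h => hf (DFunLike.congr_fun h 1)⟩

theorem exists_binary_code_two_pow {s k N : ℕ} (hs : s ≠ 0) (hk : k ≤ 2 ^ s)
    (hN : N = (2 ^ s) ^ 2 - 1) :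
    ∃ C : Finset (Fin N → ZMod 2), #C = (2 ^ s) ^ k ∧ ∀ x ∈ C, ∀ y ∈ C, x ≠ y →
      (2 ^ s + 1 - k) * 2 ^ s ≤ 2 * hammingDist x y := by
  classical
  let K := GaloisField 2 s
  let : Fintype K := Fintype.ofFinite K
  have hK : Fintype.card K = 2 ^ s := by rw [← Nat.card_eq_fintype_card, GaloisField.card 2 s hs]
  obtain ⟨φ, hφ⟩ := exists_addMonoidHom_zmod_two_ne_zero K
  have hweight := two_mul_card_filter_ne_zero φ hφ
  obtain ⟨C, hC, hdist⟩ := exists_concatCode φ hφ (hK ▸ hk) (hK ▸ hN)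
  rw [hK] at hweight hC hdist
  refine ⟨C, hC, fun x hx y hy hxy => ?_⟩
  calc (2 ^ s + 1 - k) * 2 ^ s = 2 * ((2 ^ s + 1 - k) * #{y | φ y ≠ 0}) := by
        rw [mul_left_comm, hweight]
    _ ≤ 2 * hammingDist x y := Nat.mul_le_mul_left 2 (hdist x hx y hy hxy)

theorem lower_bound_A_general (m c n : ℕ) (hme : Even m)
    (hc1 : 1 ≤ c) (hc2 : c ≤ m / 2 - 1) (hn : n = 2 ^ m - 1) :
    ((2 : ℝ) ^ (m - 1) - 2 ^ (m / 2 + c - 1) ≥ (n : ℝ) / 2 - 2 ^ (c - 1) * Real.sqrt n) ∧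
    (∀ d : ℕ, 1 ≤ d → (d : ℝ) ≤ (n : ℝ) / 2 - 2 ^ (c - 1) * Real.sqrt n →
      ∃ C : Finset (Fin n → ZMod 2), n ^ c ≤ C.card ∧
        ∀ x ∈ C, ∀ y ∈ C, x ≠ y → d ≤ hammingDist x y) := by
  obtain ⟨s, rfl⟩ := hme
  have hs : (s + s) / 2 = s := by omega
  rw [hs] at hc2 ⊢
  have hQ : 1 ≤ (2 : ℝ) ^ s := one_le_pow₀ one_le_two
  have hn' : (n : ℝ) = ((2 : ℝ) ^ s) ^ 2 - 1 := by
    rw [hn, Nat.cast_sub Nat.one_le_two_pow]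
    push_cast
    ring
  have hcE : c ≤ 2 ^ (c - 1) := by
    have := Nat.lt_two_pow_self (n := c - 1)
    omega
  have hEQ : 2 * 2 ^ (c - 1) ≤ 2 ^ s := by
    rw [← pow_succ']
    exact Nat.pow_le_pow_right two_pos (by omega)
  refine ⟨?_, fun d _ hd => ?_⟩
  · have hhalf : (2 : ℝ) ^ (s + s - 1) = ((2 : ℝ) ^ s) ^ 2 / 2 := by
      rw [eq_div_iff two_ne_zero, ← pow_succ, Nat.sub_add_cancel (by omega), pow_add, sq]
    have hprod : (2 : ℝ) ^ (s + c - 1) = 2 ^ s * 2 ^ (c - 1) := by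
      rw [← pow_add, Nat.add_sub_assoc hc1]
    rw [ge_iff_le, hn', hhalf, hprod]
    exact half_sq_sub_one_sub_mul_sqrt_le hQ (by exact_mod_cast hEQ)
  · have hN : n = (2 ^ s) ^ 2 - 1 := by rw [hn, ← pow_mul, mul_two]
    obtain ⟨C, hC, hdist⟩ :=
      exists_binary_code_two_pow (s := s) (k := 2 * c) (by omega) (by omega) hN
    refine ⟨C, ?_, fun x hx y hy hxy => ?_⟩
    · rw [hC, pow_mul]
      exact Nat.pow_le_pow_left (hN ▸ Nat.sub_le _ _) c
    have hxy' := hdist x hx y hy hxy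
    rw [← Nat.cast_le (α := ℝ), Nat.cast_mul, Nat.cast_sub (by omega)] at hxy'
    push_cast at hxy'
    have hbound := half_sq_sub_one_sub_mul_sqrt_le_mul (E := 2 ^ (c - 1)) (c := c) hQ
      (by positivity) (by exact_mod_cast hcE) (by exact_mod_cast hEQ)
    rw [hn'] at hd
    exact_mod_cast (by linarith : (d : ℝ) ≤ hammingDist x y)

/-- For `n = 2^m - 1`, `2^(m-1) - 2^(m/2+c-1) ≥ n/2 - 2^(c-1)√n`, and consequently
`A(n,d) ≥ n^c` for any integer `d ≥ 1` with `d ≤ n/2 - 2^(c-1)√n`. -/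
theorem lower_bound_A (m c n : ℕ) (hm : 4 ≤ m) (hme : Even m)
    (hc1 : 1 ≤ c) (hc2 : c ≤ m / 2 - 1) (hn : n = 2 ^ m - 1) :
    ((2 : ℝ) ^ (m - 1) - 2 ^ (m / 2 + c - 1) ≥ (n : ℝ) / 2 - 2 ^ (c - 1) * Real.sqrt n) ∧
    (∀ d : ℕ, 1 ≤ d → (d : ℝ) ≤ (n : ℝ) / 2 - 2 ^ (c - 1) * Real.sqrt n →
      ∃ C : Finset (Fin n → ZMod 2), n ^ c ≤ C.card ∧
        ∀ x ∈ C, ∀ y ∈ C, x ≠ y → d ≤ hammingDist x y) :=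
  lower_bound_A_general m c n hme hc1 hc2 hn
end

section
/- Let m ≥ 4 be an even integer and let c be an integer with 1 ≤ c ≤ m/2 − 1. For i = 1, 2, …, c define P_i = { (2^j + 2^{m/2+i+j}) mod (2^m − 1) : j = 0, 1, …, m−1 } as a subset of the integers modulo 2^m − 1. Then |P_i| = m for every i, and P_i ∩ P_k = ∅ whenever i ≠ k. -/
private lemma two_pow_sum_mod_eq {x y : ℕ} (hxy : x < y) :
    (2 ^ x + 2 ^ y) % 2 ^ (x + 1) = 2 ^ x := by
  obtain ⟨t, ht⟩ : 2 ^ (x + 1) ∣ 2 ^ y := pow_dvd_pow 2 hxy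
  rw [ht, Nat.add_mul_mod_self_left,
    Nat.mod_eq_of_lt (Nat.pow_lt_pow_right one_lt_two (Nat.lt_succ_self x))]

private lemma two_pow_sum_mod_zero {x u v : ℕ} (hxu : x < u) (huv : u < v) :
    (2 ^ u + 2 ^ v) % 2 ^ (x + 1) = 0 := by
  obtain ⟨t1, ht1⟩ : 2 ^ (x + 1) ∣ 2 ^ u := pow_dvd_pow 2 hxu
  obtain ⟨t2, ht2⟩ : 2 ^ (x + 1) ∣ 2 ^ v := pow_dvd_pow 2 (by omega)
  rw [ht1, ht2, ← Nat.mul_add, Nat.mul_mod_right]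

private lemma two_pow_sum_ne {x y u v : ℕ} (hxy : x < y) (huv : u < v) (hxu : x < u) :
    2 ^ x + 2 ^ y ≠ 2 ^ u + 2 ^ v := by
  intro h
  have h1 := two_pow_sum_mod_eq hxy
  have h2 := two_pow_sum_mod_zero hxu huv
  rw [h, h2] at h1
  exact (pow_pos (by norm_num : (0:ℕ) < 2) x).ne h1

private lemma two_pow_sum_uniq {a b c d : ℕ} (hab : a < b) (hcd : c < d)
    (h : 2 ^ a + 2 ^ b = 2 ^ c + 2 ^ d) : a = c ∧ b = d := by
  have hac : a = c := by
    rcases lt_trichotomy a c with h' | h' | h'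
    · exact absurd h (two_pow_sum_ne hab hcd h')
    · exact h'
    · exact absurd h.symm (two_pow_sum_ne hcd hab h')
  subst hac
  have hbd : (2 : ℕ) ^ b = 2 ^ d := by omega
  exact ⟨rfl, Nat.pow_right_injective (le_refl 2) hbd⟩

private lemma two_pow_sum_key {a b a' b' : ℕ} (hab : a ≠ b) (hab' : a' ≠ b')
    (h : 2 ^ a + 2 ^ b = 2 ^ a' + 2 ^ b') : (a = a' ∧ b = b') ∨ (a = b' ∧ b = a') := by
  rcases hab.lt_or_gt with h1 | h1 <;> rcases hab'.lt_or_gt with h2 | h2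
  · exact Or.inl (two_pow_sum_uniq h1 h2 h)
  · have := two_pow_sum_uniq h1 h2 (by omega)
    exact Or.inr ⟨this.1, this.2⟩
  · have := two_pow_sum_uniq h1 h2 (by omega)
    exact Or.inr ⟨this.2, this.1⟩
  · have := two_pow_sum_uniq h1 h2 (by omega)
    exact Or.inl ⟨this.2, this.1⟩

private lemma two_pow_sum_lt {m a b : ℕ} (hm : 4 ≤ m) (ha : a < m) (hb : b < m)
    (hab : a ≠ b) : 2 ^ a + 2 ^ b < 2 ^ m - 1 := by
  have key : ∀ x y : ℕ, x < y → y < m → 2 ^ x + 2 ^ y < 2 ^ m - 1 := by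
    intro x y hxy hym
    have h1 : 2 ^ x ≤ 2 ^ (m - 2) := Nat.pow_le_pow_right (by norm_num) (by omega)
    have h2 : 2 ^ y ≤ 2 ^ (m - 1) := Nat.pow_le_pow_right (by norm_num) (by omega)
    have h3 : 2 ^ m = 4 * 2 ^ (m - 2) := by
      have : (2:ℕ) ^ m = 2 ^ (2 + (m - 2)) := by congr 1; omega
      rw [this, pow_add]; norm_num
    have h4 : 2 ^ (m - 1) = 2 * 2 ^ (m - 2) := by
      have : (2:ℕ) ^ (m - 1) = 2 ^ (1 + (m - 2)) := by congr 1; omega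
      rw [this, pow_add, pow_one]
    have h5 : 4 ≤ 2 ^ (m - 2) := by
      calc (4 : ℕ) = 2 ^ 2 := rfl
      _ ≤ 2 ^ (m - 2) := Nat.pow_le_pow_right (by norm_num) (by omega)
    omega
  rcases hab.lt_or_gt with h | h
  · exact key a b h hb
  · have := key b a h ha; omega

private lemma cast_two_pow_mod (m : ℕ) (hm : 0 < m) (t : ℕ) :
    ((2 ^ t : ℕ) : ZMod (2 ^ m - 1)) = ((2 ^ (t % m) : ℕ) : ZMod (2 ^ m - 1)) := by
  have hone : ((2 ^ m : ℕ) : ZMod (2 ^ m - 1)) = 1 := by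
    have h1 : (2 : ℕ) ^ m = (2 ^ m - 1) + 1 := by
      have : 1 ≤ 2 ^ m := Nat.one_le_two_pow
      omega
    rw [h1, Nat.cast_add, ZMod.natCast_self, zero_add, Nat.cast_one]
  conv_lhs => rw [← Nat.div_add_mod t m]
  rw [pow_add, pow_mul, Nat.cast_mul, Nat.cast_pow, hone, one_pow, one_mul]

private lemma dvd_of_add_mod_eq {m s j : ℕ} (h : (s + j) % m = j % m) : m ∣ s := by
  have h2 : j ≡ s + j [MOD m] := h.symm
  have := (Nat.modEq_iff_dvd' (Nat.le_add_left j s)).mp h2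
  simpa using this

private lemma pair_eq (m s s' j j' : ℕ) (hm : 4 ≤ m) (hs : 0 < s) (hsm : s < m)
    (hs' : 0 < s') (hs'm : s' < m) (hj : j < m) (hj' : j' < m)
    (h : ((2 ^ j + 2 ^ (s + j) : ℕ) : ZMod (2 ^ m - 1))
       = ((2 ^ j' + 2 ^ (s' + j') : ℕ) : ZMod (2 ^ m - 1))) :
    (j = j' ∧ s = s') ∨ (m ∣ s + s') := by
  have hm0 : 0 < m := by omega
  have h16 : (16 : ℕ) ≤ 2 ^ m := by
    calc (16 : ℕ) = 2 ^ 4 := rfl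
    _ ≤ 2 ^ m := Nat.pow_le_pow_right (by norm_num) hm
  haveI : NeZero (2 ^ m - 1) := ⟨by omega⟩
  have hbm : (s + j) % m < m := Nat.mod_lt _ hm0
  have hb'm : (s' + j') % m < m := Nat.mod_lt _ hm0
  have hbne : j ≠ (s + j) % m := by
    intro hcon
    have hmm : (s + j) % m = j % m := by rw [Nat.mod_eq_of_lt hj]; exact hcon.symm
    exact absurd (Nat.le_of_dvd hs (dvd_of_add_mod_eq hmm)) (by omega)
  have hb'ne : j' ≠ (s' + j') % m := by
    intro hcon
    have hmm : (s' + j') % m = j' % m := by rw [Nat.mod_eq_of_lt hj']; exact hcon.symm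
    exact absurd (Nat.le_of_dvd hs' (dvd_of_add_mod_eq hmm)) (by omega)
  rw [Nat.cast_add, Nat.cast_add, cast_two_pow_mod m hm0 (s + j),
    cast_two_pow_mod m hm0 (s' + j'), ← Nat.cast_add, ← Nat.cast_add] at h
  have hlt1 : 2 ^ j + 2 ^ ((s + j) % m) < 2 ^ m - 1 := two_pow_sum_lt hm hj hbm hbne
  have hlt2 : 2 ^ j' + 2 ^ ((s' + j') % m) < 2 ^ m - 1 := two_pow_sum_lt hm hj' hb'm hb'ne
  have hnat : 2 ^ j + 2 ^ ((s + j) % m) = 2 ^ j' + 2 ^ ((s' + j') % m) := by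
    have := congrArg ZMod.val h
    rwa [ZMod.val_cast_of_lt hlt1, ZMod.val_cast_of_lt hlt2] at this
  rcases two_pow_sum_key hbne hb'ne hnat with ⟨hjj, hbb⟩ | ⟨hjb, hbj⟩
  · left
    refine ⟨hjj, ?_⟩
    subst hjj
    have hmeq : (s + j) % m = (s' + j) % m := hbb
    have hmod : s % m = s' % m := Nat.ModEq.add_right_cancel' j hmeq
    rwa [Nat.mod_eq_of_lt hsm, Nat.mod_eq_of_lt hs'm] at hmod
  · right
    have c1 : s + j ≡ j' [MOD m] := by
      show (s + j) % m = j' % m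
      rw [Nat.mod_eq_of_lt hj']; exact hbj
    have c2 : s' + j' ≡ j [MOD m] := by
      show (s' + j') % m = j % m
      rw [Nat.mod_eq_of_lt hj]; exact hjb.symm
    have c4 : s' + (s + j) ≡ j [MOD m] := (Nat.ModEq.add_left s' c1).trans c2
    have hdvd := (Nat.modEq_iff_dvd' (by omega : j ≤ s' + (s + j))).mp c4.symm
    have heq : s' + (s + j) - j = s + s' := by omega
    rwa [heq] at hdvd

/-- The cyclotomic cosets `P_i = {(2^j + 2^(m/2+i+j)) mod (2^m - 1) : 0 ≤ j < m}` each have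
cardinality `m`, and they are pairwise disjoint for `1 ≤ i ≤ c`. -/
theorem cyclotomic_cosets_disjoint (m c : ℕ) (hm : 4 ≤ m) (hme : Even m)
    (hc1 : 1 ≤ c) (hc2 : c ≤ m / 2 - 1)
    (P : ℕ → Finset (ZMod (2 ^ m - 1)))
    (hP : ∀ i, P i = (Finset.range m).image
      (fun j => ((2 ^ j + 2 ^ (m / 2 + i + j) : ℕ) : ZMod (2 ^ m - 1)))) :
    (∀ i, 1 ≤ i → i ≤ c → (P i).card = m) ∧
    (∀ i k, 1 ≤ i → i ≤ c → 1 ≤ k → k ≤ c → i ≠ k → Disjoint (P i) (P k)) := by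
  obtain ⟨t, ht⟩ := hme
  have htm : m / 2 = t := by omega
  constructor
  · intro i hi1 hi2
    rw [hP i, Finset.card_image_of_injOn, Finset.card_range]
    intro j1 h1 j2 h2 heq
    simp only [Finset.mem_coe, Finset.mem_range] at h1 h2
    have hs : 0 < m / 2 + i := by omega
    have hsm : m / 2 + i < m := by omega
    rcases pair_eq m (m / 2 + i) (m / 2 + i) j1 j2 hm hs hsm hs hsm h1 h2 heq with
      ⟨hj, _⟩ | hdvd
    · exact hj
    · exfalso
      have hsum : m / 2 + i + (m / 2 + i) = m + 2 * i := by omega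
      rw [hsum] at hdvd
      have h2i : m ∣ 2 * i := (Nat.dvd_add_right (dvd_refl m)).mp hdvd
      have := Nat.le_of_dvd (by omega) h2i
      omega
  · intro i k hi1 hi2 hk1 hk2 hik
    rw [hP i, hP k, Finset.disjoint_left]
    intro x hx hx'
    simp only [Finset.mem_image, Finset.mem_range] at hx hx'
    obtain ⟨j, hj, hjx⟩ := hx
    obtain ⟨j', hj', hj'x⟩ := hx'
    have heq : ((2 ^ j + 2 ^ (m / 2 + i + j) : ℕ) : ZMod (2 ^ m - 1))
        = ((2 ^ j' + 2 ^ (m / 2 + k + j') : ℕ) : ZMod (2 ^ m - 1)) := by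
      rw [hjx, hj'x]
    have hsi : 0 < m / 2 + i := by omega
    have hsim : m / 2 + i < m := by omega
    have hsk : 0 < m / 2 + k := by omega
    have hskm : m / 2 + k < m := by omega
    rcases pair_eq m (m / 2 + i) (m / 2 + k) j j' hm hsi hsim hsk hskm hj hj' heq with
      ⟨_, hss⟩ | hdvd
    · exact hik (by omega)
    · have hsum : m / 2 + i + (m / 2 + k) = m + (i + k) := by omega
      rw [hsum] at hdvd
      have h2i : m ∣ i + k := (Nat.dvd_add_right (dvd_refl m)).mp hdvd
      have := Nat.le_of_dvd (by omega) h2i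
      omega
end

section
/- Let m ≥ 4 be an even integer and let c be an integer with 1 ≤ c ≤ m/2 − 1. Then for every i with 1 ≤ i ≤ c and every j with 0 ≤ j ≤ m − 1, the residue (2^j + 2^{m/2+i+j}) mod (2^m − 1), taken as an integer in {0, 1, …, 2^m − 2}, is at most 2^{m−1} + 2^{m/2+c−1}, i.e., it is strictly less than t = 2^{m−1} + 2^{m/2+c−1} + 1. -/
/-- Each residue `(2^j + 2^(m/2+i+j)) mod (2^m - 1)` is strictly less than
`t = 2^(m-1) + 2^(m/2+c-1) + 1`. -/
theorem coset_elements_small (m c : ℕ) (hm : 4 ≤ m) (hme : Even m)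
    (hc1 : 1 ≤ c) (hc2 : c ≤ m / 2 - 1) :
    ∀ i j : ℕ, 1 ≤ i → i ≤ c → j ≤ m - 1 →
      (2 ^ j + 2 ^ (m / 2 + i + j)) % (2 ^ m - 1) < 2 ^ (m - 1) + 2 ^ (m / 2 + c - 1) + 1 := by
  intro i j hi1 hic hj
  have hm2 : m / 2 * 2 = m := Nat.div_mul_cancel hme.two_dvd
  set k := m / 2 + i + j with hk
  have h3 : (2:ℕ) ^ (m/2+c-1) ≤ 2 ^ (m-2) := Nat.pow_le_pow_right (by norm_num) (by omega)
  have h4 : (2:ℕ) ^ (m-2) * 4 = 2 ^ m := by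
    rw [show (4:ℕ) = 2^2 by norm_num, ← pow_add]; congr 1; omega
  have h5 : (2:ℕ) ^ (m-1) * 2 = 2 ^ m := by rw [← pow_succ]; congr 1; omega
  have hpos : (2:ℕ) ≤ 2 ^ (m-2) := by
    have := Nat.pow_le_pow_right (show 1 ≤ 2 by norm_num) (show 1 ≤ m-2 by omega)
    simpa using this
  rcases lt_or_ge k m with hkm | hkm
  · have h1 : (2:ℕ) ^ j ≤ 2 ^ (m/2+c-1) := Nat.pow_le_pow_right (by norm_num) (by omega)
    have h2 : (2:ℕ) ^ k ≤ 2 ^ (m-1) := Nat.pow_le_pow_right (by norm_num) (by omega)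
    have hlt : 2 ^ j + 2 ^ k < 2 ^ m - 1 := by omega
    rw [Nat.mod_eq_of_lt hlt]
    omega
  · have h1 : (2:ℕ) ^ (k-m) ≤ 2 ^ (m/2+c-1) := Nat.pow_le_pow_right (by norm_num) (by omega)
    have h2 : (2:ℕ) ^ j ≤ 2 ^ (m-1) := Nat.pow_le_pow_right (by norm_num) (by omega)
    have h6 : (2:ℕ) ^ (k-m) * (2 ^ m - 1) = 2 ^ k - 2 ^ (k-m) := by
      rw [Nat.mul_sub, mul_one, ← pow_add, Nat.sub_add_cancel hkm]
    have h7 : (2:ℕ) ^ (k-m) ≤ 2 ^ k := Nat.pow_le_pow_right (by norm_num) (by omega)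
    have key : 2 ^ j + 2 ^ k = (2 ^ j + 2 ^ (k-m)) + 2 ^ (k-m) * (2 ^ m - 1) := by omega
    rw [key, Nat.add_mul_mod_self_right, Nat.mod_eq_of_lt (by omega)]
    omega
end

section
/- For every ε > 0 there exists N such that for all n ≥ N the following holds: there exists a nonzero function f : F_2^n → ℝ supported in the Hamming ball B_3(0,n) of radius 3 with ⟨Af, f⟩ ≥ (√(3 + √6) − ε) · √n · ⟨f, f⟩; in particular the maximal eigenvalue satisfies λ_{B_3(0,n)} ≥ (√(3 + √6) − ε) √n, where √(3 + √6) ≈ 2.334. -/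
open Finset

/-- The adjacency operator of the Hamming cube: `(Af)(x) = Σ_{y : d_H(x,y) = 1} f(y)`. -/
noncomputable def adjOp {n : ℕ} (f : (Fin n → ZMod 2) → ℝ) : (Fin n → ZMod 2) → ℝ :=
  fun x => ∑ y : Fin n → ZMod 2, if hammingDist x y = 1 then f y else 0

/-- The inner product `⟨f, g⟩ = Σ_x f(x) g(x)`. -/
noncomputable def innerCube {n : ℕ} (f g : (Fin n → ZMod 2) → ℝ) : ℝ :=
  ∑ x : Fin n → ZMod 2, f x * g x

/-- The maximal eigenvalue of the subgraph of the Hamming cube induced by `B`. -/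
noncomputable def maxEig {n : ℕ} (B : Finset (Fin n → ZMod 2)) : ℝ :=
  sSup {r : ℝ | ∃ f : (Fin n → ZMod 2) → ℝ, f ≠ 0 ∧ (∀ x, f x ≠ 0 → x ∈ B) ∧
    r = innerCube (adjOp f) f / innerCube f f}

/-- The Hamming ball of radius `r` centered at `0` in `F_2^n`. -/
def hammingBall (n r : ℕ) : Finset (Fin n → ZMod 2) :=
  Finset.univ.filter (fun x => hammingNorm x ≤ r)

namespace EigBallAux

lemma zmod2_ne_add_one (a : ZMod 2) : a ≠ a + 1 := by revert a; decide

lemma zmod2_eq_add_one_of_ne {a b : ZMod 2} (h : a ≠ b) : b = a + 1 := by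
  revert h; revert a b; decide

lemma zmod2_add_one_eq_zero {a : ZMod 2} (h : a ≠ 0) : a + 1 = 0 := by
  revert h; revert a; decide

lemma zmod2_eq_zero_or_one (a : ZMod 2) : a = 0 ∨ a = 1 := by revert a; decide

variable {n : ℕ}

/-- Flip the `i`-th coordinate. -/
def flp (x : Fin n → ZMod 2) (i : Fin n) : Fin n → ZMod 2 := Function.update x i (x i + 1)

lemma flp_apply_self (x : Fin n → ZMod 2) (i : Fin n) : flp x i i = x i + 1 :=
  Function.update_self _ _ _

lemma flp_apply_ne (x : Fin n → ZMod 2) {i j : Fin n} (h : j ≠ i) : flp x i j = x j :=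
  Function.update_of_ne h _ _

lemma flp_flp (x : Fin n → ZMod 2) (i : Fin n) : flp (flp x i) i = x := by
  funext j
  by_cases h : j = i
  · subst h
    rw [flp_apply_self, flp_apply_self]
    have : ∀ a : ZMod 2, a + 1 + 1 = a := by decide
    exact this _
  · rw [flp_apply_ne _ h, flp_apply_ne _ h]

lemma hammingDist_flp (x : Fin n → ZMod 2) (i : Fin n) : hammingDist x (flp x i) = 1 := by
  have h : (Finset.univ.filter fun j => x j ≠ flp x i j) = {i} := by
    ext j
    simp only [Finset.mem_filter, Finset.mem_univ, true_and, Finset.mem_singleton]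
    by_cases hj : j = i
    · subst hj
      simp only [flp_apply_self]
      simpa using zmod2_ne_add_one (x j)
    · simp [flp_apply_ne x hj, hj]
  show (Finset.univ.filter fun j => x j ≠ flp x i j).card = 1
  rw [h, Finset.card_singleton]

lemma exists_flp {x y : Fin n → ZMod 2} (h : hammingDist x y = 1) : ∃ i, y = flp x i := by
  have h' : (Finset.univ.filter fun j => x j ≠ y j).card = 1 := h
  obtain ⟨i, hi⟩ := Finset.card_eq_one.mp h'
  refine ⟨i, funext fun j => ?_⟩
  by_cases hj : j = i
  · subst hj
    have hmem : j ∈ Finset.univ.filter fun k => x k ≠ y k := by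
      rw [hi]; exact Finset.mem_singleton_self j
    have hne : x j ≠ y j := (Finset.mem_filter.mp hmem).2
    rw [flp_apply_self]
    exact zmod2_eq_add_one_of_ne hne
  · have hnmem : j ∉ Finset.univ.filter fun k => x k ≠ y k := by
      rw [hi]; simpa using hj
    have : ¬ x j ≠ y j := fun hc => hnmem (Finset.mem_filter.mpr ⟨Finset.mem_univ _, hc⟩)
    rw [flp_apply_ne x hj]
    exact (not_not.mp this).symm

lemma flp_inj (x : Fin n → ZMod 2) : Function.Injective (flp x) := by
  intro i j h
  by_contra hne
  have h1 : flp x i i = x i + 1 := flp_apply_self x i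
  have h2 : flp x j i = x i := flp_apply_ne x (Ne.symm (Ne.symm hne))
  rw [h] at h1
  rw [h1] at h2
  exact zmod2_ne_add_one (x i) h2.symm

lemma sum_flp (x : Fin n → ZMod 2) (g : (Fin n → ZMod 2) → ℝ) :
    (∑ y : Fin n → ZMod 2, if hammingDist x y = 1 then g y else 0)
      = ∑ i : Fin n, g (flp x i) := by
  rw [← Finset.sum_filter]
  refine (Finset.sum_bij (fun i _ => flp x i) ?_ ?_ ?_ ?_).symm
  · intro i _
    exact Finset.mem_filter.mpr ⟨Finset.mem_univ _, hammingDist_flp x i⟩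
  · intro a _ b _ h
    exact flp_inj x h
  · intro y hy
    obtain ⟨i, hi⟩ := exists_flp (Finset.mem_filter.mp hy).2
    exact ⟨i, Finset.mem_univ i, hi.symm⟩
  · intro i _
    rfl

lemma hammingNorm_flp_of_eq {x : Fin n → ZMod 2} {i : Fin n} (h : x i = 0) :
    hammingNorm (flp x i) = hammingNorm x + 1 := by
  have hfil : (Finset.univ.filter fun j => flp x i j ≠ 0)
      = insert i (Finset.univ.filter fun j => x j ≠ 0) := by
    ext j
    simp only [Finset.mem_filter, Finset.mem_univ, true_and, Finset.mem_insert]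
    by_cases hj : j = i
    · subst hj
      simp only [flp_apply_self, h, zero_add]
      simp
    · simp [flp_apply_ne x hj, hj]
  show (Finset.univ.filter fun j => flp x i j ≠ 0).card = _
  rw [hfil, Finset.card_insert_of_notMem (by simp [h])]
  rfl

lemma hammingNorm_flp_of_ne {x : Fin n → ZMod 2} {i : Fin n} (h : x i ≠ 0) :
    hammingNorm (flp x i) = hammingNorm x - 1 := by
  have hfil : (Finset.univ.filter fun j => flp x i j ≠ 0)
      = (Finset.univ.filter fun j => x j ≠ 0).erase i := by
    ext j
    simp only [Finset.mem_filter, Finset.mem_univ, true_and, Finset.mem_erase]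
    by_cases hj : j = i
    · subst hj
      simp only [flp_apply_self, zmod2_add_one_eq_zero h]
      simp
    · simp [flp_apply_ne x hj, hj]
  show (Finset.univ.filter fun j => flp x i j ≠ 0).card = _
  rw [hfil, Finset.card_erase_of_mem (by simp [h])]
  rfl

lemma card_filter_ne (x : Fin n → ZMod 2) :
    (Finset.univ.filter fun i => x i ≠ 0).card = hammingNorm x := rfl

lemma hammingNorm_le (x : Fin n → ZMod 2) : hammingNorm x ≤ n := by
  have := hammingNorm_le_card_fintype (x := x)
  simpa using this

lemma card_filter_eq (x : Fin n → ZMod 2) :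
    (Finset.univ.filter fun i => ¬ x i ≠ 0).card = n - hammingNorm x := by
  have h := Finset.card_filter_add_card_filter_not (s := (Finset.univ : Finset (Fin n)))
    (p := fun i => x i ≠ 0)
  rw [card_filter_ne] at h
  simp only [Finset.card_univ, Fintype.card_fin] at h
  omega

lemma adjOp_radial (a : ℕ → ℝ) (x : Fin n → ZMod 2) :
    adjOp (fun y => a (hammingNorm y)) x
      = (hammingNorm x : ℝ) * a (hammingNorm x - 1)
        + ((n : ℝ) - (hammingNorm x : ℝ)) * a (hammingNorm x + 1) := by
  show (∑ y : Fin n → ZMod 2, if hammingDist x y = 1 then a (hammingNorm y) else 0) = _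
  rw [sum_flp x (fun y => a (hammingNorm y))]
  rw [← Finset.sum_filter_add_sum_filter_not Finset.univ (fun i => x i ≠ 0)]
  have h1 : ∑ i ∈ Finset.univ.filter (fun i => x i ≠ 0), a (hammingNorm (flp x i))
      = (hammingNorm x : ℝ) * a (hammingNorm x - 1) := by
    rw [Finset.sum_congr rfl (fun i hi => by
      rw [hammingNorm_flp_of_ne (Finset.mem_filter.mp hi).2])]
    rw [Finset.sum_const, card_filter_ne, nsmul_eq_mul]
  have h2 : ∑ i ∈ Finset.univ.filter (fun i => ¬ x i ≠ 0), a (hammingNorm (flp x i))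
      = ((n : ℝ) - (hammingNorm x : ℝ)) * a (hammingNorm x + 1) := by
    rw [Finset.sum_congr rfl (fun i hi => by
      rw [hammingNorm_flp_of_eq (not_not.mp (Finset.mem_filter.mp hi).2)])]
    rw [Finset.sum_const, card_filter_eq, nsmul_eq_mul, Nat.cast_sub (hammingNorm_le x)]
  rw [h1, h2]

/-- The bijection between subsets and points of the cube. -/
def finsetEquiv (n : ℕ) : Finset (Fin n) ≃ (Fin n → ZMod 2) where
  toFun s := fun i => if i ∈ s then 1 else 0
  invFun x := Finset.univ.filter (fun i => x i ≠ 0)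
  left_inv s := by
    ext i
    simp only [Finset.mem_filter, Finset.mem_univ, true_and]
    by_cases h : i ∈ s <;> simp [h]
  right_inv x := by
    funext i
    by_cases h : x i = 0
    · simp [h]
    · rcases zmod2_eq_zero_or_one (x i) with h' | h'
      · exact absurd h' h
      · simp [h, h']

lemma hammingNorm_finsetEquiv (s : Finset (Fin n)) :
    hammingNorm (finsetEquiv n s) = s.card := by
  have h : (Finset.univ.filter fun i => finsetEquiv n s i ≠ 0) = s := by
    ext i
    simp only [Finset.mem_filter, Finset.mem_univ, true_and, finsetEquiv, Equiv.coe_fn_mk]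
    by_cases h : i ∈ s <;> simp [h]
  show (Finset.univ.filter fun i => finsetEquiv n s i ≠ 0).card = s.card
  rw [h]

lemma sum_norm (g : ℕ → ℝ) :
    ∑ x : Fin n → ZMod 2, g (hammingNorm x)
      = ∑ k ∈ Finset.range (n + 1), (n.choose k : ℝ) * g k := by
  rw [← Equiv.sum_comp (finsetEquiv n) (fun x => g (hammingNorm x))]
  have h : ∀ s : Finset (Fin n), g (hammingNorm (finsetEquiv n s)) = g s.card := fun s => by
    rw [hammingNorm_finsetEquiv]
  rw [Finset.sum_congr rfl (fun s _ => h s)]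
  rw [← Finset.powerset_univ, Finset.sum_powerset_apply_card]
  simp [Finset.card_univ, nsmul_eq_mul]

lemma sum_trunc (hn : 4 ≤ n) (F : ℕ → ℝ) (hF : ∀ k, 5 ≤ k → F k = 0) :
    ∑ k ∈ Finset.range (n + 1), F k = ∑ k ∈ Finset.range 5, F k :=
  (Finset.sum_subset (Finset.range_subset_range.mpr (by omega))
    (fun k hk hk5 => hF k (by
      simp only [Finset.mem_range] at hk hk5; omega))).symm

lemma inner_self_pos {f : (Fin n → ZMod 2) → ℝ} (hf : f ≠ 0) : 0 < innerCube f f := by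
  obtain ⟨x, hx⟩ : ∃ x, f x ≠ 0 := by
    by_contra h
    push_neg at h
    exact hf (funext fun x => h x)
  refine Finset.sum_pos' (fun y _ => mul_self_nonneg _) ⟨x, Finset.mem_univ x, ?_⟩
  exact mul_self_pos.mpr hx

lemma inner_adj_le (f : (Fin n → ZMod 2) → ℝ) :
    innerCube (adjOp f) f ≤ (n : ℝ) * innerCube f f := by
  have hstep : innerCube (adjOp f) f
      = ∑ x : Fin n → ZMod 2, ∑ i : Fin n, f (flp x i) * f x := by
    refine Finset.sum_congr rfl fun x _ => ?_
    show (∑ y : Fin n → ZMod 2, if hammingDist x y = 1 then f y else 0) * f x = _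
    rw [sum_flp x f, Finset.sum_mul]
  have hsq : ∀ i : Fin n, ∑ x : Fin n → ZMod 2, f (flp x i) * f (flp x i)
      = ∑ x : Fin n → ZMod 2, f x * f x := fun i =>
    Fintype.sum_bijective (fun x => flp x i)
      (Function.Involutive.bijective (fun x => flp_flp x i)) _ _ (fun x => rfl)
  have hS : innerCube f f = ∑ x : Fin n → ZMod 2, f x * f x := rfl
  have hle : (2 : ℝ) * innerCube (adjOp f) f
      ≤ ∑ x : Fin n → ZMod 2, ∑ i : Fin n, (f (flp x i) * f (flp x i) + f x * f x) := by
    rw [hstep, Finset.mul_sum]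
    refine Finset.sum_le_sum fun x _ => ?_
    rw [Finset.mul_sum]
    refine Finset.sum_le_sum fun i _ => ?_
    nlinarith [sq_nonneg (f (flp x i) - f x)]
  have hsplit : ∑ x : Fin n → ZMod 2, ∑ i : Fin n, (f (flp x i) * f (flp x i) + f x * f x)
      = (∑ x : Fin n → ZMod 2, ∑ i : Fin n, f (flp x i) * f (flp x i))
        + ∑ x : Fin n → ZMod 2, ∑ i : Fin n, f x * f x := by
    rw [← Finset.sum_add_distrib]
    refine Finset.sum_congr rfl fun x _ => ?_
    rw [← Finset.sum_add_distrib]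
  have e2 : ∑ x : Fin n → ZMod 2, ∑ i : Fin n, f (flp x i) * f (flp x i)
      = (n : ℝ) * innerCube f f := by
    rw [Finset.sum_comm, Finset.sum_congr rfl fun i _ => hsq i, Finset.sum_const,
      Finset.card_univ, Fintype.card_fin, nsmul_eq_mul, hS]
  have e3 : ∑ x : Fin n → ZMod 2, ∑ i : Fin n, f x * f x
      = (n : ℝ) * innerCube f f := by
    rw [Finset.sum_congr rfl fun x _ => by
      rw [Finset.sum_const, Finset.card_univ, Fintype.card_fin, nsmul_eq_mul]]
    rw [← Finset.mul_sum, hS]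
  rw [hsplit, e2, e3] at hle
  linarith

lemma bddAbove_eigSet :
    BddAbove {r : ℝ | ∃ f : (Fin n → ZMod 2) → ℝ, f ≠ 0 ∧
      (∀ x, f x ≠ 0 → x ∈ hammingBall n 3) ∧
      r = innerCube (adjOp f) f / innerCube f f} := by
  refine ⟨(n : ℝ), fun r hr => ?_⟩
  obtain ⟨f, hf0, _, rfl⟩ := hr
  rw [div_le_iff₀ (inner_self_pos hf0)]
  have := inner_adj_le f
  linarith

/-- Coefficients of the test function. -/
noncomputable def cf (s q μ : ℝ) (k : ℕ) : ℝ :=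
  if k = 0 then s ^ 3 else if k = 1 then μ * s ^ 2 else if k = 2 then (2 + q) * s
    else if k = 3 then q * μ else 0

lemma cf_big (s q μ : ℝ) {k : ℕ} (h : 4 ≤ k) : cf s q μ k = 0 := by
  unfold cf
  rw [if_neg (by omega), if_neg (by omega), if_neg (by omega), if_neg (by omega)]

end EigBallAux

set_option maxHeartbeats 4000000 in
open EigBallAux in
theorem eig_ball_three :
    ∀ ε : ℝ, 0 < ε → ∃ N : ℕ, ∀ n : ℕ, N ≤ n →
      (∃ f : (Fin n → ZMod 2) → ℝ, f ≠ 0 ∧ (∀ x, f x ≠ 0 → hammingNorm x ≤ 3) ∧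
        innerCube (adjOp f) f ≥ (Real.sqrt (3 + Real.sqrt 6) - ε) * Real.sqrt n * innerCube f f) ∧
      maxEig (hammingBall n 3) ≥ (Real.sqrt (3 + Real.sqrt 6) - ε) * Real.sqrt n := by
  intro ε hε
  refine ⟨⌈7 / ε⌉₊ + 4, fun n hn => ?_⟩
  have hn4 : 4 ≤ n := by omega
  set q := Real.sqrt 6 with hqdef
  set μ := Real.sqrt (3 + q) with hμdef
  set s := Real.sqrt n with hsdef
  have hq0 : 0 ≤ q := Real.sqrt_nonneg _
  have hq2 : q ^ 2 = 6 := Real.sq_sqrt (by norm_num)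
  have hq_le : q ≤ 5 / 2 := by nlinarith
  have hq_ge : 2 ≤ q := by nlinarith
  have hμ0 : 0 ≤ μ := Real.sqrt_nonneg _
  have hμ2 : μ ^ 2 = 3 + q := Real.sq_sqrt (by linarith)
  have hμle : μ ≤ 12 / 5 := by nlinarith
  have hs0 : 0 ≤ s := Real.sqrt_nonneg _
  have hs2 : s ^ 2 = (n : ℝ) := Real.sq_sqrt (Nat.cast_nonneg n)
  have hn4' : (4 : ℝ) ≤ (n : ℝ) := by exact_mod_cast hn4
  have hs_ge : 2 ≤ s := by nlinarith
  have hs4 : 4 ≤ s ^ 2 := by nlinarith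
  have hεs : 7 ≤ ε * s ^ 2 := by
    have h1 : ⌈7 / ε⌉₊ ≤ n := by omega
    have h2 : 7 / ε ≤ (n : ℝ) := Nat.ceil_le.mp h1
    rw [div_le_iff₀ hε] at h2
    nlinarith [hs2]
  have hNn : ((n : ℕ) : ℝ) = s ^ 2 := hs2.symm
  have hC2 : ((n.choose 2 : ℕ) : ℝ) = s ^ 2 * (s ^ 2 - 1) / 2 := by
    rw [Nat.cast_choose_two, hNn]
  have hC3 : ((n.choose 3 : ℕ) : ℝ) = s ^ 2 * (s ^ 2 - 1) * (s ^ 2 - 2) / 6 := by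
    obtain ⟨m, hm⟩ : ∃ m, n = m + 4 := ⟨n - 4, by omega⟩
    have hdf : 6 * n.choose 3 = n.descFactorial 3 := by
      rw [Nat.descFactorial_eq_factorial_mul_choose]
      norm_num [Nat.factorial]
    have hdf2 : n.descFactorial 3 = (m + 2) * ((m + 3) * ((m + 4) * 1)) := by
      rw [hm]; rfl
    have hc : (6 : ℝ) * (n.choose 3 : ℝ) = ((m : ℝ) + 2) * (((m : ℝ) + 3) * (((m : ℝ) + 4) * 1)) := by
      exact_mod_cast congrArg (Nat.cast : ℕ → ℝ) (hdf.trans hdf2)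
    have hmr : (m : ℝ) = s ^ 2 - 4 := by
      rw [← hNn, hm]; push_cast; ring
    rw [hmr] at hc
    linarith [hc]
  -- the test function
  set f : (Fin n → ZMod 2) → ℝ := fun x => cf s q μ (hammingNorm x) with hfdef
  have hf0 : f ≠ 0 := by
    intro h
    have h0 : cf s q μ 0 = 0 := by
      simpa [hfdef, hammingNorm_zero] using congrFun h 0
    have hs3 : s ^ 3 = 0 := by simpa [cf] using h0
    nlinarith
  have hsupp : ∀ x, f x ≠ 0 → hammingNorm x ≤ 3 := by
    intro x hx
    by_contra hc
    push_neg at hc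
    exact hx (cf_big s q μ (by omega))
  -- closed forms
  have hff : innerCube f f
      = s ^ 2 * (s ^ 4 * (4 + q) + s ^ 2 * (s ^ 2 - 1) * (5 + 2 * q)
          + (s ^ 2 - 1) * (s ^ 2 - 2) * (3 + q)) := by
    have h : innerCube f f
        = ∑ k ∈ Finset.range (n + 1), (n.choose k : ℝ) * (cf s q μ k * cf s q μ k) :=
      sum_norm (fun k => cf s q μ k * cf s q μ k)
    rw [h, sum_trunc hn4 _ (fun k hk => by rw [cf_big s q μ (by omega : 4 ≤ k)]; ring)]
    simp only [Finset.sum_range_succ, Finset.sum_range_zero]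
    norm_num [cf]
    rw [hC2, hC3, hNn]
    linear_combination (s ^ 4 * (s ^ 2 - 1) / 2 + s ^ 2 * (s ^ 2 - 1) * (s ^ 2 - 2) / 6 * μ ^ 2) * hq2
      + (s ^ 6 + s ^ 2 * (s ^ 2 - 1) * (s ^ 2 - 2)) * hμ2
  have hAf : innerCube (adjOp f) f
      = s ^ 3 * (μ * (2 * s ^ 4 + 2 * s ^ 2 * (s ^ 2 - 1) * (2 + q)
          + (s ^ 2 - 1) * (s ^ 2 - 2) * (6 + 2 * q))) := by
    have hpt : ∀ x, adjOp f x * f x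
        = ((hammingNorm x : ℝ) * cf s q μ (hammingNorm x - 1)
            + ((n : ℝ) - (hammingNorm x : ℝ)) * cf s q μ (hammingNorm x + 1))
          * cf s q μ (hammingNorm x) := by
      intro x
      rw [hfdef]
      rw [adjOp_radial (cf s q μ) x]
    have h : innerCube (adjOp f) f
        = ∑ k ∈ Finset.range (n + 1), (n.choose k : ℝ)
            * (((fun (k : ℕ) => ((k : ℝ) * cf s q μ (k - 1)
              + ((n : ℝ) - (k : ℝ)) * cf s q μ (k + 1)) * cf s q μ k)) k) := by
      have h1 : innerCube (adjOp f) f = ∑ x : Fin n → ZMod 2,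
          ((fun (k : ℕ) => ((k : ℝ) * cf s q μ (k - 1)
            + ((n : ℝ) - (k : ℝ)) * cf s q μ (k + 1)) * cf s q μ k) (hammingNorm x)) :=
        Finset.sum_congr rfl (fun x _ => hpt x)
      rw [h1]
      exact sum_norm (n := n) (fun (k : ℕ) => ((k : ℝ) * cf s q μ (k - 1)
        + ((n : ℝ) - (k : ℝ)) * cf s q μ (k + 1)) * cf s q μ k)
    rw [h, sum_trunc hn4 _ (fun k hk => by
      simp [cf_big s q μ (show 4 ≤ k by omega)])]
    simp only [Finset.sum_range_succ, Finset.sum_range_zero]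
    norm_num [cf]
    rw [hC2, hC3, hNn]
    linear_combination (μ * s ^ 3 * (s ^ 2 - 1) * (s ^ 2 - 2)) * hq2
  -- the main inequality
  have hfin : 0 ≤ μ * (2 * s ^ 4 + 2 * s ^ 2 * (s ^ 2 - 1) * (2 + q)
      + (s ^ 2 - 1) * (s ^ 2 - 2) * (6 + 2 * q))
      - (μ - ε) * (s ^ 4 * (4 + q) + s ^ 2 * (s ^ 2 - 1) * (5 + 2 * q)
        + (s ^ 2 - 1) * (s ^ 2 - 2) * (3 + q)) := by
    have hkey : μ * (2 * s ^ 4 + 2 * s ^ 2 * (s ^ 2 - 1) * (2 + q)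
        + (s ^ 2 - 1) * (s ^ 2 - 2) * (6 + 2 * q))
        - μ * (s ^ 4 * (4 + q) + s ^ 2 * (s ^ 2 - 1) * (5 + 2 * q)
          + (s ^ 2 - 1) * (s ^ 2 - 2) * (3 + q))
        = μ * ((6 + 2 * q) - (8 + 3 * q) * s ^ 2) := by ring
    have hB : 6 * s ^ 4 ≤ s ^ 4 * (4 + q) + s ^ 2 * (s ^ 2 - 1) * (5 + 2 * q)
        + (s ^ 2 - 1) * (s ^ 2 - 2) * (3 + q) := by
      nlinarith [mul_nonneg (mul_nonneg (by nlinarith : (0:ℝ) ≤ s ^ 2)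
          (by nlinarith : (0:ℝ) ≤ s ^ 2 - 1)) (by linarith : (0:ℝ) ≤ 5 + 2 * q),
        mul_nonneg (mul_nonneg (by nlinarith : (0:ℝ) ≤ s ^ 2 - 1)
          (by nlinarith : (0:ℝ) ≤ s ^ 2 - 2)) (by linarith : (0:ℝ) ≤ 3 + q),
        mul_nonneg (mul_nonneg (sq_nonneg s) (sq_nonneg s)) (by linarith : (0:ℝ) ≤ q - 2)]
    have h38 : μ * (8 + 3 * q) ≤ 38 := by nlinarith
    have hεB : 42 * s ^ 2 ≤ ε * (s ^ 4 * (4 + q) + s ^ 2 * (s ^ 2 - 1) * (5 + 2 * q)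
        + (s ^ 2 - 1) * (s ^ 2 - 2) * (3 + q)) := by
      nlinarith [mul_le_mul_of_nonneg_left hB hε.le,
        mul_nonneg (by linarith : (0:ℝ) ≤ ε * s ^ 2 - 7) (sq_nonneg s)]
    nlinarith [hkey, hεB, h38, mul_nonneg hμ0 (by linarith : (0:ℝ) ≤ 6 + 2 * q),
      mul_nonneg (by linarith : (0:ℝ) ≤ 38 - μ * (8 + 3 * q)) (sq_nonneg s)]
  have hineq : innerCube (adjOp f) f ≥ (μ - ε) * s * innerCube f f := by
    rw [hff, hAf]
    nlinarith [mul_nonneg (pow_nonneg hs0 3) hfin]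
  have hpos : 0 < innerCube f f := inner_self_pos hf0
  constructor
  · exact ⟨f, hf0, hsupp, hineq⟩
  · have hmem : innerCube (adjOp f) f / innerCube f f ∈
        {r : ℝ | ∃ g : (Fin n → ZMod 2) → ℝ, g ≠ 0 ∧
          (∀ x, g x ≠ 0 → x ∈ hammingBall n 3) ∧
          r = innerCube (adjOp g) g / innerCube g g} := by
      refine ⟨f, hf0, fun x hx => ?_, rfl⟩
      simp only [hammingBall, Finset.mem_filter, Finset.mem_univ, true_and]
      exact hsupp x hx
    have hle : (μ - ε) * s ≤ innerCube (adjOp f) f / innerCube f f := by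
      rw [le_div_iff₀ hpos]
      exact hineq
    exact le_trans hle (le_csSup bddAbove_eigSet hmem)
end

section
/- There exist a constant K > 0 and an integer N such that for all n ≥ N, every binary (n, M, d) code with minimum distance d ≥ n/2 − √n satisfies M ≤ K · n^{7/2}. (Quantitatively, for sufficiently large n one has M ≤ (√n / (√(3 + √6) − 2)) · Vol(3, n).) -/
open Finset

/-- elementary symmetric sums of `ε` over `k`-subsets of `T` -/
private def EE {ι : Type*} (ε : ι → ℝ) (k : ℕ) (T : Finset ι) : ℝ :=
  ∑ S ∈ T.powersetCard k, ∏ i ∈ S, ε i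

private lemma EE_zero {ι : Type*} (ε : ι → ℝ) (T : Finset ι) : EE ε 0 T = 1 := by
  simp [EE, Finset.powersetCard_zero]

private lemma EE_empty {ι : Type*} (ε : ι → ℝ) (k : ℕ) : EE ε (k + 1) (∅ : Finset ι) = 0 := by
  rw [EE, Finset.powersetCard_eq_empty.mpr (by simp), Finset.sum_empty]

private lemma EE_insert {ι : Type*} [DecidableEq ι] (ε : ι → ℝ) {a : ι} {T : Finset ι}
    (ha : a ∉ T) (k : ℕ) :
    EE ε (k + 1) (insert a T) = EE ε (k + 1) T + ε a * EE ε k T := by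
  unfold EE
  rw [Finset.powersetCard_succ_insert ha, Finset.sum_union, Finset.sum_image]
  · congr 1
    rw [Finset.mul_sum]
    refine Finset.sum_congr rfl fun S hS => ?_
    have hS' : S ⊆ T := (Finset.mem_powersetCard.mp hS).1
    have haS : a ∉ S := fun h => ha (hS' h)
    rw [Finset.prod_insert haS]
  · intro S hS S' hS' h
    have haS : a ∉ S := fun hc => ha ((Finset.mem_powersetCard.mp hS).1 hc)
    have haS' : a ∉ S' := fun hc => ha ((Finset.mem_powersetCard.mp hS').1 hc)
    have := congrArg (Finset.erase · a) h
    simpa [Finset.erase_insert haS, Finset.erase_insert haS'] using this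
  · rw [Finset.disjoint_left]
    intro S hS hS2
    obtain ⟨S', _, rfl⟩ := Finset.mem_image.mp hS2
    exact ha ((Finset.mem_powersetCard.mp hS).1 (Finset.mem_insert_self a S'))

private lemma EE_formulas {ι : Type*} [DecidableEq ι] (ε : ι → ℝ) (T : Finset ι)
    (hε : ∀ i ∈ T, ε i = 1 ∨ ε i = -1) :
    (EE ε 1 T = (∑ i ∈ T, ε i)) ∧
    (EE ε 2 T = ((∑ i ∈ T, ε i) ^ 2 - (T.card : ℝ)) / 2) ∧
    (EE ε 3 T = ((∑ i ∈ T, ε i) ^ 3 - (3 * (T.card : ℝ) - 2) * (∑ i ∈ T, ε i)) / 6) ∧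
    (EE ε 4 T = ((∑ i ∈ T, ε i) ^ 4 - (6 * (T.card : ℝ) - 8) * (∑ i ∈ T, ε i) ^ 2
        + 3 * (T.card : ℝ) ^ 2 - 6 * (T.card : ℝ)) / 24) ∧
    (EE ε 5 T = ((∑ i ∈ T, ε i) ^ 5 - (10 * (T.card : ℝ) - 20) * (∑ i ∈ T, ε i) ^ 3
        + (15 * (T.card : ℝ) ^ 2 - 50 * (T.card : ℝ) + 24) * (∑ i ∈ T, ε i)) / 120) ∧
    (EE ε 6 T = ((∑ i ∈ T, ε i) ^ 6 - (15 * (T.card : ℝ) - 40) * (∑ i ∈ T, ε i) ^ 4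
        + (45 * (T.card : ℝ) ^ 2 - 210 * (T.card : ℝ) + 184) * (∑ i ∈ T, ε i) ^ 2
        - 15 * (T.card : ℝ) ^ 3 + 90 * (T.card : ℝ) ^ 2 - 120 * (T.card : ℝ)) / 720) ∧
    (EE ε 7 T = ((∑ i ∈ T, ε i) ^ 7 - (21 * (T.card : ℝ) - 70) * (∑ i ∈ T, ε i) ^ 5
        + (105 * (T.card : ℝ) ^ 2 - 630 * (T.card : ℝ) + 784) * (∑ i ∈ T, ε i) ^ 3
        + (-105 * (T.card : ℝ) ^ 3 + 840 * (T.card : ℝ) ^ 2 - 1764 * (T.card : ℝ) + 720)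
          * (∑ i ∈ T, ε i)) / 5040) := by
  induction T using Finset.induction_on with
  | empty => norm_num [EE_empty]
  | @insert a T ha IH =>
    obtain ⟨h1, h2, h3, h4, h5, h6, h7⟩ := IH (fun i hi => hε i (Finset.mem_insert_of_mem hi))
    have hea := hε a (Finset.mem_insert_self a T)
    have hcard : ((insert a T).card : ℝ) = (T.card : ℝ) + 1 := by
      rw [Finset.card_insert_of_notMem ha]; push_cast; ring
    have hsum : (∑ i ∈ insert a T, ε i) = ε a + ∑ i ∈ T, ε i := Finset.sum_insert ha
    have e1 : EE ε 1 (insert a T) = EE ε 1 T + ε a * EE ε 0 T := EE_insert ε ha 0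
    have e2 : EE ε 2 (insert a T) = EE ε 2 T + ε a * EE ε 1 T := EE_insert ε ha 1
    have e3 : EE ε 3 (insert a T) = EE ε 3 T + ε a * EE ε 2 T := EE_insert ε ha 2
    have e4 : EE ε 4 (insert a T) = EE ε 4 T + ε a * EE ε 3 T := EE_insert ε ha 3
    have e5 : EE ε 5 (insert a T) = EE ε 5 T + ε a * EE ε 4 T := EE_insert ε ha 4
    have e6 : EE ε 6 (insert a T) = EE ε 6 T + ε a * EE ε 5 T := EE_insert ε ha 5
    have e7 : EE ε 7 (insert a T) = EE ε 7 T + ε a * EE ε 6 T := EE_insert ε ha 6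
    rw [e1, e2, e3, e4, e5, e6, e7,
        EE_zero, h1, h2, h3, h4, h5, h6, h7, hcard, hsum]
    rcases hea with h | h <;> rw [h] <;>
      exact ⟨by ring, by ring, by ring, by ring, by ring, by ring, by ring⟩

private def sgn (a : ZMod 2) : ℝ := if a = 0 then 1 else -1

private lemma zmod2_cases (a : ZMod 2) : a = 0 ∨ a = 1 := by revert a; decide

private def epsf {n : ℕ} (x y : Fin n → ZMod 2) : Fin n → ℝ := fun i => sgn (x i) * sgn (y i)

private lemma epsf_pm {n : ℕ} (x y : Fin n → ZMod 2) (i : Fin n) :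
    epsf x y i = 1 ∨ epsf x y i = -1 := by
  unfold epsf sgn
  rcases zmod2_cases (x i) with h1 | h1 <;> rcases zmod2_cases (y i) with h2 | h2 <;>
    rw [h1, h2] <;> norm_num

private lemma epsf_ite {n : ℕ} (x y : Fin n → ZMod 2) (i : Fin n) :
    epsf x y i = if x i = y i then (1:ℝ) else -1 := by
  unfold epsf sgn
  rcases zmod2_cases (x i) with h1 | h1 <;> rcases zmod2_cases (y i) with h2 | h2 <;>
    rw [h1, h2] <;> norm_num

private lemma epsf_diag_sum {n : ℕ} (x : Fin n → ZMod 2) :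
    ∑ i, epsf x x i = (n : ℝ) := by
  have : ∀ i ∈ Finset.univ, epsf x x i = (1:ℝ) := fun i _ => by
    rw [epsf_ite]; simp
  rw [Finset.sum_congr rfl this]
  simp

private lemma epsf_sum_ham {n : ℕ} (x y : Fin n → ZMod 2) :
    ∑ i, epsf x y i = (n : ℝ) - 2 * hammingDist x y := by
  have h1 : ∀ i ∈ Finset.univ, epsf x y i
      = (1 : ℝ) - 2 * (if x i ≠ y i then (1:ℝ) else 0) := fun i _ => by
    rw [epsf_ite]
    by_cases h : x i = y i <;> simp [h] <;> norm_num
  rw [Finset.sum_congr rfl h1, Finset.sum_sub_distrib]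
  rw [← Finset.mul_sum, Finset.sum_boole, Finset.sum_const, Finset.card_univ, Fintype.card_fin]
  have : hammingDist x y = (Finset.univ.filter fun i => x i ≠ y i).card := rfl
  rw [this]
  simp

set_option maxHeartbeats 2000000 in
private lemma core (n : ℕ) (hn : 100 ≤ n) (d : ℕ) (C : Finset (Fin n → ZMod 2))
    (hmin : ∀ x ∈ C, ∀ y ∈ C, x ≠ y → d ≤ hammingDist x y)
    (hd : (n : ℝ) / 2 - Real.sqrt n ≤ d) :
    (C.card : ℝ) ≤ Real.sqrt n ^ 7 / 5 := by
  set r : ℝ := Real.sqrt n with hrdef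
  have hn0 : (0:ℝ) ≤ n := Nat.cast_nonneg n
  have hr2 : r ^ 2 = n := Real.sq_sqrt hn0
  have hr10 : (10:ℝ) ≤ r := by
    have h1 : Real.sqrt 100 ≤ r := Real.sqrt_le_sqrt (by exact_mod_cast hn)
    rwa [show (100:ℝ) = 10 ^ 2 by norm_num, Real.sqrt_sq (by norm_num : (0:ℝ) ≤ 10)] at h1
  have hu : (0:ℝ) ≤ r - 10 := by linarith
  -- the seven positivity facts
  have hpos : ∀ k : ℕ, 0 ≤ ∑ x ∈ C, ∑ y ∈ C, EE (epsf x y) k Finset.univ := by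
    intro k
    have swap : ∀ x y : Fin n → ZMod 2, EE (epsf x y) k Finset.univ
        = ∑ S ∈ (Finset.univ : Finset (Fin n)).powersetCard k,
            (∏ i ∈ S, sgn (x i)) * (∏ i ∈ S, sgn (y i)) := by
      intro x y
      exact Finset.sum_congr rfl fun S _ => by rw [← Finset.prod_mul_distrib]; rfl
    have key : ∑ x ∈ C, ∑ y ∈ C, EE (epsf x y) k Finset.univ
        = ∑ S ∈ (Finset.univ : Finset (Fin n)).powersetCard k,
            (∑ x ∈ C, ∏ i ∈ S, sgn (x i)) ^ 2 := by
      calc ∑ x ∈ C, ∑ y ∈ C, EE (epsf x y) k Finset.univ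
          = ∑ x ∈ C, ∑ y ∈ C, ∑ S ∈ (Finset.univ : Finset (Fin n)).powersetCard k,
              (∏ i ∈ S, sgn (x i)) * (∏ i ∈ S, sgn (y i)) := by
            exact Finset.sum_congr rfl fun x _ => Finset.sum_congr rfl fun y _ => swap x y
        _ = ∑ x ∈ C, ∑ S ∈ (Finset.univ : Finset (Fin n)).powersetCard k,
              ∑ y ∈ C, (∏ i ∈ S, sgn (x i)) * (∏ i ∈ S, sgn (y i)) := by
            exact Finset.sum_congr rfl fun x _ => Finset.sum_comm
        _ = ∑ S ∈ (Finset.univ : Finset (Fin n)).powersetCard k,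
              ∑ x ∈ C, ∑ y ∈ C, (∏ i ∈ S, sgn (x i)) * (∏ i ∈ S, sgn (y i)) := Finset.sum_comm
        _ = ∑ S ∈ (Finset.univ : Finset (Fin n)).powersetCard k,
              (∑ x ∈ C, ∏ i ∈ S, sgn (x i)) ^ 2 := by
            refine Finset.sum_congr rfl fun S _ => ?_
            rw [sq, Finset.sum_mul_sum]
    rw [key]
    positivity
  -- the key pointwise identity
  have card_univ' : (((Finset.univ : Finset (Fin n)).card : ℝ)) = (n:ℝ) := by
    rw [Finset.card_univ, Fintype.card_fin]
  have key : ∀ x y : Fin n → ZMod 2,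
      ((∑ i, epsf x y i) - 2*r) * ((∑ i, epsf x y i)^3 + (9/2)*r*(∑ i, epsf x y i)^2
          + 3*r^2*(∑ i, epsf x y i) - (3/2)*r^3)^2
      = (15*r^7 - 153*r^5 + 112*r^3)
        + ((183/2)*r^6 - (1125/2)*r^4 + 720*r^2 - 272) * EE (epsf x y) 1 Finset.univ
        + (288*r^5 - 1644*r^3 + 1904*r) * EE (epsf x y) 2 Finset.univ
        + (810*r^4 - 3930*r^2 + 3696) * EE (epsf x y) 3 Finset.univ
        + (1836*r^3 - 6720*r) * EE (epsf x y) 4 Finset.univ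
        + (3510*r^2 - 8400) * EE (epsf x y) 5 Finset.univ
        + (5040*r) * EE (epsf x y) 6 Finset.univ
        + 5040 * EE (epsf x y) 7 Finset.univ := by
    intro x y
    obtain ⟨q1, q2, q3, q4, q5, q6, q7⟩ :=
      EE_formulas (epsf x y) Finset.univ (fun i _ => epsf_pm x y i)
    rw [q1, q2, q3, q4, q5, q6, q7, card_univ', ← hr2]
    ring
  -- sum the identity over C × C
  have big : (15*r^7 - 153*r^5 + 112*r^3) * (C.card:ℝ) * (C.card:ℝ)
      ≤ ∑ x ∈ C, ∑ y ∈ C, ((∑ i, epsf x y i) - 2*r) * ((∑ i, epsf x y i)^3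
          + (9/2)*r*(∑ i, epsf x y i)^2 + 3*r^2*(∑ i, epsf x y i) - (3/2)*r^3)^2 := by
    have expand : ∑ x ∈ C, ∑ y ∈ C, ((∑ i, epsf x y i) - 2*r) * ((∑ i, epsf x y i)^3
          + (9/2)*r*(∑ i, epsf x y i)^2 + 3*r^2*(∑ i, epsf x y i) - (3/2)*r^3)^2
        = (15*r^7 - 153*r^5 + 112*r^3) * (C.card:ℝ) * (C.card:ℝ)
          + ((183/2)*r^6 - (1125/2)*r^4 + 720*r^2 - 272) * (∑ x ∈ C, ∑ y ∈ C, EE (epsf x y) 1 Finset.univ)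
          + (288*r^5 - 1644*r^3 + 1904*r) * (∑ x ∈ C, ∑ y ∈ C, EE (epsf x y) 2 Finset.univ)
          + (810*r^4 - 3930*r^2 + 3696) * (∑ x ∈ C, ∑ y ∈ C, EE (epsf x y) 3 Finset.univ)
          + (1836*r^3 - 6720*r) * (∑ x ∈ C, ∑ y ∈ C, EE (epsf x y) 4 Finset.univ)
          + (3510*r^2 - 8400) * (∑ x ∈ C, ∑ y ∈ C, EE (epsf x y) 5 Finset.univ)
          + (5040*r) * (∑ x ∈ C, ∑ y ∈ C, EE (epsf x y) 6 Finset.univ)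
          + 5040 * (∑ x ∈ C, ∑ y ∈ C, EE (epsf x y) 7 Finset.univ) := by
      rw [Finset.sum_congr rfl fun x (_ : x ∈ C) =>
        Finset.sum_congr rfl fun y (_ : y ∈ C) => key x y]
      simp only [Finset.sum_add_distrib, Finset.sum_const, nsmul_eq_mul, ← Finset.mul_sum]
      ring
    have n1 : 0 ≤ ((183/2)*r^6 - (1125/2)*r^4 + 720*r^2 - 272) * (∑ x ∈ C, ∑ y ∈ C, EE (epsf x y) 1 Finset.univ) := by
      refine mul_nonneg (by nlinarith [pow_nonneg hu 2, pow_nonneg hu 3, pow_nonneg hu 4, pow_nonneg hu 5, pow_nonneg hu 6]) (hpos 1)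
    have n2 : 0 ≤ (288*r^5 - 1644*r^3 + 1904*r) * (∑ x ∈ C, ∑ y ∈ C, EE (epsf x y) 2 Finset.univ) := by
      refine mul_nonneg (by nlinarith [pow_nonneg hu 2, pow_nonneg hu 3, pow_nonneg hu 4, pow_nonneg hu 5]) (hpos 2)
    have n3 : 0 ≤ (810*r^4 - 3930*r^2 + 3696) * (∑ x ∈ C, ∑ y ∈ C, EE (epsf x y) 3 Finset.univ) := by
      refine mul_nonneg (by nlinarith [pow_nonneg hu 2, pow_nonneg hu 3, pow_nonneg hu 4]) (hpos 3)
    have n4 : 0 ≤ (1836*r^3 - 6720*r) * (∑ x ∈ C, ∑ y ∈ C, EE (epsf x y) 4 Finset.univ) := by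
      refine mul_nonneg (by nlinarith [pow_nonneg hu 2, pow_nonneg hu 3]) (hpos 4)
    have n5 : 0 ≤ (3510*r^2 - 8400) * (∑ x ∈ C, ∑ y ∈ C, EE (epsf x y) 5 Finset.univ) := by
      refine mul_nonneg (by nlinarith [pow_nonneg hu 2]) (hpos 5)
    have n6 : 0 ≤ (5040*r) * (∑ x ∈ C, ∑ y ∈ C, EE (epsf x y) 6 Finset.univ) := by
      refine mul_nonneg (by nlinarith) (hpos 6)
    have n7 : 0 ≤ (5040:ℝ) * (∑ x ∈ C, ∑ y ∈ C, EE (epsf x y) 7 Finset.univ) := by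
      refine mul_nonneg (by norm_num) (hpos 7)
    linarith [expand.ge, n1, n2, n3, n4, n5, n6, n7]
  -- diagonal bound
  have small : ∑ x ∈ C, ∑ y ∈ C, ((∑ i, epsf x y i) - 2*r) * ((∑ i, epsf x y i)^3
          + (9/2)*r*(∑ i, epsf x y i)^2 + 3*r^2*(∑ i, epsf x y i) - (3/2)*r^3)^2
      ≤ (C.card : ℝ) * ((r^2 - 2*r) * (r^6 + (9/2)*r^5 + 3*r^4 - (3/2)*r^3)^2) := by
    have hrow : ∀ x ∈ C, ∑ y ∈ C, ((∑ i, epsf x y i) - 2*r) * ((∑ i, epsf x y i)^3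
          + (9/2)*r*(∑ i, epsf x y i)^2 + 3*r^2*(∑ i, epsf x y i) - (3/2)*r^3)^2
        ≤ (r^2 - 2*r) * (r^6 + (9/2)*r^5 + 3*r^4 - (3/2)*r^3)^2 := by
      intro x hx
      rw [← Finset.add_sum_erase C _ hx]
      have hdiag : ((∑ i, epsf x x i) - 2*r) * ((∑ i, epsf x x i)^3
          + (9/2)*r*(∑ i, epsf x x i)^2 + 3*r^2*(∑ i, epsf x x i) - (3/2)*r^3)^2
          = (r^2 - 2*r) * (r^6 + (9/2)*r^5 + 3*r^4 - (3/2)*r^3)^2 := by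
        rw [epsf_diag_sum, ← hr2]; ring
      have hneg : ∑ y ∈ C.erase x, ((∑ i, epsf x y i) - 2*r) * ((∑ i, epsf x y i)^3
          + (9/2)*r*(∑ i, epsf x y i)^2 + 3*r^2*(∑ i, epsf x y i) - (3/2)*r^3)^2 ≤ 0 := by
        refine Finset.sum_nonpos fun y hy => ?_
        have hyC : y ∈ C := Finset.mem_of_mem_erase hy
        have hxy : x ≠ y := fun h => (Finset.ne_of_mem_erase hy) h.symm
        have hdle : (d:ℝ) ≤ hammingDist x y := by exact_mod_cast hmin x hx y hyC hxy
        have hsle : (∑ i, epsf x y i) ≤ 2*r := by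
          rw [epsf_sum_ham]; linarith
        exact mul_nonpos_of_nonpos_of_nonneg (by linarith) (sq_nonneg _)
      linarith [hdiag]
    calc ∑ x ∈ C, ∑ y ∈ C, ((∑ i, epsf x y i) - 2*r) * ((∑ i, epsf x y i)^3
          + (9/2)*r*(∑ i, epsf x y i)^2 + 3*r^2*(∑ i, epsf x y i) - (3/2)*r^3)^2
        ≤ ∑ _x ∈ C, (r^2 - 2*r) * (r^6 + (9/2)*r^5 + 3*r^4 - (3/2)*r^3)^2 :=
          Finset.sum_le_sum hrow
      _ = (C.card : ℝ) * ((r^2 - 2*r) * (r^6 + (9/2)*r^5 + 3*r^4 - (3/2)*r^3)^2) := by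
          rw [Finset.sum_const, nsmul_eq_mul]
  -- combine
  rcases Nat.eq_zero_or_pos C.card with h0 | hM
  · rw [h0]; push_cast; positivity
  · have hMpos : (0:ℝ) < C.card := by exact_mod_cast hM
    have hc0pos : (0:ℝ) < 15*r^7 - 153*r^5 + 112*r^3 := by
      nlinarith [pow_nonneg hu 2, pow_nonneg hu 3, pow_nonneg hu 4, pow_nonneg hu 5,
        pow_nonneg hu 6, pow_nonneg hu 7]
    have step1 : (15*r^7 - 153*r^5 + 112*r^3) * (C.card:ℝ)
        ≤ (r^2 - 2*r) * (r^6 + (9/2)*r^5 + 3*r^4 - (3/2)*r^3)^2 := by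
      have h2 : ((15*r^7 - 153*r^5 + 112*r^3) * (C.card:ℝ)) * (C.card:ℝ)
          ≤ ((r^2 - 2*r) * (r^6 + (9/2)*r^5 + 3*r^4 - (3/2)*r^3)^2) * (C.card:ℝ) := by
        nlinarith [le_trans big small]
      exact le_of_mul_le_mul_right h2 hMpos
    have step2 : (r^2 - 2*r) * (r^6 + (9/2)*r^5 + 3*r^4 - (3/2)*r^3)^2
        ≤ r^7/5 * (15*r^7 - 153*r^5 + 112*r^3) := by
      rw [← sub_nonneg]
      have cert : r^7/5 * (15*r^7 - 153*r^5 + 112*r^3)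
          - (r^2 - 2*r) * (r^6 + (9/2)*r^5 + 3*r^4 - (3/2)*r^3)^2
          = 94747020000000 + 146262411500000*(r-10) + 103662992450000*(r-10)^2 + 44793018175000*(r-10)^3 + 13201689982500*(r-10)^4 + 2810461355450*(r-10)^5 + 446056533615*(r-10)^6 + (107308232769/2)*(r-10)^7 + (19671328119/4)*(r-10)^8 + 341967240*(r-10)^9 + (177647999/10)*(r-10)^10 + (1337533/2)*(r-10)^11 + (345023/20)*(r-10)^12 + 273*(r-10)^13 + 2*(r-10)^14 := by ring
      rw [cert]
      have p2 := pow_nonneg hu 2; have p3 := pow_nonneg hu 3; have p4 := pow_nonneg hu 4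
      have p5 := pow_nonneg hu 5; have p6 := pow_nonneg hu 6; have p7 := pow_nonneg hu 7
      have p8 := pow_nonneg hu 8; have p9 := pow_nonneg hu 9; have p10 := pow_nonneg hu 10
      have p11 := pow_nonneg hu 11; have p12 := pow_nonneg hu 12; have p13 := pow_nonneg hu 13
      have p14 := pow_nonneg hu 14
      linarith
    have step3 : (15*r^7 - 153*r^5 + 112*r^3) * (C.card:ℝ)
        ≤ (15*r^7 - 153*r^5 + 112*r^3) * (r^7/5) := by
      calc (15*r^7 - 153*r^5 + 112*r^3) * (C.card:ℝ)
          ≤ r^7/5 * (15*r^7 - 153*r^5 + 112*r^3) := le_trans step1 step2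
        _ = (15*r^7 - 153*r^5 + 112*r^3) * (r^7/5) := by ring
    exact le_of_mul_le_mul_left step3 hc0pos

private lemma vol_cube (n : ℕ) (hn : 100 ≤ n) :
    n ^ 3 ≤ 10 * (∑ i ∈ Finset.range 4, n.choose i) := by
  have hd : n.descFactorial 3 = 6 * n.choose 3 := by
    rw [Nat.descFactorial_eq_factorial_mul_choose]
    norm_num [Nat.factorial]
  have hd2 : n.descFactorial 3 = (n - 2) * ((n - 1) * (n * 1)) := rfl
  have hsum : n.choose 3 ≤ ∑ i ∈ Finset.range 4, n.choose i := by
    simp [Finset.sum_range_succ]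
  obtain ⟨m, rfl⟩ := Nat.le.dest hn
  have e1 : 100 + m - 1 = 99 + m := by omega
  have e2 : 100 + m - 2 = 98 + m := by omega
  rw [e1, e2] at hd2
  have h61 : 6 * ((100 + m) ^ 3) ≤ 6 * (10 * (100 + m).choose 3) := by
    calc 6 * ((100 + m) ^ 3) ≤ 10 * ((98 + m) * ((99 + m) * ((100 + m) * 1))) := by
          nlinarith [Nat.zero_le m]
      _ = 10 * (6 * (100 + m).choose 3) := by rw [← hd2, hd]
      _ = 6 * (10 * (100 + m).choose 3) := by ring
  have h62 := Nat.le_of_mul_le_mul_left h61 (by norm_num : 0 < 6)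
  exact h62.trans (Nat.mul_le_mul_left 10 hsum)

/-- Codes with minimum distance `d ≥ n/2 - √n` have size `O(n^{7/2})`; quantitatively,
for sufficiently large `n`, `M ≤ (√n / (√(3+√6) - 2)) · Vol(3, n)`. -/
theorem upper_bound_sqrt_n :
    (∃ K : ℝ, 0 < K ∧ ∃ N : ℕ, ∀ n : ℕ, N ≤ n →
      ∀ d : ℕ, ∀ C : Finset (Fin n → ZMod 2),
        (∀ x ∈ C, ∀ y ∈ C, x ≠ y → d ≤ hammingDist x y) →
        ((n : ℝ) / 2 - Real.sqrt n ≤ d) →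
        (C.card : ℝ) ≤ K * (n : ℝ) ^ ((7 : ℝ) / 2)) ∧
    (∃ N : ℕ, ∀ n : ℕ, N ≤ n →
      ∀ d : ℕ, ∀ C : Finset (Fin n → ZMod 2),
        (∀ x ∈ C, ∀ y ∈ C, x ≠ y → d ≤ hammingDist x y) →
        ((n : ℝ) / 2 - Real.sqrt n ≤ d) →
        (C.card : ℝ) ≤ (Real.sqrt n / (Real.sqrt (3 + Real.sqrt 6) - 2)) *
          (∑ i ∈ Finset.range 4, (n.choose i : ℝ))) := by
  constructor
  · refine ⟨1, one_pos, 100, fun n hn d C hmin hd => ?_⟩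
    have hcore := core n hn d C hmin hd
    have hn0 : (0:ℝ) ≤ n := Nat.cast_nonneg n
    have hrp : (n:ℝ) ^ ((7:ℝ)/2) = Real.sqrt n ^ 7 := by
      rw [Real.sqrt_eq_rpow, ← Real.rpow_natCast ((n:ℝ) ^ ((1:ℝ)/2)) 7, ← Real.rpow_mul hn0]
      norm_num
    rw [one_mul, hrp]
    have h7 : (0:ℝ) ≤ Real.sqrt n ^ 7 := by positivity
    linarith
  · refine ⟨100, fun n hn d C hmin hd => ?_⟩
    have hcore := core n hn d C hmin hd
    set r : ℝ := Real.sqrt n with hrdef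
    set V : ℝ := ∑ i ∈ Finset.range 4, (n.choose i : ℝ) with hVdef
    set γ : ℝ := Real.sqrt (3 + Real.sqrt 6) with hγdef
    have hn0 : (0:ℝ) ≤ n := Nat.cast_nonneg n
    have hr2 : r ^ 2 = n := Real.sq_sqrt hn0
    have hrnn : (0:ℝ) ≤ r := Real.sqrt_nonneg _
    have hVnn : (0:ℝ) ≤ V := by
      rw [hVdef]; positivity
    have hV : (n:ℝ) ^ 3 ≤ 10 * V := by
      have := vol_cube n hn
      rw [hVdef]
      push_cast
      exact_mod_cast this
    have h6sq : Real.sqrt 6 ^ 2 = 6 := Real.sq_sqrt (by norm_num)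
    have h6nn : (0:ℝ) ≤ Real.sqrt 6 := Real.sqrt_nonneg _
    have h6u : Real.sqrt 6 ≤ 13/4 := by nlinarith
    have h6l : (2:ℝ) ≤ Real.sqrt 6 := by nlinarith
    have hγsq : γ ^ 2 = 3 + Real.sqrt 6 := Real.sq_sqrt (by linarith)
    have hγnn : (0:ℝ) ≤ γ := Real.sqrt_nonneg _
    have hγu : γ ≤ 5/2 := by nlinarith
    have hγl : (2:ℝ) < γ := by nlinarith
    have hγpos : (0:ℝ) < γ - 2 := by linarith
    have hMnn : (0:ℝ) ≤ (C.card : ℝ) := Nat.cast_nonneg _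
    rw [div_mul_eq_mul_div, le_div_iff₀ hγpos]
    have e1 : (C.card:ℝ) * (γ - 2) ≤ (C.card:ℝ) * (1/2) :=
      mul_le_mul_of_nonneg_left (by linarith) hMnn
    have e3 : r ^ 7 = r * (n:ℝ)^3 := by rw [← hr2]; ring
    have e4 : r * (n:ℝ)^3 ≤ r * (10 * V) := mul_le_mul_of_nonneg_left hV hrnn
    linarith
end

section
/- There exist a constant K > 0 and an integer N such that for all n ≥ N, every binary (n, M, d) code with minimum distance d ≥ n/2 − 2√n satisfies M ≤ K · n^{15/2}. (Quantitatively, for sufficiently large n one has M ≤ (√n / (4.14 − 4)) · Vol(7, n).) -/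
/-!
Delsarte's linear programming bound. Send a binary word `x` to the sign vector `v_x ∈ {±1}ⁿ`, so
that `⟨v_x, v_y⟩ = n - 2 d(x, y) ≤ 4√n` for distinct codewords. The `k`-th elementary symmetric
polynomial of the coordinatewise product `v_x v_y` is a polynomial `K_k` in `⟨v_x, v_y⟩` (and `n`),
and `∑_{x, y ∈ C} K_k(⟨v_x, v_y⟩) = ∑_{|S| = k} (∑_{x ∈ C} ∏_{i ∈ S} v_x i)² ≥ 0`, which equals
`|C|²` for `k = 0`. Hence if `f = ∑ h_k K_k` with all `h_k ≥ 0` and `f ≤ 0` on the inner products of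
distinct codewords, then `h_0 |C|² ≤ ∑_{x, y ∈ C} f(⟨v_x, v_y⟩) ≤ |C| f(n)`.
We use `f(s) = (s - 4√n) g(s)²` for an explicit `g` of degree 7 whose coefficients, like the
`h_k`, are polynomials in `√n`; for `n ≥ 100` one checks `f(n) / h_0 ≤ (50/7) √n (n - 6)⁷ / 7!`,
and `(n - 6)⁷ / 7! ≤ C(n, 7)`.
-/

open Finset
open scoped Nat

namespace Multiset

variable {R : Type*} [CommSemiring R]

theorem esymm_zero_right (s : Multiset R) : s.esymm 0 = 1 := by
  simp [esymm, powersetCard_zero_left]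

theorem esymm_zero_succ (k : ℕ) : (0 : Multiset R).esymm (k + 1) = 0 := by
  simp [esymm, powersetCard_zero_right]

theorem esymm_cons_succ (a : R) (s : Multiset R) (k : ℕ) :
    (a ::ₘ s).esymm (k + 1) = s.esymm (k + 1) + a * s.esymm k := by
  simp [esymm, powersetCard_cons, map_map, sum_map_mul_left]

end Multiset

/-- `signEsymm k s m` is the value of the `k`-th elementary symmetric polynomial at any `m` signs
`±1` with sum `s` (a Krawtchouk polynomial in disguise). The recursion is the identity
`e₁ e_{k+1} = (k + 2) e_{k+2} + (m - k) e_k`, valid because the squares of signs are `1`. -/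
noncomputable def signEsymm : ℕ → ℝ → ℝ → ℝ
  | 0, _, _ => 1
  | 1, s, _ => s
  | k + 2, s, m => (s * signEsymm (k + 1) s m - (m - k) * signEsymm k s m) / (k + 2)

theorem signEsymm_succ_zero_zero : ∀ k, signEsymm (k + 1) 0 0 = 0
  | 0 => rfl
  | 1 => by norm_num [signEsymm]
  | k + 2 => by
    rw [signEsymm, signEsymm_succ_zero_zero k]
    ring

theorem signEsymm_rec (k : ℕ) (s m : ℝ) :
    (k + 2) * signEsymm (k + 2) s m = s * signEsymm (k + 1) s m - (m - k) * signEsymm k s m := by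
  rw [signEsymm]
  field_simp

theorem signEsymm_succ_add {e : ℝ} (he : e ^ 2 = 1) (s m : ℝ) :
    ∀ k, signEsymm (k + 1) (s + e) (m + 1) = signEsymm (k + 1) s m + e * signEsymm k s m
  | 0 => by simp [signEsymm]
  | 1 => by
    simp only [signEsymm]
    linear_combination he / 2
  | k + 2 => by
    have step := signEsymm_rec (k + 1) (s + e) (m + 1)
    rw [signEsymm_succ_add he s m (k + 1), signEsymm_succ_add he s m k] at step
    have h₁ := signEsymm_rec (k + 1) s m
    have h₀ := signEsymm_rec k s m
    push_cast at step h₁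
    have hk : (k : ℝ) + 3 ≠ 0 := by positivity
    apply mul_left_cancel₀ hk
    linear_combination step - h₁ - e * h₀ + signEsymm (k + 1) s m * he

theorem Multiset.esymm_eq_signEsymm (s : Multiset ℝ) (hs : ∀ x ∈ s, x ^ 2 = 1) (k : ℕ) :
    s.esymm k = signEsymm k s.sum (card s) := by
  induction s using Multiset.induction_on generalizing k with
  | empty =>
    cases k with
    | zero => simp [esymm_zero_right, signEsymm]
    | succ k => simp [esymm_zero_succ, signEsymm_succ_zero_zero]
  | cons a s ih =>
    have ha : a ^ 2 = 1 := hs a (mem_cons_self a s)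
    have ih := ih fun x hx ↦ hs x (mem_cons_of_mem hx)
    cases k with
    | zero => simp [esymm_zero_right, signEsymm]
    | succ k =>
      rw [esymm_cons_succ, ih, ih, sum_cons, card_cons, Nat.cast_succ, add_comm a,
        signEsymm_succ_add ha]

theorem signEsymm_natCast_self (m k : ℕ) : signEsymm k m m = m.choose k := by
  have h := Multiset.esymm_eq_signEsymm ((range m).val.map fun _ ↦ (1 : ℝ))
    (fun x hx ↦ by obtain ⟨_, _, rfl⟩ := Multiset.mem_map.1 hx; norm_num) k
  rw [Finset.esymm_map_val] at h
  simpa using h.symm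

section Delsarte

variable {ι α : Type*} [Fintype α] {v : ι → α → ℝ}

theorem sum_signEsymm_inner_eq_sum_sq (hv : ∀ x i, v x i ^ 2 = 1) (C : Finset ι) (k : ℕ) :
    ∑ x ∈ C, ∑ y ∈ C, signEsymm k (∑ i, v x i * v y i) (Fintype.card α) =
      ∑ S ∈ univ.powersetCard k, (∑ x ∈ C, ∏ i ∈ S, v x i) ^ 2 := by
  have hpair : ∀ x y, signEsymm k (∑ i, v x i * v y i) (Fintype.card α) =
      ∑ S ∈ univ.powersetCard k, (∏ i ∈ S, v x i) * ∏ i ∈ S, v y i := by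
    intro x y
    have hsq : ∀ z ∈ univ.val.map (fun i ↦ v x i * v y i), z ^ 2 = 1 := by
      simp only [Multiset.mem_map, mem_val, mem_univ, true_and, forall_exists_index]
      rintro _ i rfl
      rw [mul_pow, hv, hv, one_mul]
    have := Multiset.esymm_eq_signEsymm _ hsq k
    rw [Finset.esymm_map_val, Multiset.card_map, card_val, card_univ] at this
    simp_rw [← prod_mul_distrib]
    exact this.symm
  simp_rw [hpair, sq, sum_mul_sum]
  exact (sum_congr rfl fun x _ ↦ sum_comm).trans sum_comm

theorem sum_mul_self_eq_card (hv : ∀ x i, v x i ^ 2 = 1) (x : ι) :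
    ∑ i, v x i * v x i = Fintype.card α := by
  simp [← sq, hv]

/-- Delsarte's linear programming bound. -/
theorem mul_card_le_of_eq_sum_signEsymm (hv : ∀ x i, v x i ^ 2 = 1) {C : Finset ι}
    {f : ℝ → ℝ} {h : ℕ → ℝ} {K : ℕ} (hK : 0 < K) (hh : ∀ k < K, 0 ≤ h k)
    (hf : ∀ s, f s = ∑ k ∈ range K, h k * signEsymm k s (Fintype.card α))
    (hC : ∀ x ∈ C, ∀ y ∈ C, x ≠ y → f (∑ i, v x i * v y i) ≤ 0) :
    h 0 * #C ≤ f (Fintype.card α) := by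
  classical
  have hexpand : ∑ x ∈ C, ∑ y ∈ C, f (∑ i, v x i * v y i) =
      ∑ k ∈ range K, h k * ∑ S ∈ univ.powersetCard k, (∑ x ∈ C, ∏ i ∈ S, v x i) ^ 2 := by
    simp_rw [hf, ← sum_signEsymm_inner_eq_sum_sq hv, mul_sum]
    exact (sum_congr rfl fun x _ ↦ sum_comm).trans sum_comm
  have hlower : h 0 * (#C : ℝ) ^ 2 ≤ ∑ x ∈ C, ∑ y ∈ C, f (∑ i, v x i * v y i) := by
    rw [hexpand]
    refine (single_le_sum (fun k hk ↦ mul_nonneg (hh k (mem_range.1 hk))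
      (sum_nonneg fun S _ ↦ sq_nonneg _)) (mem_range.2 hK)).trans_eq' ?_
    simp
  have hupper : ∑ x ∈ C, ∑ y ∈ C, f (∑ i, v x i * v y i) ≤ #C * f (Fintype.card α) := by
    rw [← nsmul_eq_mul, ← sum_const]
    refine sum_le_sum fun x hx ↦ ?_
    rw [← add_sum_erase C _ hx, sum_mul_self_eq_card hv]
    refine add_le_of_nonpos_right (sum_nonpos fun y hy ↦ ?_)
    exact hC x hx y (mem_erase.1 hy).2 (mem_erase.1 hy).1.symm
  rcases (#C).eq_zero_or_pos with hC₀ | hC₀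
  · rw [hC₀, Nat.cast_zero, mul_zero, hf]
    exact sum_nonneg fun k hk ↦ mul_nonneg (hh k (mem_range.1 hk))
      (signEsymm_natCast_self _ k ▸ Nat.cast_nonneg _)
  · refine le_of_mul_le_mul_left ?_ (Nat.cast_pos.2 hC₀)
    linarith

end Delsarte

section SignVector

variable {α : Type*}

noncomputable def signVec (x : α → ZMod 2) (i : α) : ℝ := (-1) ^ (x i).val

theorem signVec_sq (x : α → ZMod 2) (i : α) : signVec x i ^ 2 = 1 := by
  rw [signVec, ← pow_mul, mul_comm, pow_mul, neg_one_sq, one_pow]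

theorem signVec_mul_signVec (x y : α → ZMod 2) (i : α) :
    signVec x i * signVec y i = 1 - 2 * if x i ≠ y i then 1 else 0 := by
  have h01 : ∀ a : ZMod 2, a = 0 ∨ a = 1 := by decide
  rcases h01 (x i) with hx | hx <;> rcases h01 (y i) with hy | hy <;>
    norm_num [signVec, hx, hy, ZMod.val_one]

theorem sum_signVec_mul_signVec [Fintype α] (x y : α → ZMod 2) :
    ∑ i, signVec x i * signVec y i = Fintype.card α - 2 * hammingDist x y := by
  simp_rw [signVec_mul_signVec, sum_sub_distrib, ← mul_sum, sum_boole]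
  simp [hammingDist]

end SignVector

/- Found by computer: `lpWeight j u` are the coefficients of `g` in `f(s) = (s - 4u) g(s)²`, where
`u = √n`, and `lpCoeff k u` are those of `f` in the basis `signEsymm k · (u²)`. -/
noncomputable def lpWeight : ℕ → ℝ → ℝ
  | 0, u => u ^ 14
  | 1, u => 4 * u ^ 13
  | 2, u => 15 * u ^ 12
  | 3, u => 52 * u ^ 11 + 8 * u ^ 9
  | 4, u => 163 * u ^ 10 + 122 * u ^ 8
  | 5, u => 444 * u ^ 9 + 1080 * u ^ 7 + 96 * u ^ 5
  | 6, u => 961 * u ^ 8 + 6970 * u ^ 6 + 2824 * u ^ 4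
  | 7, u => 1180 * u ^ 7 + 34720 * u ^ 5 + 43120 * u ^ 3 + 2880 * u
  | _, _ => 0

noncomputable def lpCoeff : ℕ → ℝ → ℝ
  | 0, u => (13157/28) * u ^ 29 + (-319009/12) * u ^ 27 + (-9128279/12) * u ^ 25 + (1023097835/84) * u ^ 23 + (-358595945/6) * u ^ 21 + (241098199/3) * u ^ 19 + (688028114/3) * u ^ 17 + (-2192058880/3) * u ^ 15 + (545984080/3) * u ^ 13 + (21042690752/21) * u ^ 11 + (-595889408) * u ^ 9 + (-114048000) * u ^ 7 + (-33177600/7) * u ^ 5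
  | 1, u => (24640289/5040) * u ^ 28 + (-91218487/720) * u ^ 26 + (-433337129/720) * u ^ 24 + (-15474410489/1680) * u ^ 22 + (25444141589/72) * u ^ 20 + (-93436475461/36) * u ^ 18 + (204286813651/30) * u ^ 16 + (-22860096994/45) * u ^ 14 + (-1073453854232/45) * u ^ 12 + (6299563614304/315) * u ^ 10 + 23243763072 * u ^ 8 + (-20146357760) * u ^ 6 + (-22224476160/7) * u ^ 4 + (-116121600) * u ^ 2
  | 2, u => (1197188/45) * u ^ 27 + (-6710122/9) * u ^ 25 + (-451534396/45) * u ^ 23 + (2257370578/9) * u ^ 21 + (-14566420048/9) * u ^ 19 + (29384792176/9) * u ^ 17 + (293978276096/45) * u ^ 15 + (-320897923168/9) * u ^ 13 + (1340210611712/45) * u ^ 11 + 48912857088 * u ^ 9 + (-60656564224) * u ^ 7 + (-11086848000) * u ^ 5 + (-464486400) * u ^ 3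
  | 3, u => (8591423/60) * u ^ 26 + (-33526381/12) * u ^ 24 + (-934220881/60) * u ^ 22 + (-833860103/12) * u ^ 20 + (51968781049/6) * u ^ 18 + (-248493080087/3) * u ^ 16 + (4067489952914/15) * u ^ 14 + (-173149375960/3) * u ^ 12 + (-17215203566752/15) * u ^ 10 + 701010142464 * u ^ 8 + 1850021352960 * u ^ 6 + 250052659200 * u ^ 4 + 8709120000 * u ^ 2
  | 4, u => 650833 * u ^ 25 + (-14447538) * u ^ 23 + (-585915163/3) * u ^ 21 + (16120592290/3) * u ^ 19 + (-109369030292/3) * u ^ 17 + 65361029464 * u ^ 15 + (680421565184/3) * u ^ 13 + (-2556139880896/3) * u ^ 11 + (-32396872448/3) * u ^ 9 + 1654535842816 * u ^ 7 + 274305945600 * u ^ 5 + 11147673600 * u ^ 3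
  | 5, u => (11898345/4) * u ^ 24 + (-84760465/2) * u ^ 22 + (-5901990235/12) * u ^ 20 + (-1767025445/2) * u ^ 18 + (579518209705/3) * u ^ 16 + (-5297970819890/3) * u ^ 14 + 4345556647080 * u ^ 12 + (18812750656160/3) * u ^ 10 + (-21903263030400) * u ^ 8 + (-26774696140800) * u ^ 6 + (-3456489369600) * u ^ 4 + (-118444032000) * u ^ 2
  | 6, u => 11801860 * u ^ 23 + (-198565852) * u ^ 21 + (-4012760160) * u ^ 19 + 89876842464 * u ^ 17 + (-500175828480) * u ^ 15 + 196508810688 * u ^ 13 + 4818340601600 * u ^ 11 + (-5037725150720) * u ^ 9 + (-13403469465600) * u ^ 7 + (-2102707814400) * u ^ 5 + (-83607552000) * u ^ 3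
  | 7, u => (142706690/3) * u ^ 22 + (-1038259453/3) * u ^ 20 + (-11677209929) * u ^ 18 + (-160064141440/3) * u ^ 16 + (10573398203732/3) * u ^ 14 + (-22539817301344) * u ^ 12 + (18253570798400/3) * u ^ 10 + (468259159343360/3) * u ^ 8 + 148267161262080 * u ^ 6 + 18672062976000 * u ^ 4 + 634023936000 * u ^ 2
  | 8, u => (488765900/3) * u ^ 21 + (-4863525236/3) * u ^ 19 + (-200905426400/3) * u ^ 17 + 1017289659568 * u ^ 15 + (-9367813389568/3) * u ^ 13 + (-27680105880448/3) * u ^ 11 + (87683155130368/3) * u ^ 9 + 47246744832000 * u ^ 7 + 7131182284800 * u ^ 5 + 278691840000 * u ^ 3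
  | 9, u => 578045265 * u ^ 20 + 1400766537 * u ^ 18 + (-170776471560) * u ^ 16 + (-1878238065564) * u ^ 14 + 42917220468960 * u ^ 12 + (-97609880411328) * u ^ 10 + (-478422973593600) * u ^ 8 + (-397299542492160) * u ^ 6 + (-49235442278400) * u ^ 4 + (-1661700096000) * u ^ 2
  | 10, u => 1641618720 * u ^ 19 + (-1532412000) * u ^ 17 + (-741452256960) * u ^ 15 + 6040477645440 * u ^ 13 + 3826645643520 * u ^ 11 + (-64343239818240) * u ^ 9 + (-81389849210880) * u ^ 7 + (-11932965273600) * u ^ 5 + (-459841536000) * u ^ 3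
  | 11, u => 5036327604 * u ^ 18 + 78928696836 * u ^ 16 + (-1157469944928) * u ^ 14 + (-31455282755952) * u ^ 12 + 223492326609024 * u ^ 10 + 725417551516416 * u ^ 8 + 552960260582400 * u ^ 6 + 67742322278400 * u ^ 4 + 2276215603200 * u ^ 2
  | 12, u => 10840593456 * u ^ 17 + 114314587200 * u ^ 15 + (-4190704765632) * u ^ 13 + 5544588234240 * u ^ 11 + 61998023932416 * u ^ 9 + 67391182172160 * u ^ 7 + 9658168565760 * u ^ 5 + 367873228800 * u ^ 3
  | 13, u => 27818843052 * u ^ 16 + 936283885680 * u ^ 14 + 2602904983536 * u ^ 12 + (-204389831268480) * u ^ 10 + (-536376114962688) * u ^ 8 + (-384987658598400) * u ^ 6 + (-46754448998400) * u ^ 4 + (-1565650944000) * u ^ 2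
  | 14, u => 35370603840 * u ^ 15 + 873479967360 * u ^ 13 + (-4167133850880) * u ^ 11 + (-21913702187520) * u ^ 9 + (-21455023349760) * u ^ 7 + (-3018859683840) * u ^ 5 + (-113865523200) * u ^ 3
  | 15, u => 71680752000 * u ^ 14 + 4218230016000 * u ^ 12 + 67296797568000 * u ^ 10 + 154494033408000 * u ^ 8 + 106013875968000 * u ^ 6 + 12786149376000 * u ^ 4 + 426995712000 * u ^ 2
  | _, _ => 0

noncomputable def lpPoly (u s : ℝ) : ℝ :=
  (s - 4 * u) * (∑ j ∈ range 8, lpWeight j u * signEsymm j s (u ^ 2)) ^ 2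

theorem lpPoly_nonpos {u s : ℝ} (hs : s ≤ 4 * u) : lpPoly u s ≤ 0 :=
  mul_nonpos_of_nonpos_of_nonneg (sub_nonpos.2 hs) (sq_nonneg _)

theorem lpPoly_eq_sum (u s : ℝ) :
    lpPoly u s = ∑ k ∈ range 16, lpCoeff k u * signEsymm k s (u ^ 2) := by
  simp only [lpPoly, sum_range_succ, sum_range_zero, lpWeight, lpCoeff, signEsymm]
  push_cast
  ring

/- Each inequality below is checked by expanding in `u - 10`: all coefficients are positive. -/

theorem lpCoeff_nonneg {u : ℝ} (hu : 10 ≤ u) (k : ℕ) : 0 ≤ lpCoeff k u := by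
  obtain ⟨t, ht, rfl⟩ : ∃ t, 0 ≤ t ∧ u = t + 10 := ⟨u - 10, by linarith, by ring⟩
  rcases lt_or_ge k 16 with hk | hk
  · interval_cases k <;> simp only [lpCoeff] <;> ring_nf <;> positivity
  · obtain ⟨j, rfl⟩ := Nat.exists_eq_add_of_le' hk
    rfl

theorem lpCoeff_zero_pos {u : ℝ} (hu : 10 ≤ u) : 0 < lpCoeff 0 u := by
  obtain ⟨t, ht, rfl⟩ : ∃ t, 0 ≤ t ∧ u = t + 10 := ⟨u - 10, by linarith, by ring⟩
  simp only [lpCoeff]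
  ring_nf
  positivity

theorem lpPoly_sq_le {u : ℝ} (hu : 10 ≤ u) :
    lpPoly u (u ^ 2) ≤ 50 / 7 * u * ((u ^ 2 - 6) ^ 7 / 7 !) * lpCoeff 0 u := by
  obtain ⟨t, ht, rfl⟩ : ∃ t, 0 ≤ t ∧ u = t + 10 := ⟨u - 10, by linarith, by ring⟩
  rw [← sub_nonneg]
  simp only [lpPoly, sum_range_succ, sum_range_zero, lpWeight, lpCoeff, signEsymm,
    Nat.factorial]
  push_cast
  ring_nf
  positivity

theorem sub_six_pow_div_le_sum_choose {n : ℕ} (hn : 6 ≤ n) :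
    ((n : ℝ) - 6) ^ 7 / 7 ! ≤ ∑ i ∈ range 8, (n.choose i : ℝ) := by
  have h := Nat.pow_le_choose (α := ℝ) 7 n
  rw [show n + 1 - 7 = n - 6 by omega, Nat.cast_sub hn, Nat.cast_ofNat] at h
  exact h.trans (single_le_sum (f := fun i ↦ (n.choose i : ℝ)) (fun i _ ↦ Nat.cast_nonneg _)
    (mem_range.2 (by norm_num)))

theorem sum_choose_le_mul_pow {n : ℕ} (hn : 0 < n) :
    ∑ i ∈ range 8, (n.choose i : ℝ) ≤ 8 * (n : ℝ) ^ 7 := by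
  calc ∑ i ∈ range 8, (n.choose i : ℝ) ≤ ∑ _i ∈ range 8, (n : ℝ) ^ 7 := by
        refine sum_le_sum fun i hi ↦ ?_
        exact_mod_cast (n.choose_le_pow i).trans (Nat.pow_le_pow_right hn (by grind))
    _ = 8 * (n : ℝ) ^ 7 := by simp

theorem card_le_sqrt_mul_sum_choose {n : ℕ} (hn : 100 ≤ n) {C : Finset (Fin n → ZMod 2)}
    (hC : ∀ x ∈ C, ∀ y ∈ C, x ≠ y → (n : ℝ) / 2 - 2 * √n ≤ hammingDist x y) :
    (#C : ℝ) ≤ √n / ((4.14 : ℝ) - 4) * ∑ i ∈ range 8, (n.choose i : ℝ) := by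
  set u := √n
  have hu : 10 ≤ u := Real.le_sqrt_of_sq_le (by exact_mod_cast (by omega : 10 ^ 2 ≤ n))
  have hu2 : u ^ 2 = n := Real.sq_sqrt (Nat.cast_nonneg n)
  have hinner : ∀ x ∈ C, ∀ y ∈ C, x ≠ y → ∑ i, signVec x i * signVec y i ≤ 4 * u := by
    intro x hx y hy hxy
    rw [sum_signVec_mul_signVec, Fintype.card_fin]
    linarith [hC x hx y hy hxy]
  have hdelsarte : lpCoeff 0 u * #C ≤ lpPoly u (u ^ 2) := by
    have := mul_card_le_of_eq_sum_signEsymm signVec_sq (C := C) (K := 16) (by norm_num)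
      (fun k _ ↦ lpCoeff_nonneg hu k)
      (fun s ↦ by rw [Fintype.card_fin, ← hu2]; exact lpPoly_eq_sum u s)
      (fun x hx y hy hxy ↦ lpPoly_nonpos (hinner x hx y hy hxy))
    rwa [Fintype.card_fin, ← hu2] at this
  have hvol := sub_six_pow_div_le_sum_choose (n := n) (by omega)
  rw [← hu2] at hvol
  have h0 := lpCoeff_zero_pos hu
  refine le_of_mul_le_mul_left ?_ h0
  calc lpCoeff 0 u * #C ≤ 50 / 7 * u * ((u ^ 2 - 6) ^ 7 / 7 !) * lpCoeff 0 u :=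
        hdelsarte.trans (lpPoly_sq_le hu)
    _ ≤ 50 / 7 * u * (∑ i ∈ range 8, (n.choose i : ℝ)) * lpCoeff 0 u := by gcongr
    _ = lpCoeff 0 u * (u / ((4.14 : ℝ) - 4) * ∑ i ∈ range 8, (n.choose i : ℝ)) := by ring

/-- Codes with minimum distance `d ≥ n/2 - 2√n` have size `O(n^{15/2})`; quantitatively,
for sufficiently large `n`, `M ≤ (√n / (4.14 - 4)) · Vol(7, n)`. -/
theorem upper_bound_two_sqrt_n :
    (∃ K : ℝ, 0 < K ∧ ∃ N : ℕ, ∀ n : ℕ, N ≤ n →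
      ∀ d : ℕ, ∀ C : Finset (Fin n → ZMod 2),
        (∀ x ∈ C, ∀ y ∈ C, x ≠ y → d ≤ hammingDist x y) →
        ((n : ℝ) / 2 - 2 * Real.sqrt n ≤ d) →
        (C.card : ℝ) ≤ K * (n : ℝ) ^ ((15 : ℝ) / 2)) ∧
    (∃ N : ℕ, ∀ n : ℕ, N ≤ n →
      ∀ d : ℕ, ∀ C : Finset (Fin n → ZMod 2),
        (∀ x ∈ C, ∀ y ∈ C, x ≠ y → d ≤ hammingDist x y) →
        ((n : ℝ) / 2 - 2 * Real.sqrt n ≤ d) →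
        (C.card : ℝ) ≤ (Real.sqrt n / ((4.14 : ℝ) - 4)) *
          (∑ i ∈ Finset.range 8, (n.choose i : ℝ))) := by
  have hbound : ∀ n : ℕ, 100 ≤ n → ∀ d : ℕ, ∀ C : Finset (Fin n → ZMod 2),
      (∀ x ∈ C, ∀ y ∈ C, x ≠ y → d ≤ hammingDist x y) → ((n : ℝ) / 2 - 2 * √n ≤ d) →
      (#C : ℝ) ≤ √n / ((4.14 : ℝ) - 4) * ∑ i ∈ range 8, (n.choose i : ℝ) :=
    fun n hn d C hC hd ↦ card_le_sqrt_mul_sum_choose hn fun x hx y hy hxy ↦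
      hd.trans (by exact_mod_cast hC x hx y hy hxy)
  refine ⟨⟨60, by norm_num, 100, fun n hn d C hC hd ↦ (hbound n hn d C hC hd).trans ?_⟩,
    100, hbound⟩
  have hpow : (n : ℝ) ^ ((15 : ℝ) / 2) = √n * (n : ℝ) ^ 7 := by
    rw [Real.sqrt_eq_rpow, ← Real.rpow_natCast, ← Real.rpow_add (by positivity)]
    norm_num
  rw [hpow]
  calc √n / ((4.14 : ℝ) - 4) * ∑ i ∈ range 8, (n.choose i : ℝ)
      ≤ √n / ((4.14 : ℝ) - 4) * (8 * (n : ℝ) ^ 7) := by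
        gcongr
        exact sum_choose_le_mul_pow (by omega)
    _ ≤ 60 * (√n * (n : ℝ) ^ 7) := by
      norm_num
      nlinarith [Real.sqrt_nonneg n, pow_nonneg (Nat.cast_nonneg n : (0 : ℝ) ≤ n) 7]
end

section
/- Fix any real constant t with 0 < t < √(3 + √6)/2 ≈ 1.167. Then there exist a constant K > 0 and an integer N such that for all n ≥ N, every binary (n, M, d) code with minimum distance d ≥ n/2 − t√n satisfies M ≤ K · n^{7/2}; in particular A(n, d) = O(n^{3.5}) whenever d ≥ n/2 − t√n. -/
/-!
Delsarte's linear programming bound. Send a binary word `x` to the sign vector `(-1) ^ x`.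
For two words, the `k`-th elementary symmetric function of the coordinatewise product of their
sign vectors is the Krawtchouk polynomial `K_k` at `a = n - 2 d(x, y)`; summed over all pairs of
a code `C` it is a sum of squares, hence nonnegative. So if `f = ∑ c_k K_k` with `c_k ≥ 0` for
`k ≥ 1` and `f(a) ≤ 0` at the distances occurring in `C`, then
`c_0 |C|² ≤ ∑_{x, y ∈ C} f(a(x, y)) ≤ |C| f(n)`.

We take `f(a) = (a - s√n) P(a)²` with `2t ≤ s`, where `P` is the Christoffel–Darboux kernel
`∑_{k ≤ 3} He_k(s) He_k(a / √n) / k!` of the Hermite polynomials, the limits of rescaled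
Krawtchouk polynomials. For large `n` its Krawtchouk coefficients of positive degree are
nonnegative, while `c_0 ≈ -6 s (s² - 3) He₄(s) n^{7/2}` is positive exactly while `s` stays
below the largest zero `√(3 + √6)` of `He₄`. Since `f(n) = O(n⁷)`, this gives
`|C| = O(n^{7/2})`.
-/

open Finset

section Esymm

variable {ι : Type*} [Fintype ι]

theorem sum_sum_esymm_mul_nonneg {R : Type*} [CommRing R] [LinearOrder R] [IsStrictOrderedRing R]
    {α : Type*} (C : Finset α) (v : α → ι → R) (k : ℕ) :
    0 ≤ ∑ x ∈ C, ∑ y ∈ C, (univ.val.map fun i => v x i * v y i).esymm k := by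
  have hsq : ∑ x ∈ C, ∑ y ∈ C, (univ.val.map fun i => v x i * v y i).esymm k
      = ∑ w ∈ powersetCard k univ, (∑ x ∈ C, ∏ i ∈ w, v x i) ^ 2 := by
    simp only [esymm_map_val, prod_mul_distrib, sq, sum_mul_sum]
    exact (sum_congr rfl fun x _ => sum_comm).trans sum_comm
  rw [hsq]
  exact sum_nonneg fun w _ => sq_nonneg _

variable [DecidableEq ι]

theorem sum_powersetCard_succ_sum_erase {M : Type*} [AddCommMonoid M] (m : ℕ)
    (F : Finset ι → ι → M) :
    ∑ w ∈ powersetCard (m + 1) univ, ∑ i ∈ w, F (w.erase i) i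
      = ∑ v ∈ powersetCard m univ, ∑ i ∈ univ \ v, F v i := by
  rw [sum_sigma', sum_sigma']
  refine sum_nbij' (fun p => ⟨p.1.erase p.2, p.2⟩) (fun p => ⟨insert p.2 p.1, p.2⟩)
    ?_ ?_ ?_ ?_ (fun _ _ => rfl)
  · rintro ⟨w, i⟩ h
    simp only [mem_sigma, mem_powersetCard, subset_univ, true_and] at h ⊢
    simp [card_erase_of_mem h.2, h.1]
  · rintro ⟨v, i⟩ h
    simp only [mem_sigma, mem_powersetCard, subset_univ, true_and, mem_sdiff, mem_univ] at h ⊢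
    simp [card_insert_of_notMem h.2, h.1]
  · rintro ⟨w, i⟩ h
    simp only [mem_sigma] at h
    simp [insert_erase h.2]
  · rintro ⟨v, i⟩ h
    simp only [mem_sigma, mem_sdiff] at h
    simp [erase_insert h.2.2]

variable {R : Type*} [CommRing R]

theorem sum_mul_esymm_succ (ε : ι → R) (hε : ∀ i, ε i ^ 2 = 1) (m : ℕ) :
    (∑ i, ε i) * (univ.val.map ε).esymm (m + 1)
      = (m + 2) * (univ.val.map ε).esymm (m + 2)
        + (Fintype.card ι - m) * (univ.val.map ε).esymm m := by
  simp only [esymm_map_val]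
  have hin : ∀ w : Finset ι, ∀ i ∈ w,
      ε i * ∏ j ∈ w, ε j = ∏ j ∈ w.erase i, ε j := by
    intro w i hi
    rw [← mul_prod_erase w ε hi, ← mul_assoc, ← sq, hε, one_mul]
  have hout : ∀ w : Finset ι, ∀ i ∈ univ \ w,
      ε i * ∏ j ∈ w, ε j = ∏ j ∈ insert i w, ε j :=
    fun w i hi => (prod_insert (mem_sdiff.mp hi).2).symm
  have hdown : ∑ w ∈ powersetCard (m + 1) univ, ∑ i ∈ w, ∏ j ∈ w.erase i, ε j
      = (Fintype.card ι - m) * ∑ v ∈ powersetCard m univ, ∏ j ∈ v, ε j := by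
    rw [sum_powersetCard_succ_sum_erase m fun v _ => ∏ j ∈ v, ε j, mul_sum]
    refine sum_congr rfl fun v hv => ?_
    have hcard : #(univ \ v) + m = Fintype.card ι := by
      rw [← (mem_powersetCard.mp hv).2, card_sdiff_add_card_eq_card (subset_univ v), card_univ]
    rw [sum_const, nsmul_eq_mul, ← hcard]
    push_cast; ring
  have hup : ∑ w ∈ powersetCard (m + 1) univ, ∑ i ∈ univ \ w, ∏ j ∈ insert i w, ε j
      = (m + 2) * ∑ v ∈ powersetCard (m + 2) univ, ∏ j ∈ v, ε j := by
    rw [← sum_powersetCard_succ_sum_erase (m + 1) fun v i => ∏ j ∈ insert i v, ε j, mul_sum]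
    refine sum_congr rfl fun v hv => ?_
    rw [sum_congr rfl fun i hi => by rw [insert_erase hi], sum_const,
      (mem_powersetCard.mp hv).2, nsmul_eq_mul]
    push_cast; ring
  calc (∑ i, ε i) * ∑ w ∈ powersetCard (m + 1) univ, ∏ j ∈ w, ε j
      = ∑ w ∈ powersetCard (m + 1) univ, ∑ i, ε i * ∏ j ∈ w, ε j := by
        rw [sum_mul_sum, sum_comm]
    _ = ∑ w ∈ powersetCard (m + 1) univ, ((∑ i ∈ w, ∏ j ∈ w.erase i, ε j)
          + ∑ i ∈ univ \ w, ∏ j ∈ insert i w, ε j) := by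
        refine sum_congr rfl fun w _ => ?_
        rw [← sum_sdiff (subset_univ w), sum_congr rfl (hin w), sum_congr rfl (hout w),
          add_comm]
    _ = _ := by rw [sum_add_distrib, hdown, hup, add_comm]

/-- Krawtchouk polynomials of length `n`, in the variable `a = n - 2d` rather than the
distance `d`, given by their three-term recurrence. -/
def krawtchouk {K : Type*} [Field K] (n : K) : ℕ → K → K
  | 0, _ => 1
  | 1, a => a
  | m + 2, a => (a * krawtchouk n (m + 1) a - (n - m) * krawtchouk n m a) / (m + 2)

theorem esymm_eq_krawtchouk {K : Type*} [Field K] [CharZero K] (ε : ι → K)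
    (hε : ∀ i, ε i ^ 2 = 1) : ∀ k, (univ.val.map ε).esymm k
      = krawtchouk (Fintype.card ι : K) k (∑ i, ε i)
  | 0 => by simp [esymm_map_val, krawtchouk]
  | 1 => by simp [esymm_map_val, krawtchouk, powersetCard_one]
  | m + 2 => by
    rw [krawtchouk, ← esymm_eq_krawtchouk ε hε m, ← esymm_eq_krawtchouk ε hε (m + 1),
      sum_mul_esymm_succ ε hε, eq_div_iff (by exact_mod_cast (m + 1).succ_ne_zero)]
    ring

end Esymm

def bitSign (z : ZMod 2) : ℝ := if z = 0 then 1 else -1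

theorem bitSign_sq (z : ZMod 2) : bitSign z ^ 2 = 1 := by
  unfold bitSign; split_ifs <;> norm_num

theorem sum_bitSign_mul {ι : Type*} [Fintype ι] (x y : ι → ZMod 2) :
    ∑ i, bitSign (x i) * bitSign (y i) = Fintype.card ι - 2 * hammingDist x y := by
  have hterm : ∀ a b : ZMod 2, bitSign a * bitSign b = 1 - 2 * if a ≠ b then 1 else 0 := by
    have h01 : ∀ z : ZMod 2, z = 0 ∨ z = 1 := by decide
    intro a b
    rcases h01 a with rfl | rfl <;> rcases h01 b with rfl | rfl <;> norm_num [bitSign]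
  simp only [hterm, sum_sub_distrib, ← mul_sum, sum_boole, hammingDist]
  simp

theorem delsarte_bound {ι : Type*} [Fintype ι] [DecidableEq ι] (C : Finset (ι → ZMod 2))
    (hC : C.Nonempty) (D : ℕ) (c : ℕ → ℝ) (hc : ∀ k ∈ Icc 1 D, 0 ≤ c k) (f : ℝ → ℝ)
    (hf : ∀ a, f a = ∑ k ∈ range (D + 1), c k * krawtchouk (Fintype.card ι : ℝ) k a)
    (hneg : ∀ x ∈ C, ∀ y ∈ C, x ≠ y → f (Fintype.card ι - 2 * hammingDist x y) ≤ 0) :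
    c 0 * #C ≤ f (Fintype.card ι) := by
  set g : (ι → ZMod 2) → (ι → ZMod 2) → ℝ :=
    fun x y => f (Fintype.card ι - 2 * hammingDist x y)
  set S : ℕ → ℝ := fun k => ∑ x ∈ C, ∑ y ∈ C,
    (univ.val.map fun i => bitSign (x i) * bitSign (y i)).esymm k
  have hS : ∀ k, 0 ≤ S k := fun k => sum_sum_esymm_mul_nonneg C (fun x i => bitSign (x i)) k
  have hS0 : S 0 = #C ^ 2 := by simp [S, esymm_map_val, sq]
  have hsum : ∑ x ∈ C, ∑ y ∈ C, g x y = ∑ k ∈ range (D + 1), c k * S k := by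
    have hkraw : ∀ x y : ι → ZMod 2, ∀ k,
        krawtchouk (Fintype.card ι : ℝ) k (Fintype.card ι - 2 * hammingDist x y)
          = (univ.val.map fun i => bitSign (x i) * bitSign (y i)).esymm k := fun x y k => by
      rw [esymm_eq_krawtchouk _ (fun i => by rw [mul_pow, bitSign_sq, bitSign_sq, one_mul]),
        sum_bitSign_mul]
    simp only [g, S, hf, hkraw, mul_sum]
    exact (sum_congr rfl fun x _ => sum_comm).trans sum_comm
  have hlower : c 0 * #C ^ 2 ≤ ∑ x ∈ C, ∑ y ∈ C, g x y := by
    rw [hsum, sum_range_succ', hS0, le_add_iff_nonneg_left]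
    exact sum_nonneg fun k hk =>
      mul_nonneg (hc _ (mem_Icc.mpr ⟨le_add_self, by simpa using mem_range.mp hk⟩)) (hS _)
  have hupper : ∑ x ∈ C, ∑ y ∈ C, g x y ≤ #C * f (Fintype.card ι) := by
    refine (sum_le_sum fun x hx => ?_).trans_eq (by rw [sum_const, nsmul_eq_mul])
    rw [← add_sum_erase C _ hx]
    have hoff : ∑ y ∈ C.erase x, g x y ≤ 0 :=
      sum_nonpos fun y hy => hneg x hx y (mem_of_mem_erase hy) (ne_of_mem_erase hy).symm
    simpa [g] using hoff
  have hpos : (0 : ℝ) < #C := by exact_mod_cast hC.card_pos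
  nlinarith

/-- `6 u³ ∑_{k ≤ 3} He_k(s) He_k(a / u) / k!`, the Christoffel–Darboux kernel of the
probabilists' Hermite polynomials; `u` plays the role of `√n`. -/
def hermiteKernel (s u a : ℝ) : ℝ :=
  (s ^ 3 - 3 * s) * a ^ 3 + 3 * (s ^ 2 - 1) * u * a ^ 2 - 3 * s * (s ^ 2 - 5) * u ^ 2 * a
    + 3 * (3 - s ^ 2) * u ^ 3

def testPoly (s u a : ℝ) : ℝ := (a - s * u) * hermiteKernel s u a ^ 2

def testCoeff (s u : ℝ) : ℕ → ℝ
  | 0 => -6*s^7*u^7 + 54*s^5*u^7 - 126*s^3*u^7 + 54*s*u^7 + 18*s^7*u^5 - 198*s^5*u^5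
      + 486*s^3*u^5 - 234*s*u^5 - 16*s^7*u^3 + 192*s^5*u^3 - 528*s^3*u^3 + 288*s*u^3
  | 1 => 6*s^6*u^6 - 18*s^4*u^6 + 54*s^2*u^6 + 54*u^6 - 126*s^6*u^4 + 594*s^4*u^4
      - 882*s^2*u^4 - 162*u^4 + 396*s^6*u^2 - 2232*s^4*u^2 + 3276*s^2*u^2 + 144*u^2
      - 272*s^6 + 1632*s^4 - 2448*s^2
  | 2 => -36*s^7*u^5 + 360*s^5*u^5 - 828*s^3*u^5 + 432*s*u^5 + 204*s^7*u^3 - 2304*s^5*u^3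
      + 5868*s^3*u^3 - 2952*s*u^3 - 272*s^7*u + 3264*s^5*u - 8976*s^3*u + 4896*s*u
  | 3 => 108*s^6*u^4 - 432*s^4*u^4 + 756*s^2*u^4 + 216*u^4 - 1500*s^6*u^2 + 7920*s^4*u^2
      - 11340*s^2*u^2 - 1080*u^2 + 3696*s^6 - 22176*s^4 + 33264*s^2
  | 4 => -216*s^7*u^3 + 2376*s^5*u^3 - 5832*s^3*u^3 + 2808*s*u^3 + 960*s^7*u
      - 11520*s^5*u + 31680*s^3*u - 17280*s*u
  | 5 => 1080*s^6*u^2 - 5400*s^4*u^2 + 7560*s^2*u^2 + 1080*u^2 - 8400*s^6 + 50400*s^4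
      - 75600*s^2
  | 6 => -720*s^7*u + 8640*s^5*u - 23760*s^3*u + 12960*s*u
  | 7 => 5040*s^6 - 30240*s^4 + 45360*s^2
  | _ => 0

theorem testPoly_eq_sum_krawtchouk (s u a : ℝ) :
    testPoly s u a = ∑ k ∈ range 8, testCoeff s u k * krawtchouk (u ^ 2) k a := by
  simp only [sum_range_succ, sum_range_zero, testPoly, hermiteKernel, testCoeff, krawtchouk]
  push_cast
  ring

theorem testPoly_nonpos {s u a : ℝ} (ha : a ≤ s * u) : testPoly s u a ≤ 0 :=
  mul_nonpos_of_nonpos_of_nonneg (by linarith) (sq_nonneg _)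

theorem testCoeff_seven_nonneg (s u : ℝ) : 0 ≤ testCoeff s u 7 := by
  have e : testCoeff s u 7 = 5040 * (s * (s ^ 2 - 3)) ^ 2 := by simp only [testCoeff]; ring
  rw [e]; positivity

section

variable {s u : ℝ} (hs : 2 ≤ s) (hs' : s ^ 2 ≤ 5.45) (hu : 262 ≤ u)
include hs hs' hu

theorem testCoeff_one_nonneg : 0 ≤ testCoeff s u 1 := by
  have hs4 : (4 : ℝ) ≤ s ^ 2 := by nlinarith
  have e : testCoeff s u 1 = (6 * (s ^ 2) ^ 3 - 18 * (s ^ 2) ^ 2 + 54 * s ^ 2 + 54) * u ^ 6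
      + (-126 * (s ^ 2) ^ 3 + 594 * (s ^ 2) ^ 2 - 882 * s ^ 2 - 162) * u ^ 4
      + (396 * (s ^ 2) ^ 3 - 2232 * (s ^ 2) ^ 2 + 3276 * s ^ 2 + 144) * u ^ 2
      - 272 * s ^ 2 * (s ^ 2 - 3) ^ 2 := by
    simp only [testCoeff]; ring
  have hA : (366 : ℝ) ≤ 6 * (s ^ 2) ^ 3 - 18 * (s ^ 2) ^ 2 + 54 * s ^ 2 + 54 := by
    nlinarith [sq_nonneg (s ^ 2 - 4), mul_nonneg (sub_nonneg.mpr hs4) (sub_nonneg.mpr hs')]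
  have hB : (-7800 : ℝ) ≤ -126 * (s ^ 2) ^ 3 + 594 * (s ^ 2) ^ 2 - 882 * s ^ 2 - 162 := by
    nlinarith [sq_nonneg (s ^ 2 - 4), mul_nonneg (sub_nonneg.mpr hs4) (sub_nonneg.mpr hs')]
  have hC : (2880 : ℝ) ≤ 396 * (s ^ 2) ^ 3 - 2232 * (s ^ 2) ^ 2 + 3276 * s ^ 2 + 144 := by
    nlinarith [sq_nonneg (s ^ 2 - 4), mul_nonneg (sub_nonneg.mpr hs4) (sub_nonneg.mpr hs')]
  have hD : 272 * s ^ 2 * (s ^ 2 - 3) ^ 2 ≤ 8900 := by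
    nlinarith [sq_nonneg (s ^ 2 - 4), mul_nonneg (sub_nonneg.mpr hs4) (sub_nonneg.mpr hs')]
  have hu2 : (68644 : ℝ) ≤ u ^ 2 := by nlinarith
  have h1 : (2000000 : ℝ) ≤ (6 * (s ^ 2) ^ 3 - 18 * (s ^ 2) ^ 2 + 54 * s ^ 2 + 54) * u ^ 2
      + (-126 * (s ^ 2) ^ 3 + 594 * (s ^ 2) ^ 2 - 882 * s ^ 2 - 162) := by
    nlinarith [mul_le_mul hA hu2 (by norm_num) (by linarith)]
  have h2 : (2000000 : ℝ) ≤ ((6 * (s ^ 2) ^ 3 - 18 * (s ^ 2) ^ 2 + 54 * s ^ 2 + 54) * u ^ 2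
      + (-126 * (s ^ 2) ^ 3 + 594 * (s ^ 2) ^ 2 - 882 * s ^ 2 - 162)) * u ^ 2
      + (396 * (s ^ 2) ^ 3 - 2232 * (s ^ 2) ^ 2 + 3276 * s ^ 2 + 144) := by
    nlinarith [mul_le_mul h1 hu2 (by norm_num) (by linarith)]
  nlinarith [mul_le_mul h2 hu2 (by norm_num) (by linarith)]

theorem testCoeff_two_nonneg : 0 ≤ testCoeff s u 2 := by
  have hs4 : (4 : ℝ) ≤ s ^ 2 := by nlinarith
  have e : testCoeff s u 2
      = s * u * ((-36 * (s ^ 2) ^ 3 + 360 * (s ^ 2) ^ 2 - 828 * s ^ 2 + 432) * u ^ 4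
      + (204 * (s ^ 2) ^ 3 - 2304 * (s ^ 2) ^ 2 + 5868 * s ^ 2 - 2952) * u ^ 2
      - 272 * (s ^ 2 - 3) * ((s ^ 2) ^ 2 - 9 * s ^ 2 + 6)) := by
    simp only [testCoeff]; ring
  have hA : (576 : ℝ) ≤ -36 * (s ^ 2) ^ 3 + 360 * (s ^ 2) ^ 2 - 828 * s ^ 2 + 432 := by
    nlinarith [mul_nonneg (sub_nonneg.mpr hs4) (sub_nonneg.mpr hs'), sq_nonneg (s ^ 2 - 4)]
  have hB : (-6400 : ℝ) ≤ 204 * (s ^ 2) ^ 3 - 2304 * (s ^ 2) ^ 2 + 5868 * s ^ 2 - 2952 := by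
    nlinarith [mul_nonneg (sub_nonneg.mpr hs4) (sub_nonneg.mpr hs'), sq_nonneg (s ^ 2 - 4)]
  have hC : 272 * (s ^ 2 - 3) * ((s ^ 2) ^ 2 - 9 * s ^ 2 + 6) ≤ 0 := by
    nlinarith [mul_nonneg (by linarith : (0 : ℝ) ≤ s ^ 2 - 3)
      (by nlinarith : (0 : ℝ) ≤ -((s ^ 2) ^ 2 - 9 * s ^ 2 + 6))]
  have hu2 : (68644 : ℝ) ≤ u ^ 2 := by nlinarith
  have h1 : (0 : ℝ) ≤ (-36 * (s ^ 2) ^ 3 + 360 * (s ^ 2) ^ 2 - 828 * s ^ 2 + 432) * u ^ 2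
      + (204 * (s ^ 2) ^ 3 - 2304 * (s ^ 2) ^ 2 + 5868 * s ^ 2 - 2952) := by
    nlinarith [mul_le_mul hA hu2 (by norm_num) (by linarith)]
  rw [e]
  refine mul_nonneg (by nlinarith) ?_
  nlinarith [mul_nonneg h1 (sq_nonneg u)]

theorem testCoeff_three_nonneg : 0 ≤ testCoeff s u 3 := by
  have hs4 : (4 : ℝ) ≤ s ^ 2 := by nlinarith
  have e : testCoeff s u 3 = (108 * (s ^ 2) ^ 3 - 432 * (s ^ 2) ^ 2 + 756 * s ^ 2 + 216) * u ^ 4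
      + (-1500 * (s ^ 2) ^ 3 + 7920 * (s ^ 2) ^ 2 - 11340 * s ^ 2 - 1080) * u ^ 2
      + 3696 * s ^ 2 * (s ^ 2 - 3) ^ 2 := by
    simp only [testCoeff]; ring
  have hA : (3240 : ℝ) ≤ 108 * (s ^ 2) ^ 3 - 432 * (s ^ 2) ^ 2 + 756 * s ^ 2 + 216 := by
    nlinarith [sq_nonneg (s ^ 2 - 4), mul_nonneg (sub_nonneg.mpr hs4) (sub_nonneg.mpr hs')]
  have hB : (-71000 : ℝ) ≤ -1500 * (s ^ 2) ^ 3 + 7920 * (s ^ 2) ^ 2 - 11340 * s ^ 2 - 1080 := by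
    nlinarith [sq_nonneg (s ^ 2 - 4), mul_nonneg (sub_nonneg.mpr hs4) (sub_nonneg.mpr hs')]
  have hC : (0 : ℝ) ≤ 3696 * s ^ 2 * (s ^ 2 - 3) ^ 2 := by positivity
  have hu2 : (68644 : ℝ) ≤ u ^ 2 := by nlinarith
  have h1 : (0 : ℝ) ≤ (108 * (s ^ 2) ^ 3 - 432 * (s ^ 2) ^ 2 + 756 * s ^ 2 + 216) * u ^ 2
      + (-1500 * (s ^ 2) ^ 3 + 7920 * (s ^ 2) ^ 2 - 11340 * s ^ 2 - 1080) := by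
    nlinarith [mul_le_mul hA hu2 (by norm_num) (by linarith)]
  nlinarith [mul_nonneg h1 (sq_nonneg u)]

theorem testCoeff_four_nonneg : 0 ≤ testCoeff s u 4 := by
  have hs4 : (4 : ℝ) ≤ s ^ 2 := by nlinarith
  have e : testCoeff s u 4
      = s * u * ((-216 * (s ^ 2) ^ 3 + 2376 * (s ^ 2) ^ 2 - 5832 * s ^ 2 + 2808) * u ^ 2
      + (960 * (s ^ 2) ^ 3 - 11520 * (s ^ 2) ^ 2 + 31680 * s ^ 2 - 17280)) := by
    simp only [testCoeff]; ring
  have hA : (3672 : ℝ) ≤ -216 * (s ^ 2) ^ 3 + 2376 * (s ^ 2) ^ 2 - 5832 * s ^ 2 + 2808 := by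
    nlinarith [mul_nonneg (sub_nonneg.mpr hs4) (sub_nonneg.mpr hs'), sq_nonneg (s ^ 2 - 4)]
  have hB : (-31400 : ℝ) ≤ 960 * (s ^ 2) ^ 3 - 11520 * (s ^ 2) ^ 2 + 31680 * s ^ 2 - 17280 := by
    nlinarith [mul_nonneg (sub_nonneg.mpr hs4) (sub_nonneg.mpr hs'), sq_nonneg (s ^ 2 - 4)]
  rw [e]
  exact mul_nonneg (by nlinarith) (by nlinarith [sq_nonneg (u - 262)])

theorem testCoeff_five_nonneg : 0 ≤ testCoeff s u 5 := by
  have hs4 : (4 : ℝ) ≤ s ^ 2 := by nlinarith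
  have e : testCoeff s u 5 = (1080 * (s ^ 2) ^ 3 - 5400 * (s ^ 2) ^ 2 + 7560 * s ^ 2 + 1080) * u ^ 2
      + (-8400 * (s ^ 2) ^ 3 + 50400 * (s ^ 2) ^ 2 - 75600 * s ^ 2) := by
    simp only [testCoeff]; ring
  have hA : (14040 : ℝ) ≤ 1080 * (s ^ 2) ^ 3 - 5400 * (s ^ 2) ^ 2 + 7560 * s ^ 2 + 1080 := by
    nlinarith [sq_nonneg (s ^ 2 - 4), sq_nonneg s]
  have hB : (-280000 : ℝ) ≤ -8400 * (s ^ 2) ^ 3 + 50400 * (s ^ 2) ^ 2 - 75600 * s ^ 2 := by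
    nlinarith [sq_nonneg (s ^ 2 - 4), mul_nonneg (sub_nonneg.mpr hs4) (sub_nonneg.mpr hs')]
  nlinarith [sq_nonneg u,
    mul_le_mul_of_nonneg_left (sq_nonneg (u - 262)) (by norm_num : (0 : ℝ) ≤ 14040)]

theorem testCoeff_six_nonneg : 0 ≤ testCoeff s u 6 := by
  have e : testCoeff s u 6 = 720 * u * s * ((s ^ 2 - 3) * (9 * s ^ 2 - (s ^ 2) ^ 2 - 6)) := by
    simp only [testCoeff]; ring
  have h1 : (0 : ℝ) ≤ s ^ 2 - 3 := by nlinarith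
  have h2 : (0 : ℝ) ≤ 9 * s ^ 2 - (s ^ 2) ^ 2 - 6 := by nlinarith
  have hu0 : (0 : ℝ) ≤ u := by linarith
  rw [e]; positivity

theorem testCoeff_nonneg : ∀ k ∈ Icc 1 7, 0 ≤ testCoeff s u k := by
  intro k hk
  obtain ⟨hk1, hk7⟩ := mem_Icc.mp hk
  interval_cases k
  exacts [testCoeff_one_nonneg hs hs' hu, testCoeff_two_nonneg hs hs' hu,
    testCoeff_three_nonneg hs hs' hu, testCoeff_four_nonneg hs hs' hu,
    testCoeff_five_nonneg hs hs' hu, testCoeff_six_nonneg hs hs' hu,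
    testCoeff_seven_nonneg s u]

theorem testCoeff_zero_ge (huδ : 100000 ≤ (3 + √6 - s ^ 2) * u ^ 2) :
    36 * (3 + √6 - s ^ 2) * u ^ 7 ≤ testCoeff s u 0 := by
  set δ := 3 + √6 - s ^ 2 with hδ
  have hs4 : (4 : ℝ) ≤ s ^ 2 := by nlinarith
  have hu0 : (0 : ℝ) < u := by linarith
  have hδpos : 0 < δ := by
    by_contra! h
    nlinarith [mul_nonpos_of_nonpos_of_nonneg h (sq_nonneg u)]
  have h6 : √6 ^ 2 = 6 := Real.sq_sqrt (by norm_num)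
  have h6lb : (2.44 : ℝ) ≤ √6 := Real.le_sqrt_of_sq_le (by norm_num)
  have e : testCoeff s u 0 = s * ((-6 * (s ^ 2) ^ 3 + 54 * (s ^ 2) ^ 2 - 126 * s ^ 2 + 54) * u ^ 7
      + (18 * (s ^ 2) ^ 3 - 198 * (s ^ 2) ^ 2 + 486 * s ^ 2 - 234) * u ^ 5
      - 16 * (s ^ 2 - 3) * ((s ^ 2) ^ 2 - 9 * s ^ 2 + 6) * u ^ 3) := by
    simp only [testCoeff]; ring
  have hlead : 20 * δ ≤ -6 * (s ^ 2) ^ 3 + 54 * (s ^ 2) ^ 2 - 126 * s ^ 2 + 54 := by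
    -- the left side is `-6 (s² - 3) He₄(s)`, and `He₄(s) = -(s² - 3 + √6) δ`
    have hfac : -6 * (s ^ 2) ^ 3 + 54 * (s ^ 2) ^ 2 - 126 * s ^ 2 + 54
        = 6 * (s ^ 2 - 3) * (s ^ 2 - 3 + √6) * δ := by
      rw [hδ]; linear_combination (-6 * (s ^ 2 - 3)) * h6
    have h1 : (1 : ℝ) ≤ s ^ 2 - 3 := by linarith
    have h2 : (3.4 : ℝ) ≤ s ^ 2 - 3 + √6 := by linarith
    rw [hfac]
    nlinarith [mul_le_mul h1 h2 (by norm_num) (by linarith)]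
  have hmid : (-560 : ℝ) ≤ 18 * (s ^ 2) ^ 3 - 198 * (s ^ 2) ^ 2 + 486 * s ^ 2 - 234 := by
    nlinarith [sq_nonneg (s ^ 2 - 4), mul_nonneg (sub_nonneg.mpr hs4) (sub_nonneg.mpr hs')]
  have hlow : 16 * (s ^ 2 - 3) * ((s ^ 2) ^ 2 - 9 * s ^ 2 + 6) ≤ 0 := by
    nlinarith [mul_nonneg (by linarith : (0 : ℝ) ≤ s ^ 2 - 3)
      (by nlinarith : (0 : ℝ) ≤ -((s ^ 2) ^ 2 - 9 * s ^ 2 + 6))]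
  have hslack : 560 * u ^ 5 ≤ δ * u ^ 7 := by
    have h :=
      mul_le_mul_of_nonneg_right (by linarith : (560 : ℝ) ≤ δ * u ^ 2) (pow_pos hu0 5).le
    linarith [show δ * u ^ 2 * u ^ 5 = δ * u ^ 7 by ring]
  have hbracket : 19 * δ * u ^ 7
      ≤ (-6 * (s ^ 2) ^ 3 + 54 * (s ^ 2) ^ 2 - 126 * s ^ 2 + 54) * u ^ 7
        + (18 * (s ^ 2) ^ 3 - 198 * (s ^ 2) ^ 2 + 486 * s ^ 2 - 234) * u ^ 5
        - 16 * (s ^ 2 - 3) * ((s ^ 2) ^ 2 - 9 * s ^ 2 + 6) * u ^ 3 := by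
    nlinarith [mul_le_mul_of_nonneg_right hlead (pow_pos hu0 7).le,
      mul_le_mul_of_nonneg_right hmid (pow_pos hu0 5).le,
      mul_nonpos_of_nonpos_of_nonneg hlow (pow_pos hu0 3).le]
  have hδu : 0 ≤ δ * u ^ 7 := by positivity
  rw [e]
  nlinarith

theorem abs_hermiteKernel_sq_le : |hermiteKernel s u (u ^ 2)| ≤ 6 * u ^ 6 := by
  have hs4 : (4 : ℝ) ≤ s ^ 2 := by nlinarith
  have hs234 : s ≤ 2.34 := by nlinarith
  have hu0 : (0 : ℝ) < u := by linarith
  have e : hermiteKernel s u (u ^ 2) = (s ^ 3 - 3 * s) * u ^ 6 + 3 * (s ^ 2 - 1) * u ^ 5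
      - 3 * s * (s ^ 2 - 5) * u ^ 4 + 3 * (3 - s ^ 2) * u ^ 3 := by
    simp only [hermiteKernel]; ring
  have b1 : 2 ≤ s ^ 3 - 3 * s ∧ s ^ 3 - 3 * s ≤ 5.8 := ⟨by nlinarith, by nlinarith⟩
  have b2 : 0 ≤ 3 * (s ^ 2 - 1) ∧ 3 * (s ^ 2 - 1) ≤ 13.35 := ⟨by nlinarith, by nlinarith⟩
  have b3 : -7.1 ≤ -3 * s * (s ^ 2 - 5) ∧ -3 * s * (s ^ 2 - 5) ≤ 7.1 :=
    ⟨by nlinarith, by nlinarith⟩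
  have b4 : -7.35 ≤ 3 * (3 - s ^ 2) ∧ 3 * (3 - s ^ 2) ≤ 0 := ⟨by nlinarith, by nlinarith⟩
  have p3 := pow_pos hu0 3
  have p4 := pow_pos hu0 4
  have p5 := pow_pos hu0 5
  have p6 := pow_pos hu0 6
  rw [e, abs_le]
  constructor
  · nlinarith [mul_le_mul_of_nonneg_right b1.1 p6.le, mul_le_mul_of_nonneg_right b3.1 p4.le,
      mul_le_mul_of_nonneg_right b4.1 p3.le, mul_nonneg p5.le b2.1,
      mul_le_mul_of_nonneg_right (by nlinarith : (7.1 : ℝ) ≤ u ^ 2) p4.le,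
      mul_le_mul_of_nonneg_right (by nlinarith : (7.35 : ℝ) ≤ u ^ 3) p3.le]
  · nlinarith [mul_le_mul_of_nonneg_right b1.2 p6.le, mul_le_mul_of_nonneg_right b2.2 p5.le,
      mul_le_mul_of_nonneg_right b3.2 p4.le, mul_le_mul_of_nonneg_right b4.2 p3.le,
      mul_le_mul_of_nonneg_right (by nlinarith : (13.35 : ℝ) ≤ 0.1 * u) p5.le,
      mul_le_mul_of_nonneg_right (by nlinarith : (7.1 : ℝ) ≤ 0.1 * u ^ 2) p4.le]

theorem testPoly_sq_le : testPoly s u (u ^ 2) ≤ 36 * u ^ 14 := by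
  have hsq : hermiteKernel s u (u ^ 2) ^ 2 ≤ (6 * u ^ 6) ^ 2 :=
    sq_le_sq' (abs_le.mp (abs_hermiteKernel_sq_le hs hs' hu)).1
      (abs_le.mp (abs_hermiteKernel_sq_le hs hs' hu)).2
  calc testPoly s u (u ^ 2) ≤ u ^ 2 * (6 * u ^ 6) ^ 2 :=
        mul_le_mul (by nlinarith) hsq (sq_nonneg _) (sq_nonneg u)
    _ = 36 * u ^ 14 := by ring

end

theorem mul_card_le_sqrt_pow_seven {s : ℝ} (hs : 2 ≤ s) (hs' : s ^ 2 < 3 + √6) {n : ℕ}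
    (hn : 100000 ≤ (3 + √6 - s ^ 2) * n) (C : Finset (Fin n → ZMod 2))
    (hC : ∀ x ∈ C, ∀ y ∈ C, x ≠ y → (n : ℝ) - 2 * hammingDist x y ≤ s * √n) :
    (3 + √6 - s ^ 2) * #C ≤ √n ^ 7 := by
  rcases C.eq_empty_or_nonempty with rfl | hne
  · simp
  set u := √(n : ℝ)
  have hu2 : u ^ 2 = n := Real.sq_sqrt (Nat.cast_nonneg n)
  have h6 : √6 ≤ 2.45 := Real.sqrt_le_iff.mpr ⟨by norm_num, by norm_num⟩
  have hs'' : s ^ 2 ≤ 5.45 := by linarith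
  have hu : 262 ≤ u := by
    have hδ : 3 + √6 - s ^ 2 ≤ 1.45 := by nlinarith
    have hn68965 : (68965 : ℝ) ≤ u ^ 2 := by
      nlinarith [mul_le_mul_of_nonneg_right hδ (Nat.cast_nonneg n : (0 : ℝ) ≤ n)]
    nlinarith [Real.sqrt_nonneg (n : ℝ)]
  have hbound := delsarte_bound C hne 7 (testCoeff s u) (testCoeff_nonneg hs hs'' hu)
    (testPoly s u) (by rw [Fintype.card_fin, ← hu2]; exact testPoly_eq_sum_krawtchouk s u)
    (fun x hx y hy hxy => testPoly_nonpos (by rw [Fintype.card_fin]; exact hC x hx y hy hxy))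
  rw [Fintype.card_fin, ← hu2] at hbound
  have hc0 := mul_le_mul_of_nonneg_right (testCoeff_zero_ge hs hs'' hu (hu2 ▸ hn))
    (Nat.cast_nonneg #C)
  nlinarith [testPoly_sq_le hs hs'' hu, pow_pos (by linarith : (0 : ℝ) < u) 7]

theorem exists_le_sq_lt_three_add_sqrt_six {t : ℝ} (ht : t < √(3 + √6) / 2) :
    ∃ s, 2 * t ≤ s ∧ 2 ≤ s ∧ s ^ 2 < 3 + √6 := by
  have h2 : 2 < √(3 + √6) :=
    Real.lt_sqrt_of_sq_lt (by nlinarith [Real.le_sqrt_of_sq_le (by norm_num : (2 : ℝ) ^ 2 ≤ 6)])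
  refine ⟨max (2 * t) 2, le_max_left _ _, le_max_right _ _, ?_⟩
  exact (Real.lt_sqrt (by positivity)).mp (max_lt (by linarith) h2)

theorem upper_bound_t_sqrt_n_general (t : ℝ) (ht : t < Real.sqrt (3 + Real.sqrt 6) / 2) :
    ∃ K : ℝ, 0 < K ∧ ∃ N : ℕ, ∀ n : ℕ, N ≤ n →
      ∀ d : ℕ, ∀ C : Finset (Fin n → ZMod 2),
        (∀ x ∈ C, ∀ y ∈ C, x ≠ y → d ≤ hammingDist x y) →
        ((n : ℝ) / 2 - t * Real.sqrt n ≤ d) →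
        (C.card : ℝ) ≤ K * (n : ℝ) ^ ((7 : ℝ) / 2) := by
  obtain ⟨s, h2t, hs, hs'⟩ := exists_le_sq_lt_three_add_sqrt_six ht
  have hδ : 0 < 3 + √6 - s ^ 2 := by linarith
  refine ⟨1 / (3 + √6 - s ^ 2), by positivity, ⌈100000 / (3 + √6 - s ^ 2)⌉₊,
    fun n hn d C hC hd => ?_⟩
  have hn' : 100000 ≤ (3 + √6 - s ^ 2) * n := by
    rw [mul_comm, ← div_le_iff₀ hδ]; exact Nat.ceil_le.mp hn
  have hcard := mul_card_le_sqrt_pow_seven hs hs' hn' C fun x hx y hy hxy => by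
    have hdist : (d : ℝ) ≤ hammingDist x y := by exact_mod_cast hC x hx y hy hxy
    nlinarith [mul_le_mul_of_nonneg_right h2t (Real.sqrt_nonneg (n : ℝ))]
  rw [Real.rpow_div_two_eq_sqrt _ (Nat.cast_nonneg n), Real.rpow_ofNat, div_mul_eq_mul_div,
    one_mul, le_div_iff₀ hδ, mul_comm]
  exact hcard

/-- For any fixed `0 < t < √(3+√6)/2`, codes with minimum distance `d ≥ n/2 - t√n`
have size `O(n^{7/2})`. -/
theorem upper_bound_t_sqrt_n (t : ℝ) (ht0 : 0 < t) (ht : t < Real.sqrt (3 + Real.sqrt 6) / 2) :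
    ∃ K : ℝ, 0 < K ∧ ∃ N : ℕ, ∀ n : ℕ, N ≤ n →
      ∀ d : ℕ, ∀ C : Finset (Fin n → ZMod 2),
        (∀ x ∈ C, ∀ y ∈ C, x ≠ y → d ≤ hammingDist x y) →
        ((n : ℝ) / 2 - t * Real.sqrt n ≤ d) →
        (C.card : ℝ) ≤ K * (n : ℝ) ^ ((7 : ℝ) / 2) :=
  upper_bound_t_sqrt_n_general t ht
end

section
/- For every ε > 0 there exists N such that for all n ≥ N there exists a nonzero function f : F_2^n → ℝ supported in the Hamming ball B_4(0,n) of radius 4 with ⟨Af, f⟩ ≥ (√(5 + √10) − ε) · √n · ⟨f, f⟩; in particular λ_{B_4(0,n)} ≥ (√(5 + √10) − ε) √n, where √(5 + √10) ≈ 2.857. -/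
open Finset

/-!
Test against radial functions `f x = g (hammingNorm x)`. Normalising `g_k = c_k / √((n)_k)` by the
falling factorial turns `⟨f, f⟩` into `∑ c_k² / k!` and `⟨Af, f⟩` into `2 ∑ √(n - k) c_k c_{k+1} / k!`,
so for nonnegative `c` supported on `k ≤ m` the Rayleigh quotient is at least `√(n - m)` times that of the
Jacobi form `2 ∑ c_k c_{k+1} / k!`. The recurrence `He_{k+1} = x He_k - k He_{k-1}` of the Hermite
polynomials makes `c_k = He_k(x)` an eigenvector of this form, with eigenvalue `x`, whenever
`He_{m+1}(x) = 0`. For `m = 4` take `x = √(5 + √10)`, the largest root of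
`He_5 = X (X⁴ - 10 X² + 15)`; finally `√(n - 4) ≥ √n - 4 / √n`.
-/

open Polynomial
open scoped Nat

theorem ZMod.eq_one_of_ne_zero_two {a : ZMod 2} (h : a ≠ 0) : a = 1 := by
  revert a; decide

section HammingCube

variable {ι : Type*} [Fintype ι] [DecidableEq ι]

theorem hammingNorm_eq_one_iff {z : ι → ZMod 2} :
    hammingNorm z = 1 ↔ ∃ i, Pi.single i 1 = z := by
  constructor
  · intro hz
    obtain ⟨i, hi⟩ := card_eq_one.mp hz
    refine ⟨i, funext fun j => ?_⟩
    have hj : z j ≠ 0 ↔ j = i := by simpa using congrArg (j ∈ ·) hi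
    by_cases hji : j = i
    · subst hji; simp [ZMod.eq_one_of_ne_zero_two (hj.mpr rfl)]
    · simpa [hji, eq_comm] using (not_congr hj).mpr hji
  · rintro ⟨i, rfl⟩
    simp [hammingNorm, Pi.single_apply, filter_eq']

theorem hammingNorm_add_single (x : ι → ZMod 2) (i : ι) :
    hammingNorm (x + Pi.single i 1) =
      if x i = 0 then hammingNorm x + 1 else hammingNorm x - 1 := by
  unfold hammingNorm
  by_cases h : x i = 0
  · rw [if_pos h, ← card_insert_of_notMem (s := {j | x j ≠ 0}) (a := i) (by simp [h])]
    congr 1; ext j; by_cases hj : j = i <;> simp [hj, h, Pi.single_apply]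
  · rw [if_neg h, ← card_erase_of_mem (s := {j | x j ≠ 0}) (a := i) (by simpa)]
    congr 1; ext j
    by_cases hj : j = i
    · simp [hj, Pi.single_apply, ZMod.eq_one_of_ne_zero_two h]; rfl
    · simp [hj, Pi.single_apply]

theorem sum_comp_hammingNorm {M : Type*} [AddCommMonoid M] (F : ℕ → M) :
    ∑ x : ι → ZMod 2, F (hammingNorm x) =
      ∑ k ∈ range (Fintype.card ι + 1), (Fintype.card ι).choose k • F k := by
  rw [← card_univ, ← sum_powerset_apply_card]
  refine sum_nbij' (fun x => ({i | x i ≠ 0} : Finset ι)) (fun s i => if i ∈ s then 1 else 0)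
    (by simp) (by simp) (fun x _ => funext fun i => ?_) (fun s _ => by ext; simp)
    (fun _ _ => rfl)
  by_cases h : x i = 0 <;> simp [h, ZMod.eq_one_of_ne_zero_two]

end HammingCube

section AdjacencyOperator

variable {n : ℕ}

theorem adjOp_apply (f : (Fin n → ZMod 2) → ℝ) (x : Fin n → ZMod 2) :
    adjOp f x = ∑ i, f (x + Pi.single i 1) := by
  have hsphere : ({z | hammingNorm z = 1} : Finset (Fin n → ZMod 2)) =
      univ.image (Pi.single · 1) := by
    ext z; simp [hammingNorm_eq_one_iff]
  rw [adjOp, ← Equiv.sum_comp (Equiv.addLeft x)]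
  simp only [Equiv.coe_addLeft, hammingDist_eq_hammingNorm, neg_add_cancel_left]
  rw [← sum_filter, hsphere,
    sum_image fun i _ j _ h => by simpa [Pi.single_apply, eq_comm] using congr_fun h j]

theorem innerCube_self_pos {f : (Fin n → ZMod 2) → ℝ} (hf : f ≠ 0) : 0 < innerCube f f := by
  obtain ⟨x, hx⟩ := Function.ne_iff.mp hf
  exact sum_pos' (fun y _ => mul_self_nonneg _) ⟨x, mem_univ x, mul_self_pos.mpr hx⟩

theorem innerCube_adjOp_le (f : (Fin n → ZMod 2) → ℝ) :
    innerCube (adjOp f) f ≤ n * innerCube f f := by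
  have htranslate (i : Fin n) :
      ∑ x : Fin n → ZMod 2, f (x + Pi.single i 1) ^ 2 = ∑ x, f x ^ 2 :=
    Fintype.sum_equiv (Equiv.addRight (Pi.single i 1)) _ _ fun _ => rfl
  calc innerCube (adjOp f) f = ∑ i, ∑ x, f (x + Pi.single i 1) * f x := by
        simp only [innerCube, adjOp_apply, sum_mul]; exact sum_comm
    _ ≤ ∑ i : Fin n, ∑ x, (f (x + Pi.single i 1) ^ 2 + f x ^ 2) / 2 := by
        gcongr with i _ x _; nlinarith [sq_nonneg (f (x + Pi.single i 1) - f x)]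
    _ = n * innerCube f f := by
        simp only [← sum_div, sum_add_distrib]
        rw [sum_congr rfl fun i _ => htranslate i]
        simp only [sum_const, card_univ, Fintype.card_fin, nsmul_eq_mul, innerCube, sq]
        ring

theorem le_maxEig {B : Finset (Fin n → ZMod 2)} {f : (Fin n → ZMod 2) → ℝ} (hf : f ≠ 0)
    (hfB : ∀ x, f x ≠ 0 → x ∈ B) : innerCube (adjOp f) f / innerCube f f ≤ maxEig B := by
  refine le_csSup ⟨n, ?_⟩ ⟨f, hf, hfB, rfl⟩
  rintro _ ⟨h, hh, -, rfl⟩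
  exact (div_le_iff₀ (innerCube_self_pos hh)).mpr (innerCube_adjOp_le h)

def radial (g : ℕ → ℝ) (x : Fin n → ZMod 2) : ℝ := g (hammingNorm x)

theorem adjOp_radial (g : ℕ → ℝ) (x : Fin n → ZMod 2) :
    adjOp (radial g) x =
      (n - hammingNorm x) * g (hammingNorm x + 1) + hammingNorm x * g (hammingNorm x - 1) := by
  have hzeros : (#{i | x i = 0} : ℝ) = n - hammingNorm x := by
    have h := card_filter_add_card_filter_not (s := univ) (p := fun i => x i = 0)
    rw [card_univ, Fintype.card_fin] at h
    rw [eq_sub_iff_add_eq]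
    exact_mod_cast h
  simp only [adjOp_apply, radial, hammingNorm_add_single, apply_ite g, sum_ite, sum_const,
    nsmul_eq_mul, hzeros]
  rfl

theorem innerCube_radial_self (g : ℕ → ℝ) :
    innerCube (radial g) (radial (n := n) g) =
      ∑ k ∈ range (n + 1), (n.choose k : ℝ) * g k ^ 2 := by
  simpa [innerCube, radial, ← sq, nsmul_eq_mul] using sum_comp_hammingNorm (ι := Fin n) (g · ^ 2)

theorem innerCube_adjOp_radial (g : ℕ → ℝ) :
    innerCube (adjOp (radial g)) (radial (n := n) g) =
      2 * ∑ k ∈ range n, (n.choose k : ℝ) * (n - k) * (g k * g (k + 1)) := by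
  have h := sum_comp_hammingNorm (ι := Fin n)
    fun k => ((n - k) * g (k + 1) + k * g (k - 1)) * g k
  simp only [Fintype.card_fin, nsmul_eq_mul] at h
  rw [innerCube]
  simp only [adjOp_radial, radial]
  rw [h]
  simp only [add_mul, mul_add, sum_add_distrib]
  rw [sum_range_succ, sum_range_succ']
  simp only [sub_self, zero_mul, mul_zero, add_zero, Nat.cast_zero, Nat.add_sub_cancel]
  rw [two_mul]
  congr 1
  · exact sum_congr rfl fun k _ => by ring
  · refine sum_congr rfl fun k hk => ?_
    have hchoose : (n.choose (k + 1) : ℝ) * (k + 1) = n.choose k * (n - k) := by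
      rw [← Nat.cast_sub (mem_range.mp hk).le]
      exact_mod_cast Nat.choose_succ_right_eq n k
    push_cast
    linear_combination (g k * g (k + 1)) * hchoose

end AdjacencyOperator

theorem choose_mul_div_sqrt_descFactorial_sq {n k : ℕ} (hk : k ≤ n) (c : ℝ) :
    (n.choose k : ℝ) * (c / √(n.descFactorial k)) ^ 2 = c ^ 2 / k ! := by
  have hpos : 0 < (n.choose k : ℝ) := by exact_mod_cast Nat.choose_pos hk
  rw [div_pow, Real.sq_sqrt (Nat.cast_nonneg _), Nat.descFactorial_eq_factorial_mul_choose]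
  push_cast
  field_simp

theorem choose_mul_sub_mul_div_sqrt_descFactorial {n k : ℕ} (hk : k < n) (c d : ℝ) :
    (n.choose k : ℝ) * (n - k) * (c / √(n.descFactorial k) * (d / √(n.descFactorial (k + 1)))) =
      √(n - k) * (c * d / k !) := by
  have hpos : 0 < (n.choose k : ℝ) := by exact_mod_cast Nat.choose_pos hk.le
  have hsub : (0 : ℝ) < n - k := by rw [sub_pos]; exact_mod_cast hk
  have : 0 < √((n : ℝ) - k) := Real.sqrt_pos.mpr hsub
  rw [Nat.descFactorial_succ, Nat.cast_mul, Real.sqrt_mul (Nat.cast_nonneg _), Nat.cast_sub hk.le,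
    Nat.descFactorial_eq_factorial_mul_choose]
  push_cast
  have : 0 < √((k ! : ℝ) * n.choose k) := Real.sqrt_pos.mpr (by positivity)
  field_simp
  rw [Real.sq_sqrt (by positivity), Real.sq_sqrt hsub.le]
  ring

namespace Polynomial

theorem derivative_hermite_succ (k : ℕ) :
    derivative (hermite (k + 1)) = (k + 1 : ℤ[X]) * hermite k := by
  induction k with
  | zero => simp
  | succ k ih =>
    rw [hermite_succ (k + 1), derivative_sub, derivative_mul, derivative_X, ih, derivative_mul,
      hermite_succ]
    simp only [derivative_add, derivative_natCast, derivative_one]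
    push_cast
    ring

theorem hermite_succ_succ (k : ℕ) :
    hermite (k + 2) = X * hermite (k + 1) - (k + 1 : ℤ[X]) * hermite k := by
  rw [hermite_succ (k + 1), derivative_hermite_succ]

theorem aeval_hermite_succ_succ {A : Type*} [CommRing A] (x : A) (k : ℕ) :
    aeval x (hermite (k + 2)) = x * aeval x (hermite (k + 1)) - (k + 1) * aeval x (hermite k) := by
  rw [hermite_succ_succ]; simp

theorem mul_sum_aeval_hermite_sq_div_factorial (x : ℝ) (m : ℕ) :
    x * ∑ k ∈ range (m + 1), aeval x (hermite k) ^ 2 / k ! =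
      2 * ∑ k ∈ range m, aeval x (hermite k) * aeval x (hermite (k + 1)) / k ! +
        aeval x (hermite m) * aeval x (hermite (m + 1)) / m ! := by
  induction m with
  | zero => simp
  | succ m ih =>
    rw [sum_range_succ, mul_add, ih, sum_range_succ, aeval_hermite_succ_succ, Nat.factorial_succ]
    push_cast
    field_simp
    ring

end Polynomial

section HermiteTrial

variable (n m : ℕ) (x : ℝ)

noncomputable def hermiteTrial : (Fin n → ZMod 2) → ℝ :=
  radial fun k => if k ≤ m then aeval x (hermite k) / √(n.descFactorial k) else 0

theorem hermiteTrial_ne_zero : hermiteTrial n m x ≠ 0 :=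
  Function.ne_iff.mpr ⟨0, by simp [hermiteTrial, radial]⟩

theorem hammingNorm_le_of_hermiteTrial_ne_zero {y : Fin n → ZMod 2}
    (hy : hermiteTrial n m x y ≠ 0) : hammingNorm y ≤ m := by
  by_contra h
  simp [hermiteTrial, radial, h] at hy

variable {n m}

theorem innerCube_hermiteTrial_self (hmn : m ≤ n) :
    innerCube (hermiteTrial n m x) (hermiteTrial n m x) =
      ∑ k ∈ range (m + 1), aeval x (hermite k) ^ 2 / k ! := by
  rw [hermiteTrial, innerCube_radial_self,
    ← sum_subset (range_subset_range.mpr (Nat.succ_le_succ hmn))]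
  · refine sum_congr rfl fun k hk => ?_
    rw [mem_range] at hk
    rw [if_pos (by omega), choose_mul_div_sqrt_descFactorial_sq (by omega)]
  · intro k _ hk
    rw [mem_range] at hk
    rw [if_neg (by omega), zero_pow two_ne_zero, mul_zero]

theorem innerCube_adjOp_hermiteTrial (hmn : m ≤ n) :
    innerCube (adjOp (hermiteTrial n m x)) (hermiteTrial n m x) =
      2 * ∑ k ∈ range m, √(n - k) * (aeval x (hermite k) * aeval x (hermite (k + 1)) / k !) := by
  rw [hermiteTrial, innerCube_adjOp_radial, ← sum_subset (range_subset_range.mpr hmn)]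
  · congr 1
    refine sum_congr rfl fun k hk => ?_
    rw [mem_range] at hk
    rw [if_pos (by omega), if_pos (by omega), choose_mul_sub_mul_div_sqrt_descFactorial (by omega)]
  · intro k _ hk
    rw [mem_range] at hk
    rw [if_neg (show ¬k + 1 ≤ m by omega), mul_zero, mul_zero]

theorem mul_sqrt_mul_innerCube_le_innerCube_adjOp_hermiteTrial (hmn : m ≤ n)
    (hroot : aeval x (hermite (m + 1)) = 0) (hnonneg : ∀ k ≤ m, 0 ≤ aeval x (hermite k)) :
    x * √(n - m) * innerCube (hermiteTrial n m x) (hermiteTrial n m x) ≤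
      innerCube (adjOp (hermiteTrial n m x)) (hermiteTrial n m x) := by
  rw [innerCube_hermiteTrial_self x hmn, innerCube_adjOp_hermiteTrial x hmn, mul_comm x,
    mul_assoc, mul_sum_aeval_hermite_sq_div_factorial, hroot, mul_zero, zero_div, add_zero,
    mul_left_comm, mul_sum]
  gcongr with k hk
  · rw [mem_range] at hk
    exact div_nonneg (mul_nonneg (hnonneg k (by omega)) (hnonneg (k + 1) (by omega)))
      (by positivity)
  · rw [mem_range] at hk
    exact_mod_cast hk.le

end HermiteTrial

theorem aeval_hermite_five_sqrt_five_add_sqrt_ten : aeval √(5 + √10) (hermite 5) = 0 := by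
  have h10 := Real.sq_sqrt (show (0 : ℝ) ≤ 10 by norm_num)
  have hx := Real.sq_sqrt (show (0 : ℝ) ≤ 5 + √10 by positivity)
  simp only [aeval_hermite_succ_succ, hermite_one, hermite_zero, aeval_X, map_one]
  norm_num
  linear_combination (√(5 + √10) ^ 3 + (√10 - 5) * √(5 + √10)) * hx + √(5 + √10) * h10

theorem aeval_hermite_sqrt_five_add_sqrt_ten_nonneg {k : ℕ} (hk : k ≤ 4) :
    0 ≤ aeval √(5 + √10) (hermite k) := by
  have h10 := Real.sq_sqrt (show (0 : ℝ) ≤ 10 by norm_num)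
  have hx := Real.sq_sqrt (show (0 : ℝ) ≤ 5 + √10 by positivity)
  have : 0 ≤ √10 := Real.sqrt_nonneg _
  have : 0 ≤ √(5 + √10) := Real.sqrt_nonneg _
  interval_cases k <;>
    simp only [aeval_hermite_succ_succ, hermite_one, hermite_zero, aeval_X, map_one] <;>
    norm_num <;> nlinarith

theorem sub_mul_sqrt_le_mul_sqrt_sub {x ε : ℝ} {m n : ℕ} (hx : 0 ≤ x) (hmn : m ≤ n)
    (h : x * m ≤ ε * n) : (x - ε) * √n ≤ x * √(n - m) := by
  have hnm : (0 : ℝ) ≤ n - m := by rw [sub_nonneg]; exact_mod_cast hmn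
  have hsqrt : √(n - m : ℝ) ≤ √n := Real.sqrt_le_sqrt (by simp)
  rcases (Real.sqrt_nonneg n).eq_or_lt with hn | hn
  · rw [← hn]; simpa using mul_nonneg hx (Real.sqrt_nonneg _)
  refine le_of_mul_le_mul_left ?_ hn
  calc √n * ((x - ε) * √n) = x * n - ε * n := by
        rw [mul_left_comm, Real.mul_self_sqrt (Nat.cast_nonneg n)]; ring
    _ ≤ x * (√(n - m) * √(n - m)) := by rw [Real.mul_self_sqrt hnm]; linarith
    _ ≤ √n * (x * √(n - m)) := by
        nlinarith [mul_le_mul_of_nonneg_left hsqrt (mul_nonneg hx (Real.sqrt_nonneg (n - m : ℝ)))]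

theorem eig_ball_four :
    ∀ ε : ℝ, 0 < ε → ∃ N : ℕ, ∀ n : ℕ, N ≤ n →
      (∃ f : (Fin n → ZMod 2) → ℝ, f ≠ 0 ∧ (∀ x, f x ≠ 0 → hammingNorm x ≤ 4) ∧
        innerCube (adjOp f) f ≥ (Real.sqrt (5 + Real.sqrt 10) - ε) * Real.sqrt n * innerCube f f) ∧
      maxEig (hammingBall n 4) ≥ (Real.sqrt (5 + Real.sqrt 10) - ε) * Real.sqrt n := by
  intro ε hε
  set x := √(5 + √10)
  refine ⟨max 4 ⌈x * 4 / ε⌉₊, fun n hn => ?_⟩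
  have h4n : 4 ≤ n := le_of_max_le_left hn
  have hxn : x * 4 ≤ ε * n := by
    rw [← div_le_iff₀' hε]
    exact (Nat.le_ceil _).trans (by exact_mod_cast le_of_max_le_right hn)
  set f := hermiteTrial n 4 x
  have hf0 : f ≠ 0 := hermiteTrial_ne_zero n 4 x
  have hf : (x - ε) * √n * innerCube f f ≤ innerCube (adjOp f) f :=
    (mul_le_mul_of_nonneg_right
      (sub_mul_sqrt_le_mul_sqrt_sub (Real.sqrt_nonneg _) h4n (by exact_mod_cast hxn))
      (innerCube_self_pos hf0).le).trans
    (mul_sqrt_mul_innerCube_le_innerCube_adjOp_hermiteTrial x h4n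
      aeval_hermite_five_sqrt_five_add_sqrt_ten fun _ => aeval_hermite_sqrt_five_add_sqrt_ten_nonneg)
  refine ⟨⟨f, hf0, fun y => hammingNorm_le_of_hermiteTrial_ne_zero n 4 x, hf⟩, ?_⟩
  refine ((le_div_iff₀ (innerCube_self_pos hf0)).mpr hf).trans (le_maxEig hf0 fun y hy => ?_)
  simpa [hammingBall] using hammingNorm_le_of_hermiteTrial_ne_zero n 4 x hy
end
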